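/- arXiv:1810.05113 — 14 statements merged into one kernel-verified Lean document; each statement's English description precedes it below -/
import Mathlib

section
/- Let X be a nonempty, locally compact Hausdorff topological space and let E be an equivalence relation on X which is meagre as a subset of X × X (with the product topology). Then E has at least 2^ℵ₀ classes; that is, the cardinality of the quotient X/E is at least the continuum (equivalently, there is an injection from the Cantor space 2^ℕ into X/E). -/
open Set

section Mycielski

variable {X : Type*} [TopologicalSpace X] [T2Space X] [LocallyCompactSpace X]

set_option linter.unusedSectionVars false in
/-- Shrinking lemma: given finitely many nonempty open sets and a closed set `C` in `X × X`
with dense complement, we can shrink the open sets to compact sets with nonempty interior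
whose pairwise products avoid `C`. -/
theorem mycielski_shrink {ι : Type*} [Fintype ι] [DecidableEq ι]
    (V : ι → Set X) (hVo : ∀ i, IsOpen (V i)) (hVne : ∀ i, (V i).Nonempty)
    {C : Set (X × X)} (hC : IsOpen Cᶜ) (hCd : Dense Cᶜ) :
    ∃ K : ι → Set X, (∀ i, IsCompact (K i)) ∧ (∀ i, (interior (K i)).Nonempty) ∧
      (∀ i, K i ⊆ V i) ∧ ∀ i j, i ≠ j → ∀ x ∈ K i, ∀ y ∈ K j, (x, y) ∉ C := by
  -- first shrink to open sets
  suffices h : ∃ W : ι → Set X, (∀ i, IsOpen (W i)) ∧ (∀ i, (W i).Nonempty) ∧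
      (∀ i, W i ⊆ V i) ∧ ∀ i j, i ≠ j → ∀ x ∈ W i, ∀ y ∈ W j, (x, y) ∉ C by
    obtain ⟨W, hWo, hWne, hWV, hWsep⟩ := h
    choose x hx using hWne
    choose K hKc hKx hKW using fun i => exists_compact_subset (hWo i) (hx i)
    exact ⟨K, hKc, fun i => ⟨x i, hKx i⟩, fun i => (hKW i).trans (hWV i),
      fun i j hij a ha b hb => hWsep i j hij a (hKW i ha) b (hKW j hb)⟩
  -- induction over the finite set of pairs
  suffices h : ∀ P : Finset (ι × ι), ∃ W : ι → Set X, (∀ i, IsOpen (W i)) ∧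
      (∀ i, (W i).Nonempty) ∧ (∀ i, W i ⊆ V i) ∧
      ∀ q ∈ P, q.1 ≠ q.2 → ∀ x ∈ W q.1, ∀ y ∈ W q.2, (x, y) ∉ C by
    obtain ⟨W, h1, h2, h3, h4⟩ := h Finset.univ
    exact ⟨W, h1, h2, h3, fun i j hij => h4 (i, j) (Finset.mem_univ _) hij⟩
  intro P
  induction P using Finset.induction with
  | empty => exact ⟨V, hVo, hVne, fun i => subset_rfl, fun q hq => absurd hq (by simp)⟩
  | @insert p P hnew ih =>
    obtain ⟨W, hWo, hWne, hWV, hWsep⟩ := ih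
    rcases eq_or_ne p.1 p.2 with heq | hne
    · exact ⟨W, hWo, hWne, hWV, fun q hq hq12 => by
        rcases Finset.mem_insert.mp hq with rfl | hq
        · exact absurd heq hq12
        · exact hWsep q hq hq12⟩
    · -- use density of Cᶜ to separate the pair p
      obtain ⟨⟨a, b⟩, habC, hab⟩ :=
        hCd.exists_mem_open ((hWo p.1).prod (hWo p.2)) ((hWne p.1).prod (hWne p.2))
      obtain ⟨A, B, hA, hB, haA, hbB, hABC⟩ := isOpen_prod_iff.mp hC a b habC
      set W' : ι → Set X :=
        Function.update (Function.update W p.1 (W p.1 ∩ A)) p.2 (W p.2 ∩ B) with hW'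
      have hW'1 : W' p.1 = W p.1 ∩ A := by
        rw [hW', Function.update_of_ne hne, Function.update_self]
      have hW'2 : W' p.2 = W p.2 ∩ B := by
        rw [hW', Function.update_self]
      have hcases : ∀ i, W' i = W i ∨ (W' i = W i ∩ A ∧ i = p.1) ∨
          (W' i = W i ∩ B ∧ i = p.2) := by
        intro i
        rcases eq_or_ne i p.2 with rfl | hi2
        · exact Or.inr (Or.inr ⟨hW'2, rfl⟩)
        · rcases eq_or_ne i p.1 with rfl | hi1
          · exact Or.inr (Or.inl ⟨hW'1, rfl⟩)
          · exact Or.inl (by rw [hW', Function.update_of_ne hi2, Function.update_of_ne hi1])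
      have hsub : ∀ i, W' i ⊆ W i := by
        intro i
        rcases hcases i with h | ⟨h, _⟩ | ⟨h, _⟩ <;> rw [h] <;>
          first | exact fun _ h => h | exact inter_subset_left
      refine ⟨W', ?_, ?_, fun i => (hsub i).trans (hWV i), ?_⟩
      · intro i
        rcases hcases i with h | ⟨h, _⟩ | ⟨h, _⟩ <;> rw [h]
        exacts [hWo i, (hWo i).inter hA, (hWo i).inter hB]
      · intro i
        rcases hcases i with h | ⟨h, rfl⟩ | ⟨h, rfl⟩ <;> rw [h]
        exacts [hWne i, ⟨a, hab.1, haA⟩, ⟨b, hab.2, hbB⟩]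
      · intro q hq hq12 x hx y hy
        rcases Finset.mem_insert.mp hq with rfl | hq
        · have hx' : x ∈ A := by rw [hW'1] at hx; exact hx.2
          have hy' : y ∈ B := by rw [hW'2] at hy; exact hy.2
          exact fun hmem => hABC (mk_mem_prod hx' hy') hmem
        · exact hWsep q hq hq12 x (hsub _ hx) y (hsub _ hy)

end Mycielski

/-- **Mycielski's theorem for locally compact spaces.** If `E` is an equivalence relation on a
nonempty locally compact Hausdorff space `X` which is meagre as a subset of `X × X`, then `E` has
at least continuum many classes. -/
theorem stmt_0 {X : Type*} [TopologicalSpace X] [T2Space X] [LocallyCompactSpace X]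
    [Nonempty X] (E : X → X → Prop) (hE : Equivalence E)
    (hmeagre : IsMeagre {p : X × X | E p.1 p.2}) :
    Cardinal.continuum ≤ Cardinal.mk (Quot E) := by
  classical
  -- extract a sequence of nowhere dense sets covering E
  obtain ⟨S, hSnwd, hScnt, hSsub⟩ := isMeagre_iff_countable_union_isNowhereDense.mp hmeagre
  have hSne : (insert (∅ : Set (X × X)) S).Nonempty := ⟨∅, mem_insert _ _⟩
  obtain ⟨F, hF⟩ := (hScnt.insert ∅).exists_eq_range hSne
  have hFnwd : ∀ n, IsNowhereDense (F n) := by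
    intro n
    have : F n ∈ insert (∅ : Set (X × X)) S := hF ▸ mem_range_self n
    rcases this with h | h
    · rw [h]; exact isNowhereDense_empty
    · exact hSnwd _ h
  have hFcover : {p : X × X | E p.1 p.2} ⊆ ⋃ n, F n := by
    refine hSsub.trans ?_
    intro p hp
    obtain ⟨s, hs, hps⟩ := hp
    have : s ∈ range F := hF ▸ mem_insert_of_mem _ hs
    obtain ⟨n, rfl⟩ := this
    exact mem_iUnion.mpr ⟨n, hps⟩
  -- the closed nowhere dense sets G n
  set G : ℕ → Set (X × X) := fun n => ⋃ m ∈ Finset.range (n + 1), closure (F m) with hG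
  have hGclosed : ∀ n, IsClosed (G n) := fun n =>
    isClosed_biUnion_finset fun m _ => isClosed_closure
  have hdense1 : ∀ m : ℕ, Dense (closure (F m))ᶜ := by
    intro m
    have hnwd := (hFnwd m).closure
    rwa [(isClosed_closure).isNowhereDense_iff, interior_eq_empty_iff_dense_compl] at hnwd
  have hGcompl_dense : ∀ n, Dense (G n)ᶜ := by
    intro n
    rw [hG]
    simp only [compl_iUnion]
    have : ∀ s : Finset ℕ, Dense (⋂ m ∈ s, (closure (F m))ᶜ) := by
      intro s
      induction s using Finset.induction with
      | empty => simp
      | @insert a s ha ih =>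
        rw [Finset.set_biInter_insert]
        exact Dense.inter_of_isOpen_left (hdense1 a) ih isClosed_closure.isOpen_compl
    exact this _
  have hGcompl_open : ∀ n, IsOpen (G n)ᶜ := fun n => (hGclosed n).isOpen_compl
  have hFG : ∀ m n, m ≤ n → F m ⊆ G n := by
    intro m n hmn p hp
    exact mem_biUnion (Finset.mem_range.mpr (Nat.lt_succ_of_le hmn)) (subset_closure hp)
  -- the inductive step of the Cantor scheme
  have step : ∀ n (K : (Fin n → Bool) → Set X),
      (∀ s, IsCompact (K s)) → (∀ s, (interior (K s)).Nonempty) →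
      ∃ K' : (Fin (n + 1) → Bool) → Set X, (∀ s, IsCompact (K' s)) ∧
        (∀ s, (interior (K' s)).Nonempty) ∧ (∀ s, K' s ⊆ K (Fin.init s)) ∧
        (∀ s t, s ≠ t → ∀ x ∈ K' s, ∀ y ∈ K' t, (x, y) ∉ G (n + 1)) := by
    intro n K hKc hKne
    obtain ⟨K', h1, h2, h3, h4⟩ := mycielski_shrink
      (fun s : Fin (n + 1) → Bool => interior (K (Fin.init s)))
      (fun s => isOpen_interior) (fun s => hKne _)
      (hGcompl_open (n + 1)) (hGcompl_dense (n + 1))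
    exact ⟨K', h1, h2, fun s => (h3 s).trans interior_subset, h4⟩
  -- level 0
  obtain ⟨x0⟩ := ‹Nonempty X›
  obtain ⟨K0, hK0c, hK0x, -⟩ := exists_compact_subset isOpen_univ (mem_univ x0)
  -- build the scheme by recursion
  let L : (n : ℕ) → {K : (Fin n → Bool) → Set X //
      (∀ s, IsCompact (K s)) ∧ (∀ s, (interior (K s)).Nonempty)} := fun n =>
    Nat.rec ⟨fun _ => K0, fun _ => hK0c, fun _ => ⟨x0, hK0x⟩⟩
      (fun n l => ⟨(step n l.1 l.2.1 l.2.2).choose,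
        (step n l.1 l.2.1 l.2.2).choose_spec.1, (step n l.1 l.2.1 l.2.2).choose_spec.2.1⟩) n
  have hLnest : ∀ n (s : Fin (n + 1) → Bool), (L (n + 1)).1 s ⊆ (L n).1 (Fin.init s) :=
    fun n s => (step n (L n).1 (L n).2.1 (L n).2.2).choose_spec.2.2.1 s
  have hLsep : ∀ n (s t : Fin (n + 1) → Bool), s ≠ t →
      ∀ x ∈ (L (n + 1)).1 s, ∀ y ∈ (L (n + 1)).1 t, (x, y) ∉ G (n + 1) :=
    fun n => (step n (L n).1 (L n).2.1 (L n).2.2).choose_spec.2.2.2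
  -- the branches
  set C : (ℕ → Bool) → ℕ → Set X := fun x n => (L n).1 fun i : Fin n => x i with hC
  have hCnest : ∀ x n, C x (n + 1) ⊆ C x n := by
    intro x n
    have := hLnest n (fun i : Fin (n + 1) => x i)
    have heq : (Fin.init fun i : Fin (n + 1) => x ↑i) = fun i : Fin n => x i := by
      funext i; simp [Fin.init, Fin.castSucc]
    rwa [heq] at this
  have hCne : ∀ x n, (C x n).Nonempty := fun x n =>
    ((L n).2.2 _).mono interior_subset
  have hCcpt : ∀ x n, IsCompact (C x n) := fun x n => (L n).2.1 _
  have hCint : ∀ x, (⋂ n, C x n).Nonempty := fun x =>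
    IsCompact.nonempty_iInter_of_sequence_nonempty_isCompact_isClosed (C x)
      (hCnest x) (hCne x) (hCcpt x 0) (fun n => (hCcpt x n).isClosed)
  choose f hf using hCint
  -- f x and f y are in different classes for x ≠ y
  have hkey : ∀ x y : ℕ → Bool, x ≠ y → ¬ E (f x) (f y) := by
    intro x y hxy hExy
    have hmemE : (f x, f y) ∈ {p : X × X | E p.1 p.2} := hExy
    obtain ⟨m, hm⟩ := mem_iUnion.mp (hFcover hmemE)
    obtain ⟨k, hk⟩ := Function.ne_iff.mp hxy
    set n' := max m k with hn'
    have hst : (fun i : Fin (n' + 1) => x i) ≠ fun i : Fin (n' + 1) => y i := by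
      intro h
      have hk' : k < n' + 1 := Nat.lt_succ_of_le (le_max_right m k)
      have := congrFun h ⟨k, hk'⟩
      exact hk this
    have hfx : f x ∈ C x (n' + 1) := mem_iInter.mp (hf x) _
    have hfy : f y ∈ C y (n' + 1) := mem_iInter.mp (hf y) _
    have hmem : (f x, f y) ∈ G (n' + 1) :=
      hFG m (n' + 1) (Nat.le_succ_of_le (le_max_left m k)) hm
    exact hLsep n' _ _ hst (f x) hfx (f y) hfy hmem
  -- conclude
  have hinj : Function.Injective (fun x : ℕ → Bool => Quot.mk E (f x)) := by
    intro x y hxy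
    by_contra hne
    have : Relation.EqvGen E (f x) (f y) := Quot.eq.mp hxy
    exact hkey x y hne ((hE.eqvGen_iff).mp this)
  have hle := Cardinal.lift_mk_le'.mpr ⟨⟨_, hinj⟩⟩
  have hmk : Cardinal.mk (ℕ → Bool) = Cardinal.continuum := by
    rw [Cardinal.mk_arrow, Cardinal.mk_bool, Cardinal.mk_nat, Cardinal.lift_id,
      Cardinal.lift_id, ← Cardinal.two_power_aleph0]
  rw [hmk, Cardinal.lift_continuum] at hle
  simpa using hle
end

section
/- Let G be a compact Polish (compact, metrizable, second countable Hausdorff) topological group and H ≤ G a subgroup. Then exactly one of the following holds: (1) H is open and has finite index in G; (2) H is closed but not open and the coset space G/H has cardinality exactly 2^ℵ₀; (3) H has the Baire property, H is not closed, G/H has cardinality exactly 2^ℵ₀, and the left coset equivalence relation E_H on G (x E_H y iff x⁻¹·y ∈ H) is not smooth; (4) H does not have the Baire property, and E_H is not smooth. -/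
/-- An equivalence relation `E` on a topological space is *smooth* if there is a Borel measurable
reduction of `E` to equality on the Cantor space `ℕ → Bool`. -/
def IsSmoothRel {X : Type*} [TopologicalSpace X] (E : X → X → Prop) : Prop :=
  ∃ f : X → (ℕ → Bool),
    @Measurable X (ℕ → Bool) (borel X) (borel (ℕ → Bool)) f ∧
      ∀ x y : X, E x y ↔ f x = f y

open Topology Set Filter Metric

section Aux
variable {Γ : Type*} [Group Γ] [TopologicalSpace Γ] [IsTopologicalGroup Γ]

lemma residual_preimage_homeo {X Y : Type*} [TopologicalSpace X] [TopologicalSpace Y]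
    (e : X ≃ₜ Y) {s : Set Y} (h : s ∈ residual Y) : e ⁻¹' s ∈ residual X :=
  tendsto_residual_of_isOpenMap e.continuous e.isOpenMap h

lemma isMeagre_preimage_homeo {X Y : Type*} [TopologicalSpace X] [TopologicalSpace Y]
    (e : X ≃ₜ Y) {s : Set Y} (h : IsMeagre s) : IsMeagre (e ⁻¹' s) :=
  h.preimage_of_isOpenMap e.continuous e.isOpenMap

/-- two sets comeagre in a nonempty open set intersect (Baire). -/
lemma IsMeagre.union' {X : Type*} [TopologicalSpace X] {s t : Set X}
    (hs : IsMeagre s) (ht : IsMeagre t) : IsMeagre (s ∪ t) := by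
  rw [IsMeagre, Set.compl_union]
  exact Filter.inter_mem hs ht

lemma helperC {X : Type*} [TopologicalSpace X] [BaireSpace X] {U A B : Set X}
    (hU : IsOpen U) (hne : U.Nonempty) (hA : IsMeagre (U \ A)) (hB : IsMeagre (U \ B)) :
    (U ∩ (A ∩ B)).Nonempty := by
  by_contra hcon
  rw [Set.not_nonempty_iff_eq_empty] at hcon
  have hUm : IsMeagre U := by
    have : U ⊆ (U \ A) ∪ (U \ B) := by
      intro x hx
      by_cases hxA : x ∈ A
      · by_cases hxB : x ∈ B
        · exact absurd (Set.eq_empty_iff_forall_notMem.1 hcon x) (by simp [hx, hxA, hxB])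
        · exact Or.inr ⟨hx, hxB⟩
      · exact Or.inl ⟨hx, hxA⟩
    exact (hA.union' hB).mono this
  have : Dense Uᶜ := dense_of_mem_residual hUm
  obtain ⟨x, hx1, hx2⟩ := this.inter_open_nonempty U hU hne
  exact hx2 hx1

/-- A nonmeagre Baire measurable set is comeagre in some nonempty open set. -/
lemma exists_open_of_baireMeasurable {X : Type*} [TopologicalSpace X] {A : Set X}
    (hA : BaireMeasurableSet A) (hnm : ¬ IsMeagre A) :
    ∃ U : Set X, IsOpen U ∧ U.Nonempty ∧ IsMeagre (U \ A) := by
  obtain ⟨U, hUo, hAU⟩ := hA.residualEq_isOpen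
  have hsym : IsMeagre {x | ¬ ((x ∈ A) = (x ∈ U))} := by
    have : {x | (x ∈ A) = (x ∈ U)} ∈ residual X := hAU
    rw [IsMeagre]
    convert this using 1
    ext x; simp
  rcases U.eq_empty_or_nonempty with rfl | hne
  · exfalso; apply hnm
    apply hsym.mono
    intro x hx
    simp only [mem_setOf_eq]
    simp [hx]
  · refine ⟨U, hUo, hne, hsym.mono ?_⟩
    intro x hx
    simp only [mem_setOf_eq]
    simp [hx.1, hx.2]

end Aux

section Pettis
variable {Γ : Type*} [Group Γ] [TopologicalSpace Γ] [IsTopologicalGroup Γ] [BaireSpace Γ]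

/-- Pettis: a Baire measurable nonmeagre subgroup is open. -/
theorem Subgroup.isOpen_of_baireMeasurable_of_not_isMeagre (H : Subgroup Γ)
    (hBP : BaireMeasurableSet (H : Set Γ)) (hnm : ¬ IsMeagre (H : Set Γ)) :
    IsOpen (H : Set Γ) := by
  obtain ⟨U, hUo, hUne, hUA⟩ := exists_open_of_baireMeasurable hBP hnm
  -- every g such that (∃ x ∈ U, x * g ∈ U) lies in H
  have key : ∀ g : Γ, (∃ x, x ∈ U ∧ x * g ∈ U) → g ∈ H := by
    rintro g ⟨x₀, hx₀, hx₀g⟩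
    set U' := U ∩ (fun x => x * g) ⁻¹' U with hU'
    have hU'o : IsOpen U' := hUo.inter (hUo.preimage (continuous_mul_right g))
    have hU'ne : U'.Nonempty := ⟨x₀, hx₀, hx₀g⟩
    have h1 : IsMeagre (U' \ (H : Set Γ)) := hUA.mono (t := U' \ (H : Set Γ)) (fun x hx => And.intro hx.1.1 hx.2)
    have h2 : IsMeagre (U' \ ((fun x => x * g) ⁻¹' (H : Set Γ))) := by
      have : IsMeagre ((fun x => x * g) ⁻¹' (U \ (H : Set Γ))) :=
        isMeagre_preimage_homeo (Homeomorph.mulRight g) hUA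
      exact this.mono (t := U' \ ((fun x => x * g) ⁻¹' (H : Set Γ))) (fun x hx => And.intro hx.1.2 hx.2)
    obtain ⟨z, hzU, hzH, hzgH⟩ := helperC hU'o hU'ne h1 h2
    have : z⁻¹ * (z * g) ∈ H := H.mul_mem (H.inv_mem hzH) hzgH
    simpa [mul_assoc] using this
  -- the set of such g is an open neighbourhood of 1
  obtain ⟨u, hu⟩ := hUne
  have hmem : (H : Set Γ) ∈ 𝓝 (1 : Γ) := by
    refine Filter.mem_of_superset (IsOpen.mem_nhds ?_ ?_ :
        {g : Γ | ∃ x, x ∈ U ∧ x * g ∈ U} ∈ 𝓝 (1:Γ)) (fun g hg => key g hg)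
    · have : {g : Γ | ∃ x, x ∈ U ∧ x * g ∈ U} = ⋃ x ∈ U, (fun gg => x * gg) ⁻¹' U := by
        ext g; simp [Set.mem_iUnion]
      rw [this]
      exact isOpen_biUnion (fun x _ => hUo.preimage (continuous_mul_left x))
    · exact ⟨u, hu, by simpa using hu⟩
  exact Subgroup.isOpen_of_mem_nhds H hmem

end Pettis

section ZeroOne
variable {Γ : Type*} [Group Γ] [TopologicalSpace Γ] [IsTopologicalGroup Γ] [BaireSpace Γ]

/-- topological 0-1 law for sets invariant under a dense subgroup -/
lemma zero_one (L : Subgroup Γ) (hd : Dense (L : Set Γ)) {A : Set Γ}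
    (hA : BaireMeasurableSet A) (hinv : ∀ x : Γ, ∀ h ∈ L, x * h ∈ A ↔ x ∈ A) :
    IsMeagre A ∨ A ∈ residual Γ := by
  by_cases hm : IsMeagre A
  · exact Or.inl hm
  by_cases hm' : IsMeagre Aᶜ
  · exact Or.inr (by rw [IsMeagre, compl_compl] at hm'; exact hm')
  exfalso
  obtain ⟨U, hUo, hUne, hUA⟩ := exists_open_of_baireMeasurable hA hm
  obtain ⟨V, hVo, hVne, hVA⟩ := exists_open_of_baireMeasurable hA.compl hm'
  obtain ⟨u₀, hu₀⟩ := hUne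
  obtain ⟨v₀, hv₀⟩ := hVne
  -- find h ∈ L such that (U·h) ∩ V ≠ ∅
  set T : Set Γ := {k | ∃ v ∈ V, v * k⁻¹ ∈ U} with hT
  have hTo : IsOpen T := by
    have : T = ⋃ v ∈ V, (fun k => v * k⁻¹) ⁻¹' U := by
      ext k; simp [hT, Set.mem_iUnion]
    rw [this]
    exact isOpen_biUnion fun v _ =>
      hUo.preimage ((continuous_mul_left v).comp continuous_inv)
  have hTne : T.Nonempty := ⟨u₀⁻¹ * v₀, v₀, hv₀, by simpa using hu₀⟩
  obtain ⟨h, hhT, hhL⟩ := hd.inter_open_nonempty T hTo hTne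
  obtain ⟨v, hvV, hvU⟩ := hhT
  set W : Set Γ := (fun x => x * h⁻¹) ⁻¹' U ∩ V with hW
  have hWo : IsOpen W := (hUo.preimage (continuous_mul_right h⁻¹)).inter hVo
  have hWne : W.Nonempty := ⟨v, hvU, hvV⟩
  have h1 : IsMeagre (W \ A) := by
    have hpre : IsMeagre ((fun x => x * h⁻¹) ⁻¹' (U \ A)) :=
      isMeagre_preimage_homeo (Homeomorph.mulRight h⁻¹) hUA
    refine hpre.mono (t := W \ A) fun x hx => And.intro hx.1.1 (fun hxA => hx.2 ?_)
    have := (hinv (x * h⁻¹) h hhL).2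
    rw [inv_mul_cancel_right] at this
    exact this hxA
  have h2 : IsMeagre (W \ Aᶜ) := hVA.mono (t := W \ Aᶜ) fun x hx => And.intro hx.1.2 hx.2
  obtain ⟨z, _, hz1, hz2⟩ := helperC hWo hWne h1 h2
  exact hz2 hz1

end ZeroOne

section NotSmooth
variable {Γ : Type*} [Group Γ] [TopologicalSpace Γ] [IsTopologicalGroup Γ] [PolishSpace Γ]

lemma not_smooth_of_dense (L : Subgroup Γ) (hd : Dense (L : Set Γ)) (hne : L ≠ ⊤) :
    ¬ IsSmoothRel (fun x y : Γ => x⁻¹ * y ∈ L) := by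
  haveI : BaireSpace Γ := by letI := TopologicalSpace.upgradeIsCompletelyMetrizable Γ; infer_instance
  haveI : Nonempty Γ := ⟨1⟩
  rintro ⟨f, hf, hiff⟩
  borelize Γ
  -- the Borel invariant sets A n
  set S : ℕ → Set (ℕ → Bool) := fun n => {b | b n = true} with hS
  have hSmeas : ∀ n, @MeasurableSet _ (borel (ℕ → Bool)) (S n) := by
    intro n
    have ho : IsOpen ((fun b : ℕ → Bool => b n) ⁻¹' ({true} : Set Bool)) :=
      (isOpen_discrete ({true} : Set Bool)).preimage (continuous_apply n)
    have heq : S n = (fun b : ℕ → Bool => b n) ⁻¹' ({true} : Set Bool) := by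
      ext b; simp [hS]
    rw [heq]
    exact MeasurableSpace.measurableSet_generateFrom ho
  set A : ℕ → Set Γ := fun n => f ⁻¹' S n with hA
  have hAmeas : ∀ n, MeasurableSet (A n) := fun n => hf (hSmeas n)
  have hABP : ∀ n, BaireMeasurableSet (A n) := fun n => (hAmeas n).baireMeasurableSet
  have hAinv : ∀ n, ∀ x : Γ, ∀ h ∈ L, x * h ∈ A n ↔ x ∈ A n := by
    intro n x h hh
    have hfx : f x = f (x * h) := by
      rw [← hiff]
      simpa using hh
    simp only [hA, Set.mem_preimage, hS, Set.mem_setOf_eq, ← hfx]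
  have hor := fun n => zero_one L hd (hABP n) (hAinv n)
  classical
  set Cs : ℕ → Set Γ := fun n => if A n ∈ residual Γ then A n else (A n)ᶜ with hCs
  have hCsres : ∀ n, Cs n ∈ residual Γ := by
    intro n
    by_cases h : A n ∈ residual Γ
    · simpa [hCs, h] using h
    · have : IsMeagre (A n) := (hor n).resolve_right h
      simp only [hCs, if_neg h]; exact this
  have hCres : (⋂ n, Cs n) ∈ residual Γ := (countable_iInter_mem).2 hCsres
  obtain ⟨x₀, hx₀⟩ := (dense_of_mem_residual hCres).nonempty
  -- all elements of the residual set are equivalent to x₀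
  have hconst : ∀ y ∈ (⋂ n, Cs n), f x₀ = f y := by
    intro y hy
    funext n
    have h1 : x₀ ∈ Cs n := Set.mem_iInter.1 hx₀ n
    have h2 : y ∈ Cs n := Set.mem_iInter.1 hy n
    have key : ∀ z : Γ, z ∈ Cs n → (f z n = true ↔ A n ∈ residual Γ) := by
      intro z hz
      by_cases h : A n ∈ residual Γ
      · simp only [hCs, if_pos h] at hz
        exact iff_of_true hz h
      · simp only [hCs, if_neg h] at hz
        simp only [hA, Set.mem_compl_iff, Set.mem_preimage, hS, Set.mem_setOf_eq] at hz
        simp [h, hz]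
    have := (key x₀ h1).trans (key y h2).symm
    cases hb : f x₀ n <;> cases hb' : f y n <;> simp_all
  have hcoset : (⋂ n, Cs n) ⊆ (fun y => x₀⁻¹ * y) ⁻¹' (L : Set Γ) := by
    intro y hy
    have : f x₀ = f y := hconst y hy
    rw [← hiff] at this
    exact this
  have hLres : (L : Set Γ) ∈ residual Γ := by
    have h1 : ((fun y => x₀⁻¹ * y) ⁻¹' (L : Set Γ)) ∈ residual Γ :=
      Filter.mem_of_superset hCres hcoset
    have h2 := residual_preimage_homeo (Homeomorph.mulLeft x₀) h1
    have : (Homeomorph.mulLeft x₀) ⁻¹' ((fun y => x₀⁻¹ * y) ⁻¹' (L : Set Γ)) = (L : Set Γ) := by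
      ext y; simp [Homeomorph.mulLeft]
    rwa [this] at h2
  obtain ⟨k, hk⟩ : ∃ k, k ∉ L := by
    by_contra hcon
    push_neg at hcon
    exact hne ((Subgroup.eq_top_iff' L).2 hcon)
  have hkres : ((fun y => k⁻¹ * y) ⁻¹' (L : Set Γ)) ∈ residual Γ :=
    residual_preimage_homeo (Homeomorph.mulLeft k⁻¹) hLres
  obtain ⟨z, hz1, hz2⟩ := (dense_of_mem_residual (Filter.inter_mem hLres hkres)).nonempty
  apply hk
  have hz2' : k⁻¹ * z ∈ L := hz2
  have : z * (k⁻¹ * z)⁻¹ ∈ L := L.mul_mem hz1 (L.inv_mem hz2')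
  simpa [mul_assoc] using this

end NotSmooth

lemma not_smooth_of_not_closed {G : Type*} [Group G] [TopologicalSpace G] [IsTopologicalGroup G]
    [PolishSpace G] (H : Subgroup G) (hc : ¬ IsClosed (H : Set G)) :
    ¬ IsSmoothRel (fun x y : G => x⁻¹ * y ∈ H) := by
  set K := H.topologicalClosure with hK
  have hKcl : IsClosed (K : Set G) := Subgroup.isClosed_topologicalClosure H
  haveI : PolishSpace ↥K := hKcl.polishSpace
  set L := H.subgroupOf K with hL
  have hLne : L ≠ ⊤ := by
    intro htop
    have hKH : K ≤ H := Subgroup.subgroupOf_eq_top.1 htop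
    have : H = K := le_antisymm (Subgroup.le_topologicalClosure H) hKH
    rw [this] at hc
    exact hc hKcl
  have hdense : Dense (L : Set ↥K) := by
    intro p
    rw [closure_subtype]
    have himg : (Subtype.val '' (L : Set ↥K)) = (H : Set G) := by
      ext x
      constructor
      · rintro ⟨y, hy, rfl⟩
        exact hy
      · intro hx
        exact ⟨⟨x, Subgroup.le_topologicalClosure H hx⟩, by simpa [hL, Subgroup.mem_subgroupOf], rfl⟩
    rw [himg]
    have h2 : (p : G) ∈ (K : Set G) := p.2
    have h3 : (K : Set G) = closure (H : Set G) := Subgroup.topologicalClosure_coe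
    rwa [h3] at h2
  intro hsm
  apply not_smooth_of_dense L hdense hLne
  obtain ⟨f, hf, hiff⟩ := hsm
  refine ⟨f ∘ Subtype.val, hf.comp continuous_subtype_val.borel_measurable, ?_⟩
  intro x y
  show (x⁻¹ * y ∈ L) ↔ _
  have : (x⁻¹ * y ∈ L) ↔ ((x : G)⁻¹ * (y : G) ∈ H) := by
    rw [hL, Subgroup.mem_subgroupOf]; norm_cast
  rw [this]
  exact hiff _ _

section Mycielski
variable {G : Type*} [Group G] [TopologicalSpace G] [IsTopologicalGroup G]

lemma nwd_preimage {X Y : Type*} [TopologicalSpace X] [TopologicalSpace Y] (e : X ≃ₜ Y)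
    {F : Set Y} (h1 : IsClosed F) (h2 : interior F = ∅) :
    IsClosed (e ⁻¹' F) ∧ interior (e ⁻¹' F) = ∅ := by
  refine ⟨h1.preimage e.continuous, ?_⟩
  rw [← e.preimage_interior, h2, Set.preimage_empty]

lemma compl_mem_residual_of_nwd {X : Type*} [TopologicalSpace X] {F : Set X}
    (h1 : IsClosed F) (h2 : interior F = ∅) : Fᶜ ∈ residual X :=
  residual_of_dense_open h1.isOpen_compl (interior_eq_empty_iff_dense_compl.1 h2)

variable [BaireSpace G]

lemma choice_points {S : Type*} [Fintype S] [DecidableEq S] (Fn : Set G)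
    (hcl : IsClosed Fn) (hint : interior Fn = ∅) (U : S → Set G)
    (hUo : ∀ s, IsOpen (U s)) (hUne : ∀ s, (U s).Nonempty) :
    ∃ p : S → G, (∀ s, p s ∈ U s) ∧ ∀ s t, s ≠ t → (p s)⁻¹ * p t ∉ Fn := by
  classical
  have main : ∀ A : Finset S, ∃ p : S → G, (∀ s ∈ A, p s ∈ U s) ∧
      ∀ s ∈ A, ∀ t ∈ A, s ≠ t → (p s)⁻¹ * p t ∉ Fn := by
    intro A
    induction A using Finset.induction_on with
    | empty => exact ⟨fun _ => 1, fun s hs => absurd hs (Finset.notMem_empty s),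
        fun s hs => absurd hs (Finset.notMem_empty s)⟩
    | @insert s₀ A hs₀ ih =>
      obtain ⟨p, hp1, hp2⟩ := ih
      -- sets to avoid
      set Bad1 : G → Set G := fun q => (fun y => q⁻¹ * y) ⁻¹' Fn with hBad1
      set Bad2 : G → Set G := fun q => (fun y => y⁻¹ * q) ⁻¹' Fn with hBad2
      have hBad1r : ∀ q, (Bad1 q)ᶜ ∈ residual G := by
        intro q
        have := nwd_preimage (Homeomorph.mulLeft q⁻¹) hcl hint
        exact compl_mem_residual_of_nwd this.1 this.2
      have hBad2r : ∀ q, (Bad2 q)ᶜ ∈ residual G := by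
        intro q
        have := nwd_preimage ((Homeomorph.inv G).trans (Homeomorph.mulRight q)) hcl hint
        exact compl_mem_residual_of_nwd this.1 this.2
      have hres : (⋂ s ∈ A, ((Bad1 (p s))ᶜ ∩ (Bad2 (p s))ᶜ)) ∈ residual G :=
        (countable_bInter_mem A.countable_toSet).2
          (fun s _ => Filter.inter_mem (hBad1r (p s)) (hBad2r (p s)))
      obtain ⟨p₀, hp₀U, hp₀B⟩ := (dense_of_mem_residual hres).inter_open_nonempty
        (U s₀) (hUo s₀) (hUne s₀)
      refine ⟨Function.update p s₀ p₀, ?_, ?_⟩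
      · intro s hs
        rcases Finset.mem_insert.1 hs with rfl | hsA
        · simpa using hp₀U
        · have : s ≠ s₀ := fun h => hs₀ (h ▸ hsA)
          rw [Function.update_of_ne this]
          exact hp1 s hsA
      · intro s hs t ht hst
        rcases Finset.mem_insert.1 hs with hseq | hsA <;>
          rcases Finset.mem_insert.1 ht with hteq | htA
        · exact absurd (hseq.trans hteq.symm) hst
        · -- s = s₀, t ∈ A
          have htne : t ≠ s₀ := fun h => hs₀ (h ▸ htA)
          rw [hseq, Function.update_self, Function.update_of_ne htne]
          have := (Set.mem_iInter₂.1 hp₀B t htA).2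
          simpa [hBad2] using this
        · -- t = s₀, s ∈ A
          have hsne' : s ≠ s₀ := fun h => hs₀ (h ▸ hsA)
          rw [hteq, Function.update_self, Function.update_of_ne hsne']
          have := (Set.mem_iInter₂.1 hp₀B s hsA).1
          simpa [hBad1] using this
        · have hsne' : s ≠ s₀ := fun h => hs₀ (h ▸ hsA)
          have htne' : t ≠ s₀ := fun h => hs₀ (h ▸ htA)
          rw [Function.update_of_ne hsne', Function.update_of_ne htne']
          exact hp2 s hsA t htA hst
  obtain ⟨p, hp1, hp2⟩ := main Finset.univ
  exact ⟨p, fun s => hp1 s (Finset.mem_univ s), fun s t hst =>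
    hp2 s (Finset.mem_univ s) t (Finset.mem_univ t) hst⟩

end Mycielski

section Radii
variable {G : Type*} [Group G] [MetricSpace G] [IsTopologicalGroup G]

lemma choose_radii {S : Type*} [Fintype S] [Nonempty S] (Fn : Set G) (hcl : IsClosed Fn)
    (p : S → G) (c : S → G) (r : S → ℝ) (hp : ∀ s, p s ∈ ball (c s) (r s))
    (hsep : ∀ s t, s ≠ t → (p s)⁻¹ * p t ∉ Fn) (rb : ℝ) (hrb : 0 < rb) :
    ∃ δ : S → ℝ, ∀ s, (0 < δ s ∧ δ s ≤ rb) ∧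
      closedBall (p s) (δ s) ⊆ closedBall (c s) (r s) ∧
      ∀ t, s ≠ t → ∀ a ∈ closedBall (p s) (δ s), ∀ b ∈ closedBall (p t) (δ t),
        a⁻¹ * b ∉ Fn := by
  classical
  have hR : IsClosed ((fun q : G × G => q.1⁻¹ * q.2) ⁻¹' Fn) :=
    hcl.preimage ((continuous_fst.inv).mul continuous_snd)
  have hex : ∀ s t : S, ∃ ε : ℝ, 0 < ε ∧
      (s ≠ t → ∀ a b : G, dist a (p s) ≤ ε → dist b (p t) ≤ ε → a⁻¹ * b ∉ Fn) := by
    intro s t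
    by_cases hst : s = t
    · exact ⟨1, one_pos, fun h => absurd hst h⟩
    · have hmem : ((p s, p t) : G × G) ∈ ((fun q : G × G => q.1⁻¹ * q.2) ⁻¹' Fn)ᶜ :=
        hsep s t hst
      obtain ⟨ε, hε, hball⟩ := Metric.isOpen_iff.1 hR.isOpen_compl _ hmem
      refine ⟨ε/2, by linarith, fun _ a b ha hb => ?_⟩
      have hmem2 : ((a, b) : G × G) ∈ ball ((p s, p t) : G × G) ε := by
        rw [Metric.mem_ball, Prod.dist_eq]
        exact lt_of_le_of_lt (max_le ha hb) (by linarith)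
      exact hball hmem2
  choose ε hε1 hε2 using hex
  set δ : S → ℝ := fun s =>
    min (min rb (r s - dist (p s) (c s)))
      (Finset.univ.inf' Finset.univ_nonempty (fun t => min (ε s t) (ε t s))) with hδ
  have hδpos : ∀ s, 0 < δ s := by
    intro s
    apply lt_min
    · exact lt_min hrb (by have := mem_ball.1 (hp s); linarith)
    · rw [Finset.lt_inf'_iff]
      exact fun t _ => lt_min (hε1 s t) (hε1 t s)
  have hδle : ∀ s t, δ s ≤ ε s t ∧ δ s ≤ ε t s := by
    intro s t
    have h1 : δ s ≤ min (ε s t) (ε t s) :=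
      le_trans (min_le_right _ _) (Finset.inf'_le _ (Finset.mem_univ t))
    exact ⟨le_trans h1 (min_le_left _ _), le_trans h1 (min_le_right _ _)⟩
  refine ⟨δ, fun s => ⟨⟨hδpos s, le_trans (min_le_left _ _) (min_le_left _ _)⟩, ?_, ?_⟩⟩
  · intro a ha
    rw [mem_closedBall] at ha ⊢
    have h1 : δ s ≤ r s - dist (p s) (c s) :=
      le_trans (min_le_left _ _) (min_le_right _ _)
    calc dist a (c s) ≤ dist a (p s) + dist (p s) (c s) := dist_triangle _ _ _
      _ ≤ r s := by linarith
  · intro t hst a ha b hb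
    refine hε2 s t hst a b (le_trans (mem_closedBall.1 ha) (hδle s t).1) ?_
    exact le_trans (mem_closedBall.1 hb) ((hδle t s).2)

end Radii

section Construction
variable {G : Type*} [Group G] [MetricSpace G] [IsTopologicalGroup G] [BaireSpace G]

/-- data at level `n` of the Cantor scheme -/
def PData (G : Type*) (n : ℕ) := (Fin n → Bool) → G × ℝ

/-- the invariant of the construction -/
def InvP (F : ℕ → Set G) (n : ℕ) (x : PData G n) : Prop :=
  (∀ s, 0 < (x s).2 ∧ (x s).2 ≤ (1/2 : ℝ)^n) ∧
    ∀ s t, s ≠ t → ∀ a ∈ closedBall (x s).1 (x s).2, ∀ b ∈ closedBall (x t).1 (x t).2,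
      a⁻¹ * b ∉ F n

lemma stepP (F : ℕ → Set G) (hcl : ∀ n, IsClosed (F n)) (hint : ∀ n, interior (F n) = ∅)
    (n : ℕ) (x : PData G n) (hx : InvP F n x) :
    ∃ y : PData G (n+1), InvP F (n+1) y ∧ ∀ s : Fin (n+1) → Bool,
      closedBall (y s).1 (y s).2 ⊆
        closedBall (x (s ∘ Fin.castSucc)).1 (x (s ∘ Fin.castSucc)).2 := by
  classical
  set par : (Fin (n+1) → Bool) → (Fin n → Bool) := fun s => s ∘ Fin.castSucc with hpar
  obtain ⟨p, hpU, hpsep⟩ := choice_points (F (n+1)) (hcl (n+1)) (hint (n+1))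
    (fun s => ball (x (par s)).1 (x (par s)).2) (fun _ => isOpen_ball)
    (fun s => (Metric.nonempty_ball).2 (hx.1 _).1)
  obtain ⟨δ, hδ⟩ := choose_radii (F (n+1)) (hcl (n+1)) p
    (fun s => (x (par s)).1) (fun s => (x (par s)).2) hpU hpsep
    ((1/2 : ℝ)^(n+1)) (by positivity)
  refine ⟨fun s => (p s, δ s), ⟨fun s => ⟨(hδ s).1.1, (hδ s).1.2⟩, ?_⟩, fun s => (hδ s).2.1⟩
  intro s t hst a ha b hb
  exact (hδ s).2.2 t hst a ha b hb

end Construction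

section Seq
variable {G : Type*} [Group G] [MetricSpace G] [IsTopologicalGroup G] [BaireSpace G]

noncomputable def seqD (F : ℕ → Set G) (hcl : ∀ n, IsClosed (F n))
    (hint : ∀ n, interior (F n) = ∅) : ∀ n, {x : PData G n // InvP F n x}
  | 0 => ⟨fun _ => (1, 1), ⟨fun _ => ⟨one_pos, by norm_num⟩,
      fun s t hst => absurd (funext fun i => i.elim0) hst⟩⟩
  | n+1 =>
    let prev := seqD F hcl hint n
    ⟨Classical.choose (stepP F hcl hint n prev.1 prev.2),
      (Classical.choose_spec (stepP F hcl hint n prev.1 prev.2)).1⟩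

lemma seqD_nest (F : ℕ → Set G) (hcl : ∀ n, IsClosed (F n))
    (hint : ∀ n, interior (F n) = ∅) (n : ℕ) (s : Fin (n+1) → Bool) :
    closedBall ((seqD F hcl hint (n+1)).1 s).1 ((seqD F hcl hint (n+1)).1 s).2 ⊆
      closedBall ((seqD F hcl hint n).1 (s ∘ Fin.castSucc)).1
        ((seqD F hcl hint n).1 (s ∘ Fin.castSucc)).2 := by
  have := (Classical.choose_spec
    (stepP F hcl hint n (seqD F hcl hint n).1 (seqD F hcl hint n).2)).2 s
  exact this

variable [CompleteSpace G]

lemma mycielski_aux (F : ℕ → Set G) (hcl : ∀ n, IsClosed (F n))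
    (hint : ∀ n, interior (F n) = ∅) (hmono : Monotone F) :
    ∃ φ : (ℕ → Bool) → G, ∀ a b : ℕ → Bool, a ≠ b → ∀ m, (φ a)⁻¹ * φ b ∉ F m := by
  classical
  set X : ∀ n, {x : PData G n // InvP F n x} := seqD F hcl hint with hX
  -- the centers along a branch
  set c : (ℕ → Bool) → ℕ → G := fun a n => ((X n).1 (fun i => a i)).1 with hc
  set r : (ℕ → Bool) → ℕ → ℝ := fun a n => ((X n).1 (fun i => a i)).2 with hr
  have hrpos : ∀ a n, 0 < r a n := fun a n => ((X n).2.1 _).1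
  have hrle : ∀ a n, r a n ≤ (1/2 : ℝ)^n := fun a n => ((X n).2.1 _).2
  have hnest : ∀ a n, closedBall (c a (n+1)) (r a (n+1)) ⊆ closedBall (c a n) (r a n) := by
    intro a n
    have h1 := seqD_nest F hcl hint n (fun i => a i)
    have h2 : ((fun i : Fin (n+1) => a i) ∘ Fin.castSucc) = (fun i : Fin n => a i) := by
      funext i
      simp [Fin.coe_castSucc]
    rw [h2] at h1
    exact h1
  have hchain : ∀ a n m, n ≤ m → closedBall (c a m) (r a m) ⊆ closedBall (c a n) (r a n) := by
    intro a n m hnm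
    induction m, hnm using Nat.le_induction with
    | base => exact subset_rfl
    | succ m hnm ih => exact subset_trans (hnest a m) ih
  have hmem : ∀ a n m, n ≤ m → c a m ∈ closedBall (c a n) (r a n) := fun a n m hnm =>
    hchain a n m hnm (mem_closedBall_self (le_of_lt (hrpos a m)))
  have hcauchy : ∀ a, CauchySeq (c a) := by
    intro a
    rw [Metric.cauchySeq_iff']
    intro ε hε
    obtain ⟨N, hN⟩ := exists_pow_lt_of_lt_one hε (by norm_num : (1/2 : ℝ) < 1)
    refine ⟨N, fun n hn => ?_⟩
    have := mem_closedBall.1 (hmem a N n hn)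
    calc dist (c a n) (c a N) ≤ r a N := this
      _ ≤ (1/2 : ℝ)^N := hrle a N
      _ < ε := hN
  have hlim : ∀ a : ℕ → Bool, ∃ x : G, ∀ n, x ∈ closedBall (c a n) (r a n) := by
    intro a
    obtain ⟨x, hx⟩ := cauchySeq_tendsto_of_complete (hcauchy a)
    refine ⟨x, fun n => ?_⟩
    refine isClosed_closedBall.mem_of_tendsto hx ?_
    exact Filter.eventually_atTop.2 ⟨n, fun m hm => hmem a n m hm⟩
  choose φ hφ using hlim
  refine ⟨φ, fun a b hab m => ?_⟩
  obtain ⟨k, hk⟩ := Function.ne_iff.1 hab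
  set n := max m (k+1) with hn
  have hne : (fun i : Fin n => a i) ≠ (fun i : Fin n => b i) := by
    intro h
    have hkn : k < n := lt_of_lt_of_le (Nat.lt_succ_self k) (le_max_right m (k+1))
    have := congrFun h ⟨k, hkn⟩
    exact hk this
  have hsep := (X n).2.2 _ _ hne (φ a) (hφ a n) (φ b) (hφ b n)
  intro hmem'
  exact hsep (hmono (le_max_left m (k+1)) hmem')

end Seq

universe u

lemma mk_nat_bool : Cardinal.mk (ℕ → Bool) = Cardinal.continuum := by
  rw [← Cardinal.power_def, Cardinal.mk_bool, Cardinal.mk_nat, Cardinal.two_power_aleph0]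

lemma continuum_le_of_inj {X : Type u} (f : (ℕ → Bool) → X) (hf : Function.Injective f) :
    Cardinal.continuum ≤ Cardinal.mk X := by
  have hinj : Function.Injective (fun a : ULift.{u} (ℕ → Bool) => f a.down) := by
    intro a b hab
    exact ULift.ext _ _ (hf hab)
  have := Cardinal.mk_le_of_injective hinj
  rwa [Cardinal.mk_uLift, mk_nat_bool, Cardinal.lift_continuum] at this

theorem continuum_le_card_quotient {G : Type u} [Group G] [TopologicalSpace G]
    [IsTopologicalGroup G] [CompactSpace G] [PolishSpace G] (H : Subgroup G)
    (hm : IsMeagre (H : Set G)) : Cardinal.continuum ≤ Cardinal.mk (G ⧸ H) := by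
  letI := TopologicalSpace.upgradeIsCompletelyMetrizable G
  haveI : BaireSpace G := inferInstance
  -- 1 is not isolated
  have hone : interior ({1} : Set G) = ∅ := by
    by_contra hne
    have h1 : IsOpen ({1} : Set G) := by
      rcases Set.eq_empty_or_nonempty (interior ({1} : Set G)) with h | h
      · exact absurd h hne
      · obtain ⟨x, hx⟩ := h
        have hx1 : x = 1 := Set.mem_singleton_iff.1 (interior_subset hx)
        have heq : interior ({1} : Set G) = {1} := by
          apply Set.Subset.antisymm interior_subset
          intro y hy
          rw [Set.mem_singleton_iff] at hy
          subst hy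
          exact hx1 ▸ hx
        rw [← heq]
        exact isOpen_interior
    haveI : DiscreteTopology G := discreteTopology_of_isOpen_singleton_one h1
    have hd : Dense ((H : Set G)ᶜ) := dense_of_mem_residual hm
    have : (H : Set G)ᶜ = Set.univ := by
      rw [← hd.closure_eq, closure_discrete]
    have h1H : (1 : G) ∈ (H : Set G)ᶜ := this ▸ Set.mem_univ _
    exact h1H H.one_mem
  -- extract a monotone sequence of closed nowhere dense sets covering H and containing 1
  rw [IsMeagre, mem_residual_iff] at hm
  obtain ⟨S, hSo, hSd, hScnt, hSsub⟩ := hm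
  have hSne : S.Nonempty := by
    rcases Set.eq_empty_or_nonempty S with rfl | h
    · exfalso
      have : (1 : G) ∈ (H : Set G)ᶜ := hSsub (by simp)
      exact this H.one_mem
    · exact h
  obtain ⟨f, hfS⟩ := hScnt.exists_eq_range hSne
  set D : ℕ → Set G := fun n => ⋂ k ∈ Set.Iic n, f k with hD
  have hDo : ∀ n, IsOpen (D n) := fun n =>
    (Set.finite_Iic n).isOpen_biInter fun k _ => hSo _ (hfS ▸ Set.mem_range_self k)
  have hDres : ∀ n, D n ∈ residual G := fun n =>
    (countable_bInter_mem (Set.finite_Iic n).countable).2 fun k _ =>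
      residual_of_dense_open (hSo _ (hfS ▸ Set.mem_range_self k))
        (hSd _ (hfS ▸ Set.mem_range_self k))
  set F : ℕ → Set G := fun n => (D n)ᶜ ∪ {1} with hF
  have hFcl : ∀ n, IsClosed (F n) := fun n =>
    ((hDo n).isClosed_compl).union isClosed_singleton
  have hFint : ∀ n, interior (F n) = ∅ := by
    intro n
    rw [interior_eq_empty_iff_dense_compl]
    have h2 : Dense (({1} : Set G)ᶜ) := interior_eq_empty_iff_dense_compl.1 hone
    have h3 : Dense (D n ∩ ({1} : Set G)ᶜ) :=
      (dense_of_mem_residual (hDres n)).inter_of_isOpen_left h2 (hDo n)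
    rw [Set.compl_union, compl_compl]
    exact h3
  have hFmono : Monotone F := by
    intro n m hnm
    apply Set.union_subset_union_left
    rw [Set.compl_subset_compl]
    exact Set.biInter_subset_biInter_left (fun k hk => le_trans hk hnm)
  have hHsub : (H : Set G) ⊆ ⋃ n, F n := by
    intro x hx
    have : x ∉ ⋂₀ S := fun hmem => (hSsub hmem) hx
    rw [hfS, Set.sInter_range] at this
    rw [Set.mem_iInter] at this
    push_neg at this
    obtain ⟨n, hn⟩ := this
    refine Set.mem_iUnion.2 ⟨n, Or.inl ?_⟩
    intro hmem
    exact hn (Set.mem_iInter₂.1 hmem n (Set.mem_Iic.2 le_rfl))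
  obtain ⟨φ, hφ⟩ := mycielski_aux F hFcl hFint hFmono
  refine continuum_le_of_inj (fun a => (QuotientGroup.mk (φ a) : G ⧸ H)) ?_
  intro a b hab
  by_contra hne
  rw [QuotientGroup.eq] at hab
  obtain ⟨n, hn⟩ := Set.mem_iUnion.1 (hHsub hab)
  exact hφ a b hne n hn

lemma card_quotient_le_continuum {G : Type u} [Group G] [TopologicalSpace G]
    [PolishSpace G] (H : Subgroup G) :
    Cardinal.mk (G ⧸ H) ≤ Cardinal.continuum := by
  have h1 : Cardinal.mk (G ⧸ H) ≤ Cardinal.mk G :=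
    Cardinal.mk_le_of_surjective (QuotientGroup.mk_surjective (s := H))
  refine le_trans h1 ?_
  borelize G
  obtain ⟨g, -, ginj⟩ := MeasurableSpace.measurable_injection_nat_bool_of_countablySeparated G
  have hinj : Function.Injective (fun x : G => ULift.up.{u} (g x)) := by
    intro a b hab
    exact ginj (congrArg ULift.down hab)
  have := Cardinal.mk_le_of_injective hinj
  rwa [Cardinal.mk_uLift,
    show Cardinal.mk (ℕ → Bool) = Cardinal.continuum by
      rw [← Cardinal.power_def, Cardinal.mk_bool, Cardinal.mk_nat, Cardinal.two_power_aleph0],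
    Cardinal.lift_continuum] at this

/-- For a subgroup `H` of a compact Polish group `G`, exactly one of the following holds:
(1) `H` is open of finite index; (2) `H` is closed but not open and `G ⧸ H` has cardinality
exactly continuum; (3) `H` is Baire measurable, not closed, `G ⧸ H` has cardinality exactly
continuum and the left coset equivalence relation of `H` is not smooth; (4) `H` is not Baire
measurable and the left coset equivalence relation of `H` is not smooth. -/
theorem stmt_2 {G : Type*} [Group G] [TopologicalSpace G] [IsTopologicalGroup G]
    [CompactSpace G] [PolishSpace G] (H : Subgroup G) :
    ∃! i : Fin 4,
      ![ IsOpen (H : Set G) ∧ Finite (G ⧸ H),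
         IsClosed (H : Set G) ∧ ¬ IsOpen (H : Set G) ∧
           Cardinal.mk (G ⧸ H) = Cardinal.continuum,
         BaireMeasurableSet (H : Set G) ∧ ¬ IsClosed (H : Set G) ∧
           Cardinal.mk (G ⧸ H) = Cardinal.continuum ∧
           ¬ IsSmoothRel (fun x y : G => x⁻¹ * y ∈ H),
         ¬ BaireMeasurableSet (H : Set G) ∧
           ¬ IsSmoothRel (fun x y : G => x⁻¹ * y ∈ H) ] i := by
  classical
  have hclosedBP : IsClosed (H : Set G) → BaireMeasurableSet (H : Set G) := by
    intro hcl
    borelize G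
    exact hcl.measurableSet.baireMeasurableSet
  by_cases ho : IsOpen (H : Set G)
  · haveI : Finite (G ⧸ H) := H.quotient_finite_of_isOpen ho
    refine ⟨0, ⟨ho, inferInstance⟩, ?_⟩
    intro j hj
    fin_cases j <;>
      simp only [Matrix.cons_val_zero, Matrix.cons_val_one, Matrix.head_cons,
        Matrix.cons_val_two, Matrix.tail_cons, Matrix.cons_val_three] at hj
    · rfl
    · exact absurd ho hj.2.1
    · exact absurd (Subgroup.isClosed_of_isOpen H ho) hj.2.1
    · exact absurd ho.baireMeasurableSet hj.1
  · have hcard : ¬ IsOpen (H : Set G) → IsMeagre (H : Set G) →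
        Cardinal.mk (G ⧸ H) = Cardinal.continuum := fun _ hm =>
      le_antisymm (card_quotient_le_continuum H) (continuum_le_card_quotient H hm)
    by_cases hcl : IsClosed (H : Set G)
    · -- closed, not open: H is nowhere dense hence meagre
      have hint : interior (H : Set G) = ∅ := by
        by_contra hne
        rcases Set.eq_empty_or_nonempty (interior (H : Set G)) with h | ⟨g, hg⟩
        · exact hne h
        · exact ho (Subgroup.isOpen_of_mem_nhds H (mem_interior_iff_mem_nhds.1 hg))
      have hm : IsMeagre (H : Set G) :=
        residual_of_dense_open hcl.isOpen_compl (interior_eq_empty_iff_dense_compl.1 hint)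
      refine ⟨1, ⟨hcl, ho, hcard ho hm⟩, ?_⟩
      intro j hj
      fin_cases j <;>
        simp only [Matrix.cons_val_zero, Matrix.cons_val_one, Matrix.head_cons,
          Matrix.cons_val_two, Matrix.tail_cons, Matrix.cons_val_three] at hj
      · exact absurd hj.1 ho
      · rfl
      · exact absurd hcl hj.2.1
      · exact absurd (hclosedBP hcl) hj.1
    · have hnsm : ¬ IsSmoothRel (fun x y : G => x⁻¹ * y ∈ H) :=
        not_smooth_of_not_closed H hcl
      by_cases hbp : BaireMeasurableSet (H : Set G)
      · haveI : BaireSpace G := by letI := TopologicalSpace.upgradeIsCompletelyMetrizable G; infer_instance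
        have hm : IsMeagre (H : Set G) := by
          by_contra hnm
          exact ho (H.isOpen_of_baireMeasurable_of_not_isMeagre hbp hnm)
        refine ⟨2, ⟨hbp, hcl, hcard ho hm, hnsm⟩, ?_⟩
        intro j hj
        fin_cases j <;>
          simp only [Matrix.cons_val_zero, Matrix.cons_val_one, Matrix.head_cons,
            Matrix.cons_val_two, Matrix.tail_cons, Matrix.cons_val_three] at hj
        · exact absurd hj.1 ho
        · exact absurd hj.1 hcl
        · rfl
        · exact absurd hbp hj.1
      · refine ⟨3, ⟨hbp, hnsm⟩, ?_⟩
        intro j hj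
        fin_cases j <;>
          simp only [Matrix.cons_val_zero, Matrix.cons_val_one, Matrix.head_cons,
            Matrix.cons_val_two, Matrix.tail_cons, Matrix.cons_val_three] at hj
        · exact absurd hj.1.baireMeasurableSet hbp
        · exact absurd (hclosedBP hj.1) hbp
        · exact absurd hj.1 hbp
        · rfl
end

section
/- Let G be a compact Hausdorff topological group acting continuously and transitively on a Polish space X, let x₀ ∈ X, let H = Stab_G(x₀) be the stabiliser of x₀, and let N = ⋂_{g∈G} gHg⁻¹ be the normal core of H. Then every element of N acts trivially on X (so the action of G on X factors through G/N), and the quotient group G/N, with the quotient topology, is a compact metrizable (hence compact Polish) topological group. -/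
/-- If a compact Hausdorff group `G` acts continuously and transitively on a Polish space `X`,
`x₀ ∈ X`, and `N` is the normal core of the stabiliser of `x₀`, then `N` acts trivially on `X`
and `G ⧸ N` is a compact metrizable topological group. -/
theorem stmt_4 {G X : Type*} [Group G] [TopologicalSpace G] [IsTopologicalGroup G]
    [CompactSpace G] [T2Space G] [TopologicalSpace X] [PolishSpace X]
    [MulAction G X] [ContinuousSMul G X]
    (htrans : ∀ x y : X, ∃ g : G, g • x = y) (x₀ : X) :
    (∀ n ∈ (MulAction.stabilizer G x₀).normalCore, ∀ x : X, n • x = x) ∧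
      CompactSpace (G ⧸ (MulAction.stabilizer G x₀).normalCore) ∧
      TopologicalSpace.MetrizableSpace (G ⧸ (MulAction.stabilizer G x₀).normalCore) ∧
      IsTopologicalGroup (G ⧸ (MulAction.stabilizer G x₀).normalCore) := by
  set N := (MulAction.stabilizer G x₀).normalCore with hN
  -- Part 1: N acts trivially
  have htriv : ∀ n ∈ N, ∀ x : X, n • x = x := by
    intro n hn x
    obtain ⟨g, hg⟩ := htrans x₀ x
    have h1 : g⁻¹ * n * g⁻¹⁻¹ ∈ MulAction.stabilizer G x₀ := hn g⁻¹
    have h2 : (g⁻¹ * n * g) • x₀ = x₀ := by simpa using h1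
    calc n • x = (g * (g⁻¹ * n * g) * g⁻¹) • x := by group
    _ = g • (g⁻¹ * n * g) • g⁻¹ • x := by simp [mul_smul]
    _ = x := by
        rw [← hg]
        simp [h2, ← mul_smul]
  refine ⟨htriv, inferInstance, ?_, inferInstance⟩
  -- X is compact
  have hXcompact : CompactSpace X := by
    have : Continuous fun g : G => g • x₀ := continuous_id.smul continuous_const
    have hsurj : Function.Surjective fun g : G => g • x₀ := fun y => htrans x₀ y
    constructor
    rw [← Set.range_eq_univ.mpr hsurj]
    exact isCompact_range this
  letI := TopologicalSpace.upgradeIsCompletelyMetrizable X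
  -- the map from G to C(X,X)
  let φ : G → C(X, X) := fun g => ⟨fun x => g • x, continuous_const_smul g⟩
  have hφcont : Continuous φ :=
    ContinuousMap.continuous_of_continuous_uncurry _ continuous_smul
  have hresp : ∀ a b : G, QuotientGroup.leftRel N a b → φ a = φ b := by
    intro a b hab
    have : a⁻¹ * b ∈ N := (QuotientGroup.leftRel_apply).mp hab
    ext x
    have := htriv _ this x
    calc a • x = a • (a⁻¹ * b) • x := by rw [this]
    _ = b • x := by simp [← mul_smul]
  let ψ : G ⧸ N → C(X, X) := Quotient.lift φ hresp
  have hψcont : Continuous ψ := continuous_quot_lift _ hφcont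
  have hψinj : Function.Injective ψ := by
    intro a b
    induction a using QuotientGroup.induction_on
    induction b using QuotientGroup.induction_on
    rename_i a b
    intro h
    have h' : ∀ x : X, a • x = b • x := fun x => ContinuousMap.congr_fun h x
    refine (QuotientGroup.eq).mpr ?_
    intro g
    show (g * (a⁻¹ * b) * g⁻¹) • x₀ = x₀
    have hx : a • (g⁻¹ • x₀) = b • (g⁻¹ • x₀) := h' _
    calc (g * (a⁻¹ * b) * g⁻¹) • x₀ = g • a⁻¹ • b • g⁻¹ • x₀ := by simp [mul_smul]
    _ = g • a⁻¹ • a • g⁻¹ • x₀ := by rw [← hx]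
    _ = x₀ := by simp [← mul_smul]
  have hemb := hψcont.isClosedEmbedding hψinj
  exact hemb.isEmbedding.metrizableSpace
end

section
/- Let G be a compact Hausdorff topological group acting continuously and transitively on a Hausdorff space X, let E be a G-invariant equivalence relation on X, fix x₀ ∈ X, and let H = {g ∈ G : (g•x₀) E x₀} (the setwise stabiliser of the class of x₀; it is a subgroup of G). Then: (i) the orbit map g ↦ [g•x₀]_E induces a homeomorphism from the coset space G/H (quotient topology) onto the quotient X/E (quotient topology); (ii) H is open [resp. closed, Fσ, Borel] in G if and only if E is open [resp. closed, Fσ, Borel] in X × X; (iii) if moreover G and X are metrizable (hence compact Polish), then E and the left coset relation E_H of H on G (x E_H y iff x⁻¹·y ∈ H) are Borel bireducible. -/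
open Topology MeasureTheory Set Function
open scoped ENNReal

open Topology MeasureTheory Set Function
open scoped ENNReal

section Core
variable {Γ : Type*} [Group Γ] [TopologicalSpace Γ] [IsTopologicalGroup Γ]
  [CompactSpace Γ] [T2Space Γ]
  {B : Type*} [TopologicalSpace B] [T2Space B]

lemma aux_isQuotientMap {f : Γ → B} (hf : Continuous f) (hsurj : Surjective f) :
    IsQuotientMap f := (hf.isClosedMap).isQuotientMap hf hsurj

lemma aux_sat {Λ : Subgroup Γ} {f : Γ → B}
    (hfib : ∀ a b : Γ, f a = f b ↔ a⁻¹ * b ∈ Λ) (V : Set Γ)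
    (hV : ∀ (a : Γ) (lam : Λ), a ∈ V → a * (lam : Γ) ∈ V) :
    f ⁻¹' (f '' V) = V := by
  apply Subset.antisymm
  · rintro a ⟨a', ha', hfa⟩
    have hmem : a'⁻¹ * a ∈ Λ := (hfib a' a).1 hfa
    have : a' * ((⟨a'⁻¹ * a, hmem⟩ : Λ) : Γ) ∈ V := hV a' _ ha'
    simpa [mul_assoc] using this
  · exact subset_preimage_image f V

lemma aux_isOpenMap {Λ : Subgroup Γ} {f : Γ → B} (hf : Continuous f) (hsurj : Surjective f)
    (hfib : ∀ a b : Γ, f a = f b ↔ a⁻¹ * b ∈ Λ) : IsOpenMap f := by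
  intro U hU
  rw [← (aux_isQuotientMap hf hsurj).isOpen_preimage]
  have : f ⁻¹' (f '' U) = ⋃ lam : Λ, (fun a : Γ => a * (lam : Γ)⁻¹) ⁻¹' U := by
    ext a
    simp only [mem_preimage, mem_image, mem_iUnion]
    constructor
    · rintro ⟨u, hu, hueq⟩
      refine ⟨⟨u⁻¹ * a, (hfib u a).1 hueq⟩, ?_⟩
      simp only [mem_preimage]
      have : a * (u⁻¹ * a)⁻¹ = u := by group
      rw [this]; exact hu
    · rintro ⟨lam, h⟩
      refine ⟨a * (lam : Γ)⁻¹, h, ?_⟩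
      refine (hfib _ _).2 ?_
      have : (a * (lam : Γ)⁻¹)⁻¹ * a = (lam : Γ) := by group
      rw [this]; exact lam.2
  rw [this]
  exact isOpen_iUnion fun lam => hU.preimage (continuous_id.mul continuous_const)

/-- Key transfer lemma: if the preimage of `S` under the fibration `f` is Borel,
then `S` is Borel. -/
lemma aux_borel_transfer {Λ : Subgroup Γ} (hΛc : IsClosed (Λ : Set Γ))
    {f : Γ → B} (hf : Continuous f) (hsurj : Surjective f)
    (hfib : ∀ a b : Γ, f a = f b ↔ a⁻¹ * b ∈ Λ)
    {S : Set B} (hT : @MeasurableSet Γ (borel Γ) (f ⁻¹' S)) :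
    @MeasurableSet B (borel B) S := by
  letI mΓ : MeasurableSpace Γ := borel Γ
  haveI : BorelSpace Γ := ⟨rfl⟩
  haveI : CompactSpace Λ := isCompact_iff_compactSpace.mp hΛc.isCompact
  letI : MeasurableSpace Λ := borel Λ
  haveI : BorelSpace Λ := ⟨rfl⟩
  set K₀ : TopologicalSpace.PositiveCompacts Λ := ⟨⟨Set.univ, isCompact_univ⟩, by simp⟩
  set μ : Measure Λ := Measure.haarMeasure K₀ with hμ
  haveI : μ.Regular := Measure.regular_haarMeasure
  haveI : μ.IsMulLeftInvariant := Measure.isMulLeftInvariant_haarMeasure K₀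
  have hμuniv : μ Set.univ = 1 := by
    have := Measure.haarMeasure_self (K₀ := K₀)
    exact this
  haveI : IsFiniteMeasure μ := by
    constructor; rw [hμuniv]; exact ENNReal.one_lt_top
  -- slice function
  set F : Set Γ → Γ → ℝ≥0∞ := fun T a => μ ((fun lam : Λ => a * (lam : Γ)) ⁻¹' T) with hF
  -- measurability of slices
  have hslice_cont : ∀ a : Γ, Continuous (fun lam : Λ => a * (lam : Γ)) := fun a =>
    continuous_const.mul continuous_subtype_val
  have hslice_meas : ∀ (a : Γ) (T : Set Γ), MeasurableSet T →
      MeasurableSet ((fun lam : Λ => a * (lam : Γ)) ⁻¹' T) := fun a T hTm =>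
    ((hslice_cont a).measurable) hTm
  -- invariance
  have hinvF : ∀ (T : Set Γ) (a : Γ) (l₀ : Λ), F T (a * (l₀ : Γ)) = F T a := by
    intro T a l₀
    have hset : (fun lam : Λ => a * (l₀ : Γ) * (lam : Γ)) ⁻¹' T
        = (fun lam : Λ => l₀ * lam) ⁻¹' ((fun lam : Λ => a * (lam : Γ)) ⁻¹' T) := by
      ext lam; simp [mul_assoc]
    show μ _ = μ _
    rw [hset]
    exact measure_preimage_mul μ l₀ _
  have hsatlevel : ∀ (T : Set Γ) (c : ℝ≥0∞) (a : Γ) (lam : Λ),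
      a ∈ {x | c < F T x} → a * (lam : Γ) ∈ {x | c < F T x} := by
    intro T c a lam ha
    simpa [Set.mem_setOf_eq, hinvF T a lam] using ha
  have hopenmap : IsOpenMap f := aux_isOpenMap hf hsurj hfib
  -- main induction
  have main : ∀ T : Set Γ, MeasurableSet T → @Measurable Γ ℝ≥0∞ (MeasurableSpace.comap f (borel B)) _ (F T) := by
    have hgen : (mΓ : MeasurableSpace Γ)
        = MeasurableSpace.generateFrom {U : Set Γ | IsOpen U} := rfl
    refine MeasurableSpace.induction_on_inter
      (C := fun T _ => @Measurable Γ ℝ≥0∞ (MeasurableSpace.comap f (borel B)) _ (F T))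
      hgen isPiSystem_isOpen ?_ ?_ ?_ ?_
    · simpa [hF] using (@measurable_const ℝ≥0∞ Γ _ (MeasurableSpace.comap f (borel B)) 0)
    · intro U hU
      -- U open; F U is (MeasurableSpace.comap f (borel B))-measurable via lower semicontinuity and saturation
      refine @measurable_of_Ioi ℝ≥0∞ Γ _ _ _ (MeasurableSpace.comap f (borel B)) _ _ _ _ ?_
      intro c
      set V : Set Γ := (F U) ⁻¹' (Set.Ioi c) with hV
      have hVopen : IsOpen V := by
        rw [isOpen_iff_mem_nhds]
        intro a₀ ha₀
        have hslice_open : IsOpen ((fun lam : Λ => a₀ * (lam : Γ)) ⁻¹' U) :=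
          hU.preimage (hslice_cont a₀)
        have hc : c < μ ((fun lam : Λ => a₀ * (lam : Γ)) ⁻¹' U) := ha₀
        obtain ⟨C, hCsub, hCcomp, hCμ⟩ :=
          Measure.Regular.innerRegular (μ := μ) hslice_open _ hc
        -- tube lemma
        have hΩ : IsOpen {p : Γ × Λ | p.1 * (p.2 : Γ) ∈ U} :=
          hU.preimage (continuous_fst.mul (continuous_subtype_val.comp continuous_snd))
        have hsub : {a₀} ×ˢ C ⊆ {p : Γ × Λ | p.1 * (p.2 : Γ) ∈ U} := by
          rintro ⟨a, lam⟩ ⟨ha, hlam⟩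
          simp only [mem_singleton_iff] at ha
          subst ha
          exact hCsub hlam
        obtain ⟨u, v, hu, hv, hau, hCv, huv⟩ :=
          generalized_tube_lemma isCompact_singleton hCcomp hΩ hsub
        refine Filter.mem_of_superset (hu.mem_nhds (hau rfl)) ?_
        intro a ha
        have hCsub' : C ⊆ (fun lam : Λ => a * (lam : Γ)) ⁻¹' U := by
          intro lam hlam
          exact huv (Set.mk_mem_prod ha (hCv hlam))
        have : μ C ≤ μ ((fun lam : Λ => a * (lam : Γ)) ⁻¹' U) := measure_mono hCsub'
        exact lt_of_lt_of_le hCμ this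
      have hVsat : f ⁻¹' (f '' V) = V := aux_sat hfib V (hsatlevel U c)
      refine MeasurableSpace.measurableSet_comap.mpr ?_
      exact ⟨f '' V, MeasurableSpace.measurableSet_generateFrom (hopenmap V hVopen), hVsat⟩
    · intro T hTm ih
      have : F Tᶜ = fun a => μ Set.univ - F T a := by
        funext a
        have : (fun lam : Λ => a * (lam : Γ)) ⁻¹' Tᶜ
            = ((fun lam : Λ => a * (lam : Γ)) ⁻¹' T)ᶜ := rfl
        show μ _ = _
        rw [this, measure_compl (hslice_meas a T hTm) (measure_ne_top μ _)]
      rw [this]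
      exact Measurable.sub (@measurable_const ℝ≥0∞ Γ _ (MeasurableSpace.comap f (borel B)) _) ih
    · intro g hdisj hgm ih
      have : F (⋃ n, g n) = fun a => ∑' n, F (g n) a := by
        funext a
        show μ _ = _
        rw [Set.preimage_iUnion]
        exact measure_iUnion (fun i j hij => Disjoint.preimage _ (hdisj hij))
          (fun i => hslice_meas a (g i) (hgm i))
      rw [this]
      exact Measurable.ennreal_tsum ih
  -- apply to T = f ⁻¹' S
  have hFT := main (f ⁻¹' S) hT
  have hTeq : f ⁻¹' S = (F (f ⁻¹' S)) ⁻¹' (Set.Ioi 0) := by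
    ext a
    constructor
    · intro ha
      have : (fun lam : Λ => a * (lam : Γ)) ⁻¹' (f ⁻¹' S) = Set.univ := by
        ext lam
        simp only [mem_preimage, mem_univ, iff_true]
        have : f (a * (lam : Γ)) = f a := ((hfib a (a * lam)).2 (by simpa using lam.2)).symm
        rw [this]; exact ha
      show (0 : ℝ≥0∞) < _
      show (0 : ℝ≥0∞) < μ _
      rw [this, hμuniv]; exact zero_lt_one
    · intro ha
      by_contra hna
      have : (fun lam : Λ => a * (lam : Γ)) ⁻¹' (f ⁻¹' S) = ∅ := by
        ext lam
        simp only [mem_preimage, mem_empty_iff_false, iff_false]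
        intro hmem
        have : f (a * (lam : Γ)) = f a := ((hfib a (a * lam)).2 (by simpa using lam.2)).symm
        have hfa : f a ∈ S := this ▸ hmem
        exact hna hfa
      have h0 : F (f ⁻¹' S) a = 0 := by show μ _ = 0; rw [this]; exact measure_empty
      have : (0:ℝ≥0∞) < F (f ⁻¹' S) a := ha
      rw [h0] at this
      exact lt_irrefl _ this
  have hTin : MeasurableSet[MeasurableSpace.comap f (borel B)] (f ⁻¹' S) := by
    rw [hTeq]; exact hFT measurableSet_Ioi
  obtain ⟨S₀, hS₀, hpre⟩ := MeasurableSpace.measurableSet_comap.mp hTin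
  have : S₀ = S := Set.preimage_injective.mpr hsurj hpre
  rwa [← this]

end Core



lemma aux_section {G X : Type*} [TopologicalSpace G] [Nonempty G]
    [CompactSpace G] [T2Space G] [TopologicalSpace X] [T2Space X]
    [TopologicalSpace.MetrizableSpace G]
    (π : G → X) (hπc : Continuous π) (hπs : Function.Surjective π) :
    ∃ f : X → G, @Measurable X G (borel X) (borel G) f ∧ ∀ x, π (f x) = x := by
  classical
  letI : MetricSpace G := TopologicalSpace.metrizableSpaceMetric G
  letI : MeasurableSpace X := borel X
  haveI : BorelSpace X := ⟨rfl⟩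
  letI : MeasurableSpace G := borel G
  haveI : BorelSpace G := ⟨rfl⟩
  have hπcl : IsClosedMap π := hπc.isClosedMap
  set D : ℕ → G := TopologicalSpace.denseSeq G with hD
  have hdense : DenseRange D := TopologicalSpace.denseRange_denseSeq G
  set r : ℕ → ℝ := fun n => (1 / 2 : ℝ) ^ n with hr
  have hrpos : ∀ n, 0 < r n := fun n => pow_pos (by norm_num) n
  -- the state: a labelling function and pieces
  let kch : ℕ → ((X → ℕ) × (ℕ → Set G)) → X → ℕ := fun n st x =>
    if h : ∃ k, (π ⁻¹' {x} ∩ st.2 (st.1 x) ∩ Metric.closedBall (D k) (r n)).Nonempty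
    then Nat.find h else 0
  let step : ℕ → ((X → ℕ) × (ℕ → Set G)) → ((X → ℕ) × (ℕ → Set G)) := fun n st =>
    ⟨fun x => Nat.pair (st.1 x) (kch n st x),
     fun m => st.2 (Nat.unpair m).1 ∩ Metric.closedBall (D (Nat.unpair m).2) (r n)⟩
  let st : ℕ → ((X → ℕ) × (ℕ → Set G)) := fun n =>
    Nat.rec (⟨fun _ => 0, fun _ => Set.univ⟩) (fun n ih => step n ih) n
  have hst_succ : ∀ n, st (n + 1) = step n (st n) := fun n => rfl
  let Cs : ℕ → X → Set G := fun n x => π ⁻¹' {x} ∩ (st n).2 ((st n).1 x)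
  let sel : ℕ → X → G := fun n x => D (kch n (st n) x)
  -- basic rewriting of C (n+1)
  have hCsucc : ∀ n x, Cs (n + 1) x = Cs n x ∩ Metric.closedBall (sel n x) (r n) := by
    intro n x
    show π ⁻¹' {x} ∩ ((st n).2 (Nat.unpair (Nat.pair ((st n).1 x) (kch n (st n) x))).1
        ∩ Metric.closedBall (D (Nat.unpair (Nat.pair ((st n).1 x) (kch n (st n) x))).2) (r n))
      = (π ⁻¹' {x} ∩ (st n).2 ((st n).1 x)) ∩ Metric.closedBall (sel n x) (r n)
    rw [Nat.unpair_pair]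
    rw [Set.inter_assoc]
  -- invariants
  have hinv : ∀ n, (∀ m, IsClosed ((st n).2 m)) ∧ (∀ x, (Cs n x).Nonempty)
      ∧ Measurable ((st n).1) := by
    intro n
    induction n with
    | zero =>
      refine ⟨fun m => isClosed_univ, fun x => ?_, measurable_const⟩
      obtain ⟨g, hg⟩ := hπs x
      exact ⟨g, by simp [Cs, hg], by trivial⟩
    | succ n ih =>
      obtain ⟨hcl, hne, hmeas⟩ := ih
      -- existence of a witness for the dif
      have hex : ∀ x, ∃ k,
          (π ⁻¹' {x} ∩ (st n).2 ((st n).1 x) ∩ Metric.closedBall (D k) (r n)).Nonempty := by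
        intro x
        obtain ⟨a, ha⟩ := hne x
        obtain ⟨k, hk⟩ := hdense.exists_dist_lt a (hrpos n)
        refine ⟨k, a, ha, ?_⟩
        rw [Metric.mem_closedBall]
        exact le_of_lt hk
      have hkch_eq : ∀ x, kch n (st n) x = Nat.find (hex x) := by
        intro x
        show dite _ _ _ = _
        rw [dif_pos (hex x)]
      -- the closed images
      have hA : ∀ i k, IsClosed (π '' ((st n).2 i ∩ Metric.closedBall (D k) (r n))) :=
        fun i k => hπcl _ ((hcl i).inter Metric.isClosed_closedBall)
      have hcond : ∀ k x,
          (π ⁻¹' {x} ∩ (st n).2 ((st n).1 x) ∩ Metric.closedBall (D k) (r n)).Nonempty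
          ↔ x ∈ π '' ((st n).2 ((st n).1 x) ∩ Metric.closedBall (D k) (r n)) := by
        intro k x
        constructor
        · rintro ⟨a, ⟨ha1, ha2⟩, ha3⟩
          exact ⟨a, ⟨ha2, ha3⟩, ha1⟩
        · rintro ⟨a, ⟨ha2, ha3⟩, ha1⟩
          exact ⟨a, ⟨ha1, ha2⟩, ha3⟩
      have hkmeas : Measurable (fun x => kch n (st n) x) := by
        have : (fun x => kch n (st n) x) = fun x => Nat.find (hex x) := funext hkch_eq
        rw [this]
        apply measurable_find
        intro k
        have : {x | (π ⁻¹' {x} ∩ (st n).2 ((st n).1 x)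
            ∩ Metric.closedBall (D k) (r n)).Nonempty}
            = ⋃ i, ((st n).1 ⁻¹' {i}) ∩ (π '' ((st n).2 i ∩ Metric.closedBall (D k) (r n))) := by
          ext x
          simp only [Set.mem_setOf_eq, Set.mem_iUnion, Set.mem_inter_iff, Set.mem_preimage,
            Set.mem_singleton_iff]
          constructor
          · intro h
            exact ⟨(st n).1 x, rfl, (hcond k x).mp h⟩
          · rintro ⟨i, hi, hx⟩
            refine (hcond k x).mpr ?_
            rw [hi]
            exact hx
        rw [this]
        exact MeasurableSet.iUnion fun i =>
          (hmeas (MeasurableSet.singleton i)).inter (hA i _).measurableSet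
      refine ⟨?_, ?_, ?_⟩
      · intro m
        exact (hcl _).inter Metric.isClosed_closedBall
      · intro x
        rw [hCsucc n x]
        have h1 := Nat.find_spec (hex x)
        obtain ⟨a, ⟨ha1, ha2⟩, ha3⟩ := h1
        refine ⟨a, ⟨ha1, ha2⟩, ?_⟩
        show a ∈ Metric.closedBall (D (kch n (st n) x)) (r n)
        rw [hkch_eq x]
        exact ha3
      · show Measurable fun x => Nat.pair ((st n).1 x) (kch n (st n) x)
        exact (measurable_of_countable (fun q : ℕ × ℕ => Nat.pair q.1 q.2)).comp (hmeas.prodMk hkmeas)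
  -- decreasing and ball containment
  have hCsub : ∀ n x, Cs (n + 1) x ⊆ Cs n x := by
    intro n x
    rw [hCsucc n x]; exact Set.inter_subset_left
  have hCball : ∀ n x, Cs (n + 1) x ⊆ Metric.closedBall (sel n x) (r n) := by
    intro n x
    rw [hCsucc n x]; exact Set.inter_subset_right
  have hCmono : ∀ {m n : ℕ} (h : n ≤ m) (x : X), Cs m x ⊆ Cs n x := by
    intro m n h x
    induction m with
    | zero => rw [Nat.le_zero.mp h]
    | succ m ih =>
      rcases Nat.lt_or_ge n (m+1) with h' | h'
      · exact (hCsub m x).trans (ih (Nat.lt_succ_iff.mp h'))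
      · have : n = m + 1 := le_antisymm h h'
        rw [this]
  -- distance estimate
  have hdistsel : ∀ (n m : ℕ) (x : X), n ≤ m → dist (sel m x) (sel n x) ≤ r n + r m := by
    intro n m x hnm
    obtain ⟨a, ha⟩ := (hinv (m+1)).2.1 x
    have han : a ∈ Metric.closedBall (sel n x) (r n) :=
      hCball n x (hCmono (Nat.succ_le_succ hnm) x ha)
    have ham : a ∈ Metric.closedBall (sel m x) (r m) := hCball m x ha
    calc dist (sel m x) (sel n x) ≤ dist (sel m x) a + dist a (sel n x) := dist_triangle _ _ _
    _ ≤ r m + r n := add_le_add (by rw [dist_comm]; exact ham) han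
    _ = r n + r m := add_comm _ _
  have hcauchy : ∀ x, CauchySeq (fun n => sel n x) := by
    intro x
    rw [Metric.cauchySeq_iff']
    intro ε hε
    obtain ⟨N, hN⟩ := exists_pow_lt_of_lt_one (half_pos hε) (by norm_num : (1/2:ℝ) < 1)
    refine ⟨N, fun n hn => ?_⟩
    calc dist (sel n x) (sel N x) ≤ r N + r n := hdistsel N n x hn
    _ ≤ r N + r N := by
        refine add_le_add le_rfl ?_
        exact pow_le_pow_of_le_one (by norm_num) (by norm_num) hn
    _ < ε / 2 + ε / 2 := by
        have : r N < ε / 2 := hN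
        exact add_lt_add this this
    _ = ε := add_halves ε
  set f : X → G := fun x => Filter.limUnder Filter.atTop (fun n => sel n x) with hf
  have htendsto : ∀ x, Filter.Tendsto (fun n => sel n x) Filter.atTop (𝓝 (f x)) := by
    intro x
    obtain ⟨a, ha⟩ := cauchySeq_tendsto_of_complete (hcauchy x)
    have : f x = a := ha.limUnder_eq
    rw [this]; exact ha
  have hkmeas' : ∀ n, Measurable (fun x => kch n (st n) x) := by
    intro n
    have h := (hinv (n+1)).2.2
    have heq : (fun x => kch n (st n) x) = fun x => (Nat.unpair ((st (n+1)).1 x)).2 := by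
      funext x
      show kch n (st n) x = (Nat.unpair (Nat.pair ((st n).1 x) (kch n (st n) x))).2
      rw [Nat.unpair_pair]
    rw [heq]
    exact (measurable_from_top (f := fun m : ℕ => (Nat.unpair m).2)).comp h
  have hselmeas : ∀ n, Measurable (fun x => sel n x) :=
    fun n => measurable_from_top.comp (hkmeas' n)
  have hfmeas : Measurable f :=
    measurable_of_tendsto_metrizable' Filter.atTop hselmeas (tendsto_pi_nhds.mpr htendsto)
  refine ⟨f, hfmeas, ?_⟩
  intro x
  -- pick points in the fibers converging to f x
  have hmem : ∀ n, ∃ a, a ∈ Cs (n+1) x := fun n => (hinv (n+1)).2.1 x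
  choose a hamem using hmem
  have haf : Filter.Tendsto (fun n => a n) Filter.atTop (𝓝 (f x)) := by
    rw [tendsto_iff_dist_tendsto_zero]
    have hbound : ∀ n, dist (a n) (f x) ≤ r n + dist (sel n x) (f x) := by
      intro n
      have h1 : dist (a n) (sel n x) ≤ r n := hCball n x (hamem n)
      calc dist (a n) (f x) ≤ dist (a n) (sel n x) + dist (sel n x) (f x) := dist_triangle _ _ _
      _ ≤ r n + dist (sel n x) (f x) := add_le_add h1 le_rfl
    have hlim : Filter.Tendsto (fun n => r n + dist (sel n x) (f x)) Filter.atTop (𝓝 0) := by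
      have h1 : Filter.Tendsto r Filter.atTop (𝓝 0) := by
        refine tendsto_pow_atTop_nhds_zero_of_lt_one (by norm_num) (by norm_num)
      have h2 : Filter.Tendsto (fun n => dist (sel n x) (f x)) Filter.atTop (𝓝 0) := by
        rw [← tendsto_iff_dist_tendsto_zero]
        exact htendsto x
      simpa using h1.add h2
    refine squeeze_zero (fun n => dist_nonneg) hbound hlim
  have hπa : ∀ n, π (a n) = x := fun n => (hamem n).1
  have : Filter.Tendsto (fun n => π (a n)) Filter.atTop (𝓝 (π (f x))) :=
    (hπc.tendsto (f x)).comp haf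
  rw [funext hπa] at this
  exact tendsto_nhds_unique this tendsto_const_nhds


/-- A set is Fσ if it is a countable union of closed sets. -/
def IsFsigmaSet {α : Type*} [TopologicalSpace α] (s : Set α) : Prop :=
  ∃ F : ℕ → Set α, (∀ n, IsClosed (F n)) ∧ s = ⋃ n, F n

/-- `E` is Borel reducible to `F` if there is a Borel measurable map `f` with
`E x y ↔ F (f x) (f y)`. -/
def BorelReducible {α β : Type*} [TopologicalSpace α] [TopologicalSpace β]
    (E : α → α → Prop) (F : β → β → Prop) : Prop :=
  ∃ f : α → β, @Measurable α β (borel α) (borel β) f ∧ ∀ x y : α, E x y ↔ F (f x) (f y)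

/-- Suppose a compact Hausdorff group `G` acts continuously and transitively on a Hausdorff
space `X`, `E` is a `G`-invariant equivalence relation on `X`, `x₀ ∈ X` and `H` is the setwise
stabiliser of the class of `x₀`. Then: (i) the orbit map induces a homeomorphism `G ⧸ H ≃ₜ X/E`;
(ii) `H` is open/closed/Fσ/Borel in `G` iff `E` is such in `X × X`; (iii) if `G` and `X` are
moreover metrizable, then `E` and the left coset relation of `H` are Borel bireducible. -/
theorem stmt_5 {G X : Type*} [Group G] [TopologicalSpace G] [IsTopologicalGroup G]
    [CompactSpace G] [T2Space G] [TopologicalSpace X] [T2Space X]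
    [MulAction G X] [ContinuousSMul G X]
    (htrans : ∀ x y : X, ∃ g : G, g • x = y)
    (E : X → X → Prop) (hE : Equivalence E)
    (hinv : ∀ (g : G) (x y : X), E x y → E (g • x) (g • y))
    (x₀ : X) (H : Subgroup G) (hH : (H : Set G) = {g : G | E (g • x₀) x₀}) :
    (∃ φ : (G ⧸ H) ≃ₜ Quot E, ∀ g : G, φ (QuotientGroup.mk g) = Quot.mk E (g • x₀)) ∧
    (IsOpen (H : Set G) ↔ IsOpen {p : X × X | E p.1 p.2}) ∧
    (IsClosed (H : Set G) ↔ IsClosed {p : X × X | E p.1 p.2}) ∧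
    (IsFsigmaSet (H : Set G) ↔ IsFsigmaSet {p : X × X | E p.1 p.2}) ∧
    (@MeasurableSet G (borel G) (H : Set G) ↔
      @MeasurableSet (X × X) (borel (X × X)) {p : X × X | E p.1 p.2}) ∧
    (TopologicalSpace.MetrizableSpace G → TopologicalSpace.MetrizableSpace X →
      BorelReducible E (fun a b : G => a⁻¹ * b ∈ H) ∧
      BorelReducible (fun a b : G => a⁻¹ * b ∈ H) E) := by
  have memH : ∀ g : G, g ∈ H ↔ E (g • x₀) x₀ := fun g => by
    constructor
    · intro hg; exact (Set.ext_iff.mp hH g).mp hg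
    · intro hg; exact (Set.ext_iff.mp hH g).mpr hg
  set K : Subgroup G := MulAction.stabilizer G x₀ with hKdef
  have hKc : IsClosed (K : Set G) := by
    have : (K : Set G) = (fun g : G => g • x₀) ⁻¹' {x₀} := by
      ext g; simp [hKdef, MulAction.mem_stabilizer_iff]
    rw [this]
    exact isClosed_singleton.preimage (continuous_id.smul continuous_const)
  have hKH : ∀ g : G, g ∈ K → g ∈ H := by
    intro g hg
    rw [memH]
    have : g • x₀ = x₀ := hg
    rw [this]; exact hE.refl x₀
  set π : G → X := fun g => g • x₀ with hπdef
  have hπc : Continuous π := continuous_id.smul continuous_const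
  have hπs : Function.Surjective π := fun x => htrans x₀ x
  have hπfib : ∀ a b : G, π a = π b ↔ a⁻¹ * b ∈ K := by
    intro a b
    have h1 : (a⁻¹ * b ∈ K) ↔ b • x₀ = a • x₀ := by
      rw [hKdef, MulAction.mem_stabilizer_iff, mul_smul, inv_smul_eq_iff]
    constructor
    · intro h; exact h1.mpr h.symm
    · intro h; exact (h1.mp h).symm
  have key : ∀ a b : G, E (a • x₀) (b • x₀) ↔ a⁻¹ * b ∈ H := by
    intro a b
    rw [memH]
    constructor
    · intro h
      have h2 := hinv a⁻¹ _ _ h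
      rw [inv_smul_smul, ← mul_smul] at h2
      exact hE.symm h2
    · intro h
      have h2 := hinv a _ _ h
      have h3 : a * (a⁻¹ * b) = b := by group
      rw [← mul_smul, h3] at h2
      exact hE.symm h2
  set Pi2 : G × G → X × X := fun p => (p.1 • x₀, p.2 • x₀) with hPpdef
  have hPpc : Continuous Pi2 :=
    (continuous_fst.smul continuous_const).prodMk (continuous_snd.smul continuous_const)
  have hPps : Function.Surjective Pi2 := by
    rintro ⟨x, y⟩
    obtain ⟨a, ha⟩ := hπs x
    obtain ⟨b, hb⟩ := hπs y
    exact ⟨(a, b), by simp [hPpdef]; exact ⟨ha, hb⟩⟩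
  set Λ2 : Subgroup (G × G) := K.prod K with hΛ2def
  have hΛ2c : IsClosed (Λ2 : Set (G × G)) := by
    have : (Λ2 : Set (G × G)) = (K : Set G) ×ˢ (K : Set G) := rfl
    rw [this]; exact hKc.prod hKc
  have hPpfib : ∀ p q : G × G, Pi2 p = Pi2 q ↔ p⁻¹ * q ∈ Λ2 := by
    rintro ⟨a, b⟩ ⟨c, d⟩
    constructor
    · intro h
      have h1 : a • x₀ = c • x₀ := congrArg Prod.fst h
      have h2 : b • x₀ = d • x₀ := congrArg Prod.snd h
      exact ⟨(hπfib a c).mp h1, (hπfib b d).mp h2⟩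
    · rintro ⟨h1, h2⟩
      exact Prod.ext ((hπfib a c).mpr h1) ((hπfib b d).mpr h2)
  have hPpquot : IsQuotientMap Pi2 := aux_isQuotientMap hPpc hPps
  have hPpclosed : IsClosedMap Pi2 := hPpc.isClosedMap
  set R : Set (X × X) := {p : X × X | E p.1 p.2} with hRdef
  have hPppre : Pi2 ⁻¹' R = (fun p : G × G => p.1⁻¹ * p.2) ⁻¹' (H : Set G) := by
    ext ⟨a, b⟩
    exact key a b
  set s : G → X × X := fun g => (g • x₀, x₀) with hsdef
  have hsc : Continuous s := (continuous_id.smul continuous_const).prodMk continuous_const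
  have hspre : s ⁻¹' R = (H : Set G) := by
    ext g
    exact (memH g).symm
  have hm : Continuous (fun p : G × G => p.1⁻¹ * p.2) := continuous_fst.inv.mul continuous_snd
  refine ⟨?_, ?_, ?_, ?_, ?_, ?_⟩
  · -- (i) homeomorphism
    have hwd : ∀ a b : G, (QuotientGroup.leftRel H) a b →
        Quot.mk E (a • x₀) = Quot.mk E (b • x₀) := by
      intro a b hab
      rw [QuotientGroup.leftRel_apply] at hab
      exact Quot.sound ((key a b).mpr hab)
    let φfun : G ⧸ H → Quot E := Quotient.lift (fun g => Quot.mk E (g • x₀)) hwd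
    let sec : X → G := fun x => Classical.choose (hπs x)
    have hsec : ∀ x : X, sec x • x₀ = x := fun x => Classical.choose_spec (hπs x)
    have hwd2 : ∀ x y : X, E x y →
        (QuotientGroup.mk (sec x) : G ⧸ H) = QuotientGroup.mk (sec y) := by
      intro x y hxy
      rw [QuotientGroup.eq]
      refine (key (sec x) (sec y)).mp ?_
      rw [hsec x, hsec y]; exact hxy
    let ψ : Quot E → G ⧸ H := Quot.lift (fun x => QuotientGroup.mk (sec x)) hwd2
    have hφmk : ∀ g : G, φfun (QuotientGroup.mk g) = Quot.mk E (g • x₀) := fun _ => rfl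
    have hψmk : ∀ x : X, ψ (Quot.mk E x) = QuotientGroup.mk (sec x) := fun _ => rfl
    have hψπ : ∀ g : G, ψ (Quot.mk E (g • x₀)) = QuotientGroup.mk g := by
      intro g
      rw [hψmk (g • x₀)]
      rw [QuotientGroup.eq]
      refine hKH _ ?_
      refine (hπfib (sec (g • x₀)) g).mp ?_
      show sec (g • x₀) • x₀ = g • x₀
      exact hsec _
    have hlinv : Function.LeftInverse ψ φfun := by
      intro q
      induction q using Quotient.inductionOn with
      | h g => exact hψπ g
    have hrinv : Function.RightInverse ψ φfun := by
      intro q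
      induction q using Quot.inductionOn with
      | h x =>
        rw [hψmk x, hφmk (sec x), hsec x]
    have hcontφ : Continuous φfun := by
      refine isQuotientMap_quotient_mk'.continuous_iff.mpr ?_
      show Continuous fun g : G => Quot.mk E (g • x₀)
      exact continuous_quot_mk.comp hπc
    have hcontψ : Continuous ψ := by
      refine isQuotientMap_quot_mk.continuous_iff.mpr ?_
      have hπquot : IsQuotientMap π := aux_isQuotientMap hπc hπs
      refine hπquot.continuous_iff.mpr ?_
      have heq : (ψ ∘ Quot.mk E) ∘ π = (QuotientGroup.mk : G → G ⧸ H) :=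
        funext fun g => hψπ g
      rw [heq]
      exact continuous_quotient_mk'
    exact ⟨⟨⟨φfun, ψ, hlinv, hrinv⟩, hcontφ, hcontψ⟩, fun g => hφmk g⟩
  · -- open
    constructor
    · intro h
      have : IsOpen (Pi2 ⁻¹' R) := by rw [hPppre]; exact h.preimage hm
      exact hPpquot.isOpen_preimage.mp this
    · intro h
      rw [← hspre]; exact h.preimage hsc
  · -- closed
    constructor
    · intro h
      have : IsClosed (Pi2 ⁻¹' R) := by rw [hPppre]; exact h.preimage hm
      exact hPpquot.isClosed_preimage.mp this
    · intro h
      rw [← hspre]; exact h.preimage hsc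
  · -- Fσ
    constructor
    · rintro ⟨Fn, hFcl, hFeq⟩
      refine ⟨fun n => Pi2 '' ((fun p : G × G => p.1⁻¹ * p.2) ⁻¹' (Fn n)),
        fun n => hPpclosed _ ((hFcl n).preimage hm), ?_⟩
      have h1 : R = Pi2 '' (Pi2 ⁻¹' R) := (Set.image_preimage_eq R hPps).symm
      rw [h1, hPppre, hFeq, Set.preimage_iUnion, Set.image_iUnion]
    · rintro ⟨Cn, hCcl, hCeq⟩
      exact ⟨fun n => s ⁻¹' Cn n, fun n => (hCcl n).preimage hsc,
        by rw [← hspre, hCeq, Set.preimage_iUnion]⟩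
  · -- Borel
    constructor
    · intro h
      refine aux_borel_transfer hΛ2c hPpc hPps hPpfib (S := R) ?_
      rw [hPppre]
      letI : MeasurableSpace G := borel G
      haveI : BorelSpace G := ⟨rfl⟩
      letI : MeasurableSpace (G × G) := borel (G × G)
      haveI : BorelSpace (G × G) := ⟨rfl⟩
      exact hm.measurable h
    · intro h
      rw [← hspre]
      letI : MeasurableSpace G := borel G
      haveI : BorelSpace G := ⟨rfl⟩
      letI : MeasurableSpace (X × X) := borel (X × X)
      haveI : BorelSpace (X × X) := ⟨rfl⟩
      exact hsc.measurable h
  · -- (iii)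
    intro hmG _hmX
    constructor
    · obtain ⟨f, hfm, hfsec⟩ := aux_section π hπc hπs
      refine ⟨f, hfm, ?_⟩
      intro x y
      have h1 : E x y ↔ E (f x • x₀) (f y • x₀) := by
        rw [show f x • x₀ = x from hfsec x, show f y • x₀ = y from hfsec y]
      rw [h1]
      exact key (f x) (f y)
    · refine ⟨π, ?_, ?_⟩
      · letI : MeasurableSpace G := borel G
        haveI : BorelSpace G := ⟨rfl⟩
        letI : MeasurableSpace X := borel X
        haveI : BorelSpace X := ⟨rfl⟩
        exact hπc.measurable
      · intro a b
        exact (key a b).symm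
end

section
/- Let G be a compact Hausdorff topological group acting continuously on a Hausdorff space X, let H ≤ G, and let E = E_H be the orbit equivalence relation of H on X. Then E is closed in X × X if and only if every E-class (i.e. every H-orbit) is closed in X. -/
/-- If a compact Hausdorff group `G` acts continuously on a Hausdorff space `X` and `H ≤ G`,
then the orbit equivalence relation of `H` on `X` is closed in `X × X` if and only if every
`H`-orbit is closed in `X`. -/
theorem stmt_7 {G X : Type*} [Group G] [TopologicalSpace G] [IsTopologicalGroup G]
    [CompactSpace G] [T2Space G] [TopologicalSpace X] [T2Space X]
    [MulAction G X] [ContinuousSMul G X] (H : Subgroup G) :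
    IsClosed {p : X × X | ∃ h ∈ H, h • p.1 = p.2} ↔
      ∀ x : X, IsClosed {y : X | ∃ h ∈ H, h • x = y} := by
  constructor
  · intro hE x
    have hset : {y : X | ∃ h ∈ H, h • x = y}
        = (fun y => ((x : X), y)) ⁻¹' {p : X × X | ∃ h ∈ H, h • p.1 = p.2} := rfl
    rw [hset]
    exact hE.preimage (by continuity)
  · intro horb
    set K : Set G := closure (H : Set G) with hK
    have hsub : ∀ x : X, ∀ g ∈ K, ∃ h ∈ H, h • x = g • x := by
      intro x g hg
      have hmap : Continuous fun g : G => g • x := continuous_id.smul continuous_const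
      have hmem : g • x ∈ closure ((fun g : G => g • x) '' (H : Set G)) :=
        image_closure_subset_closure_image hmap ⟨g, hg, rfl⟩
      have hcl : IsClosed ((fun g : G => g • x) '' (H : Set G)) := by
        have : ((fun g : G => g • x) '' (H : Set G)) = {y | ∃ h ∈ H, h • x = y} := by
          ext y; simp [Set.mem_image]
        rw [this]; exact horb x
      rw [hcl.closure_eq] at hmem
      exact hmem
    have hEeq : {p : X × X | ∃ h ∈ H, h • p.1 = p.2}
        = Prod.snd '' {q : G × (X × X) | q.1 ∈ K ∧ q.1 • q.2.1 = q.2.2} := by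
      ext p
      constructor
      · rintro ⟨h, hh, he⟩
        exact ⟨(h, p), ⟨subset_closure hh, he⟩, rfl⟩
      · rintro ⟨⟨g, q⟩, ⟨hg, he⟩, rfl⟩
        rcases hsub q.1 g hg with ⟨h, hh, he'⟩
        exact ⟨h, hh, he'.trans he⟩
    rw [hEeq]
    apply isClosedMap_snd_of_compactSpace
    exact IsClosed.inter (isClosed_closure.preimage continuous_fst)
      (isClosed_eq (continuous_fst.smul (continuous_fst.comp continuous_snd))
        (continuous_snd.comp continuous_snd))
end

section
/- Let G be a compact Hausdorff topological group acting continuously on a Polish space X, let H be a normal subgroup of G, and let E = E_H be the orbit equivalence relation of H on X. Then E is closed in X × X if and only if E is smooth. -/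
open Topology Filter Set

lemma notMeagre_of_isOpen' {Y : Type*} [TopologicalSpace Y] [BaireSpace Y] {U : Set Y}
    (h : IsOpen U) (hn : U.Nonempty) : ¬ IsMeagre U := by
  intro hm
  rw [IsMeagre] at hm
  obtain ⟨x, hx⟩ := hn
  obtain ⟨y, hy, hyU⟩ := (dense_of_mem_residual hm).exists_mem_open h ⟨x, hx⟩
  exact hy hyU

lemma zeroOne' {Y : Type*} [TopologicalSpace Y] [BaireSpace Y] {ι : Type*} (φ : ι → Y ≃ₜ Y)
    {A : Set Y} (hA : BaireMeasurableSet A) (hinv : ∀ i, (φ i) ⁻¹' A = A)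
    (hdense : ∀ y : Y, Dense (Set.range fun i => φ i y)) :
    IsMeagre A ∨ IsMeagre Aᶜ := by
  obtain ⟨U, hU, hAU⟩ := hA.residualEq_isOpen
  obtain ⟨V, hV, hAV⟩ := hA.compl.residualEq_isOpen
  rcases U.eq_empty_or_nonempty with rfl | hUne
  · left
    rw [IsMeagre]
    refine Filter.mem_of_superset hAU ?_
    intro x hx
    simp only [mem_setOf_eq, mem_empty_iff_false, eq_iff_iff, iff_false] at hx
    exact fun h => hx.mp h
  rcases V.eq_empty_or_nonempty with rfl | hVne
  · right
    rw [IsMeagre]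
    refine Filter.mem_of_superset hAV ?_
    intro x hx
    simp only [mem_setOf_eq, mem_empty_iff_false, eq_iff_iff, iff_false] at hx
    exact fun h => hx.mp h
  exfalso
  obtain ⟨y, hyU⟩ := hUne
  obtain ⟨_, ⟨i, rfl⟩, hiV⟩ := (hdense y).exists_mem_open hV hVne
  set W : Set Y := U ∩ (φ i) ⁻¹' V with hW
  have hWopen : IsOpen W := hU.inter (hV.preimage (φ i).continuous)
  have hWne : W.Nonempty := ⟨y, hyU, hiV⟩
  have hR : {x | (x ∈ A) = (x ∈ U)} ∩ (φ i) ⁻¹' {x | (x ∈ Aᶜ) = (x ∈ V)} ∈ residual Y := by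
    refine Filter.inter_mem hAU ?_
    exact tendsto_residual_of_isOpenMap (φ i).continuous (φ i).isOpenMap hAV
  have hdis : W ∩ ({x | (x ∈ A) = (x ∈ U)} ∩ (φ i) ⁻¹' {x | (x ∈ Aᶜ) = (x ∈ V)}) = ∅ := by
    ext x
    simp only [mem_inter_iff, mem_preimage, mem_setOf_eq, mem_empty_iff_false, iff_false, not_and]
    rintro ⟨hxU, hxV⟩ h1 h2
    have hxA : x ∈ A := (iff_of_eq h1).mpr hxU
    have hA1 : φ i x ∈ A := by rw [← hinv i] at hxA; exact hxA
    have hA2 : φ i x ∈ Aᶜ := (iff_of_eq h2).mpr hxV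
    exact hA2 hA1
  apply notMeagre_of_isOpen' hWopen hWne
  rw [IsMeagre]
  refine Filter.mem_of_superset hR ?_
  intro x hx hxW
  exact (hdis ▸ mem_inter hxW hx : x ∈ (∅ : Set Y))

/-- If a compact Hausdorff group `G` acts continuously on a Polish space `X` and `H` is a normal
subgroup of `G`, then the orbit equivalence relation of `H` on `X` is closed in `X × X` if and
only if it is smooth. -/
theorem stmt_8 {G X : Type*} [Group G] [TopologicalSpace G] [IsTopologicalGroup G]
    [CompactSpace G] [T2Space G] [TopologicalSpace X] [PolishSpace X]
    [MulAction G X] [ContinuousSMul G X] (H : Subgroup G) [H.Normal] :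
    IsClosed {p : X × X | ∃ h ∈ H, h • p.1 = p.2} ↔
      IsSmoothRel (fun x y : X => ∃ h ∈ H, h • x = y) := by
  classical
  letI : MeasurableSpace X := borel X
  haveI : BorelSpace X := ⟨rfl⟩
  have hborelPi : borel (ℕ → Bool) = (inferInstance : MeasurableSpace (ℕ → Bool)) :=
    (BorelSpace.measurable_eq (α := ℕ → Bool)).symm
  constructor
  · -- closed → smooth
    intro hclosed
    obtain ⟨b, hbc, hbne, hbasis⟩ := TopologicalSpace.exists_countable_basis X
    obtain ⟨U, hU⟩ := Set.Countable.exists_eq_range (hbc.insert ∅) (Set.insert_nonempty _ _)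
    have hUopen : ∀ n, IsOpen (U n) := by
      intro n
      have : U n ∈ insert ∅ b := hU ▸ Set.mem_range_self n
      rcases this with h | h
      · rw [h]; exact isOpen_empty
      · exact hbasis.isOpen h
    set sat : ℕ → Set X := fun n => {x | ∃ h ∈ H, h • x ∈ U n} with hsatdef
    have hsatopen : ∀ n, IsOpen (sat n) := by
      intro n
      have : sat n = ⋃ h : H, (fun x => (h : G) • x) ⁻¹' U n := by
        ext x
        simp only [hsatdef, mem_setOf_eq, mem_iUnion, mem_preimage, Subtype.exists, exists_prop]
      rw [this]
      exact isOpen_iUnion fun h => (hUopen n).preimage (continuous_const_smul _)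
    refine ⟨fun x n => if x ∈ sat n then true else false, ?_, ?_⟩
    · rw [hborelPi]
      exact measurable_pi_iff.mpr fun n =>
        Measurable.ite (hsatopen n).measurableSet measurable_const measurable_const
    · intro x y
      constructor
      · rintro ⟨h, hh, rfl⟩
        funext n
        have hiff : x ∈ sat n ↔ h • x ∈ sat n := by
          constructor
          · rintro ⟨h', hh', hin⟩
            exact ⟨h' * h⁻¹, H.mul_mem hh' (H.inv_mem hh), by
              rw [mul_smul, inv_smul_smul]; exact hin⟩
          · rintro ⟨h', hh', hin⟩
            exact ⟨h' * h, H.mul_mem hh' hh, by rw [mul_smul]; exact hin⟩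
        simp only [hiff]
      · intro hfeq
        have hiff : ∀ n, (x ∈ sat n ↔ y ∈ sat n) := by
          intro n
          have := congrFun hfeq n
          by_cases hx : x ∈ sat n <;> by_cases hy : y ∈ sat n <;>
            simp [hx, hy] at this ⊢
        -- the H-orbit of x is closed
        have horbclosed : IsClosed {z : X | ∃ h ∈ H, h • x = z} := by
          have : {z : X | ∃ h ∈ H, h • x = z} =
              Prod.mk x ⁻¹' {p : X × X | ∃ h ∈ H, h • p.1 = p.2} := rfl
          rw [this]
          exact hclosed.preimage (Continuous.prodMk_right x)
        have hyc : y ∈ closure {z : X | ∃ h ∈ H, h • x = z} := by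
          rw [mem_closure_iff]
          intro o ho hyo
          obtain ⟨v, hvb, hyv, hvo⟩ := hbasis.exists_subset_of_mem_open hyo ho
          have : v ∈ insert ∅ b := Set.mem_insert_of_mem _ hvb
          rw [hU] at this
          obtain ⟨n, rfl⟩ := this
          have hysat : y ∈ sat n := ⟨1, H.one_mem, by rw [one_smul]; exact hyv⟩
          obtain ⟨h, hh, hin⟩ := (hiff n).mpr hysat
          exact ⟨h • x, hvo hin, h, hh, rfl⟩
        rwa [horbclosed.closure_eq] at hyc
  · -- smooth → closed
    rintro ⟨f, hf, hE⟩
    rw [hborelPi] at hf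
    set K := H.topologicalClosure with hKdef
    have hHK : H ≤ K := Subgroup.le_topologicalClosure H
    have hKc : IsClosed (K : Set G) := Subgroup.isClosed_topologicalClosure H
    have key : ∀ x : X, ∀ k ∈ K, ∃ h ∈ H, h • x = k • x := by
      by_contra hcon
      push_neg at hcon
      obtain ⟨x0, k0, hk0K, hk0⟩ := hcon
      set Y : Set X := (fun g : G => g • x0) '' (K : Set G) with hYdef
      have hYcomp : IsCompact Y := hKc.isCompact.image (continuous_id.smul continuous_const)
      haveI : CompactSpace Y := isCompact_iff_compactSpace.mp hYcomp
      haveI : Nonempty Y := ⟨⟨x0, ⟨1, K.one_mem, one_smul G x0⟩⟩⟩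
      have hmaps : ∀ k ∈ K, ∀ y ∈ Y, k • y ∈ Y := by
        rintro k hk y ⟨g, hg, rfl⟩
        exact ⟨k * g, K.mul_mem hk hg, by simp [mul_smul]⟩
      let eK : ↥(K : Set G) → (Y ≃ₜ Y) := fun k =>
        { toFun := fun y => ⟨(k : G) • (y : X), hmaps k k.2 y y.2⟩
          invFun := fun y => ⟨(k : G)⁻¹ • (y : X), hmaps _ (K.inv_mem k.2) y y.2⟩
          left_inv := fun y => Subtype.ext (inv_smul_smul (k : G) (y : X))
          right_inv := fun y => Subtype.ext (smul_inv_smul (k : G) (y : X))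
          continuous_toFun := Continuous.subtype_mk (continuous_const.smul continuous_subtype_val) _
          continuous_invFun :=
            Continuous.subtype_mk (continuous_const.smul continuous_subtype_val) _ }
      have horb : ∀ y : Y, Dense (Set.range fun h : H => eK ⟨(h : G), hHK h.2⟩ y) := by
        intro y
        rw [dense_iff_inter_open]
        rintro W hW hWne
        obtain ⟨W0, hW0, rfl⟩ := isOpen_induced_iff.mp hW
        obtain ⟨z, hz⟩ := hWne
        obtain ⟨gy, hgy, hgyx0⟩ := y.2
        have hgyx : gy • x0 = (y : X) := hgyx0
        have hsub : Y ⊆ closure ((fun g : G => g • (y : X)) '' (H : Set G)) := by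
          rintro w ⟨g, hg, rfl⟩
          have hw : g • x0 = (g * gy⁻¹) • (y : X) := by
            rw [mul_smul, ← hgyx, inv_smul_smul]
          have hmem : (g * gy⁻¹) ∈ closure (H : Set G) := by
            rw [← Subgroup.topologicalClosure_coe]
            exact K.mul_mem hg (K.inv_mem hgy)
          show g • x0 ∈ closure ((fun g : G => g • (y : X)) '' (H : Set G))
          rw [hw]
          exact image_closure_subset_closure_image
            (continuous_id.smul continuous_const) ⟨g * gy⁻¹, hmem, rfl⟩
        obtain ⟨w, hwW0, hworb⟩ := mem_closure_iff.mp (hsub z.2) W0 hW0 hz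
        obtain ⟨h, hh, rfl⟩ := hworb
        refine ⟨eK ⟨h, hHK hh⟩ y, hwW0, ⟨⟨h, hh⟩, rfl⟩⟩
      -- the sets A n
      have hfn : ∀ n, MeasurableSet {x : X | f x n = true} := fun n =>
        ((measurable_pi_apply n).comp hf) (measurableSet_singleton true)
      set A : ℕ → Set Y := fun n => Subtype.val ⁻¹' {x : X | f x n = true} with hAdef
      have hAbm : ∀ n, BaireMeasurableSet (A n) := fun n =>
        (measurable_subtype_coe (hfn n)).baireMeasurableSet
      have hinv : ∀ n, ∀ h : H, (eK ⟨(h : G), hHK h.2⟩) ⁻¹' A n = A n := by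
        intro n h
        ext y
        have hfeq : f (y : X) = f ((h : G) • (y : X)) :=
          (hE (y : X) ((h : G) • (y : X))).mp ⟨(h : G), h.2, rfl⟩
        simp only [hAdef, mem_preimage]
        show f ((h : G) • (y : X)) n = true ↔ f (y : X) n = true
        rw [← hfeq]
      have h01 : ∀ n, IsMeagre (A n) ∨ IsMeagre (A n)ᶜ := fun n =>
        zeroOne' (fun h : H => eK ⟨(h : G), hHK h.2⟩) (hAbm n) (hinv n) horb
      set C : Set Y := ⋂ n, if IsMeagre (A n) then (A n)ᶜ else (A n) with hCdef
      have hC : C ∈ residual Y := by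
        refine (countable_iInter_mem).mpr fun n => ?_
        by_cases hm : IsMeagre (A n)
        · rw [if_pos hm]; exact hm
        · rw [if_neg hm]
          have := (h01 n).resolve_left hm
          rw [IsMeagre, compl_compl] at this
          exact this
      have hCval : ∀ y ∈ C, ∀ z ∈ C, f (y : X) = f (z : X) := by
        intro y hy z hz
        funext n
        have hyn := mem_iInter.mp hy n
        have hzn := mem_iInter.mp hz n
        by_cases hm : IsMeagre (A n)
        · rw [if_pos hm] at hyn hzn
          have h1 : ¬ f (y : X) n = true := hyn
          have h2 : ¬ f (z : X) n = true := hzn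
          rw [Bool.not_eq_true] at h1 h2
          rw [h1, h2]
        · rw [if_neg hm] at hyn hzn
          have h1 : f (y : X) n = true := hyn
          have h2 : f (z : X) n = true := hzn
          rw [h1, h2]
      obtain ⟨y0, hy0⟩ : C.Nonempty := (dense_of_mem_residual hC).nonempty
      by_cases hKH : ∀ k ∈ K, ∃ h ∈ H, h • (y0 : X) = k • (y0 : X)
      · -- contradiction with hk0 directly
        obtain ⟨gy, hgy, hgyx0⟩ := y0.2
        have hgyx : gy • x0 = (y0 : X) := hgyx0
        obtain ⟨h1, hh1, h1eq⟩ := hKH gy⁻¹ (K.inv_mem hgy)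
        obtain ⟨h2, hh2, h2eq⟩ := hKH (k0 * gy⁻¹) (K.mul_mem hk0K (K.inv_mem hgy))
        have hx0 : (h1 : G) • (y0 : X) = x0 := by
          rw [h1eq, ← hgyx, inv_smul_smul]
        refine hk0 (h2 * h1⁻¹) (H.mul_mem hh2 (H.inv_mem hh1)) ?_
        have hy0x : (y0 : X) = h1⁻¹ • x0 := by rw [← hx0, inv_smul_smul]
        calc (h2 * h1⁻¹) • x0 = h2 • (h1⁻¹ • x0) := by rw [mul_smul]
          _ = h2 • (y0 : X) := by rw [← hy0x]
          _ = (k0 * gy⁻¹) • (y0 : X) := h2eq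
          _ = k0 • (gy⁻¹ • (y0 : X)) := by rw [mul_smul]
          _ = k0 • x0 := by rw [← hgyx, inv_smul_smul]
      · push_neg at hKH
        obtain ⟨k1, hk1K, hk1⟩ := hKH
        set ek1 : Y ≃ₜ Y := eK ⟨k1, hk1K⟩ with hek1
        have hD : (ek1 '' C) ∈ residual Y := by
          rw [← Homeomorph.residual_map_eq ek1, mem_map,
            Set.preimage_image_eq _ ek1.injective]
          exact hC
        obtain ⟨z, hzC, hzD⟩ : (C ∩ ek1 '' C).Nonempty :=
          (dense_of_mem_residual (Filter.inter_mem hC hD)).nonempty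
        obtain ⟨w, hwC, hwz⟩ := hzD
        obtain ⟨a, ha, haeq⟩ := (hE (y0 : X) (z : X)).mpr (hCval y0 hy0 z hzC)
        obtain ⟨b, hb, hbeq⟩ := (hE (y0 : X) (w : X)).mpr (hCval y0 hy0 w hwC)
        have hzw : (z : X) = k1 • (w : X) := by rw [← hwz]; rfl
        set c := k1 * b * k1⁻¹ with hc
        have hcH : c ∈ H := Subgroup.Normal.conj_mem ‹H.Normal› b hb k1
        refine hk1 (c⁻¹ * a) (H.mul_mem (H.inv_mem hcH) ha) ?_
        have hkey : (a : G) • (y0 : X) = (c * k1) • (y0 : X) := by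
          rw [haeq, hzw, ← hbeq, ← mul_smul, hc]
          congr 1
          group
        rw [mul_smul, hkey, ← mul_smul, inv_mul_cancel_left]
    -- now rewrite the set and conclude closedness
    have hset : {p : X × X | ∃ h ∈ H, h • p.1 = p.2} = {p : X × X | ∃ k ∈ K, k • p.1 = p.2} := by
      ext p
      constructor
      · rintro ⟨h, hh, hp⟩; exact ⟨h, hHK hh, hp⟩
      · rintro ⟨k, hk, hp⟩
        obtain ⟨h, hh, hh'⟩ := key p.1 k hk
        exact ⟨h, hh, by rw [hh', hp]⟩
    rw [hset]
    haveI : CompactSpace (K : Set G) := isCompact_iff_compactSpace.mp hKc.isCompact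
    have himg : {p : X × X | ∃ k ∈ K, k • p.1 = p.2} =
        Prod.snd '' {q : ↥(K : Set G) × (X × X) | (q.1 : G) • q.2.1 = q.2.2} := by
      ext p
      constructor
      · rintro ⟨k, hk, hp⟩
        exact ⟨⟨⟨k, hk⟩, p⟩, hp, rfl⟩
      · rintro ⟨⟨k, q⟩, hq, rfl⟩
        exact ⟨(k : G), k.2, hq⟩
    rw [himg]
    refine isClosedMap_snd_of_compactSpace _ ?_
    exact isClosed_eq
      ((continuous_subtype_val.comp continuous_fst).smul
        (continuous_fst.comp continuous_snd))
      (continuous_snd.comp continuous_snd)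
end

section
/- Let A, B, C be compact Polish spaces, let Q be a set, and suppose we are given continuous surjections p : A → B and q : A → C together with functions φ : B → Q and ψ : C → Q satisfying φ ∘ p = ψ ∘ q. Let E_B be the equivalence relation on B defined by x E_B y iff φ(x) = φ(y), and define E_C on C analogously from ψ. Then: (i) E_B is closed [resp. clopen, Fσ, Borel, analytic] in B × B if and only if E_C is closed [resp. clopen, Fσ, Borel, analytic] in C × C; (ii) E_B and E_C are Borel bireducible. -/
set_option linter.unusedSectionVars false
set_option linter.unusedVariables false
set_option maxHeartbeats 1000000

open Set

/-- Iterated minimization values for the "lexicographic" selection. -/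
noncomputable def lexT {A B : Type*} (p : A → B) (h : A → ℕ → ℝ) : ℕ → B → ℝ
  | n => fun b =>
      sInf ((fun a => h a n) '' {a | p a = b ∧ ∀ m, ∀ _ : m < n, h a m = lexT p h m b})
termination_by n => n

/-- The nested compact sets of the lexicographic selection scheme. -/
def lexK {A B : Type*} (p : A → B) (h : A → ℕ → ℝ) (n : ℕ) (b : B) : Set A :=
  {a | p a = b ∧ ∀ m, ∀ _ : m < n, h a m = lexT p h m b}

theorem lexT_eq {A B : Type*} (p : A → B) (h : A → ℕ → ℝ) (n : ℕ) (b : B) :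
    lexT p h n b = sInf ((fun a => h a n) '' lexK p h n b) := by
  rw [lexT]; rfl

section lexfacts

variable {A B : Type*} [TopologicalSpace A] [CompactSpace A] [TopologicalSpace B]
  {p : A → B} {h : A → ℕ → ℝ}

theorem lexK_mono {n m : ℕ} (hnm : n ≤ m) (b : B) : lexK p h m b ⊆ lexK p h n b :=
  fun a ha => ⟨ha.1, fun k hk => ha.2 k (lt_of_lt_of_le hk hnm)⟩

theorem lexK_isClosed (hp : Continuous p) (hh : ∀ n, Continuous fun a => h a n)
    (n : ℕ) (b : B) [T2Space B] : IsClosed (lexK p h n b) := by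
  have : lexK p h n b =
      (p ⁻¹' {b}) ∩ ⋂ (m : ℕ) (_ : m < n), {a | h a m = lexT p h m b} := by
    ext a; simp [lexK, Set.mem_iInter, Set.mem_setOf_eq]
  rw [this]
  exact (isClosed_singleton.preimage hp).inter
    (isClosed_iInter fun m => isClosed_iInter fun _ => isClosed_eq (hh m) continuous_const)

theorem lexK_isCompact (hp : Continuous p) (hh : ∀ n, Continuous fun a => h a n)
    (n : ℕ) (b : B) [T2Space B] : IsCompact (lexK p h n b) :=
  (lexK_isClosed hp hh n b).isCompact

/-- existence of a minimizer at each stage -/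
theorem lexK_exists_min (hp : Continuous p) (hh : ∀ n, Continuous fun a => h a n)
    [T2Space B] {b : B} (hb : ∃ a, p a = b) (n : ℕ) :
    ∃ a ∈ lexK p h n b, h a n = lexT p h n b ∧ a ∈ lexK p h (n + 1) b := by
  induction n with
  | zero =>
      obtain ⟨a0, ha0⟩ := hb
      have hne : (lexK p h 0 b).Nonempty := ⟨a0, ha0, by omega⟩
      obtain ⟨a, haK, hmin⟩ := (lexK_isCompact hp hh 0 b).exists_isMinOn hne (hh 0).continuousOn
      have hval : h a 0 = lexT p h 0 b := by
        rw [lexT_eq]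
        refine le_antisymm (le_csInf (hne.image _) ?_) (csInf_le ?_ ⟨a, haK, rfl⟩)
        · rintro y ⟨a', ha', rfl⟩; exact hmin ha'
        · exact (((lexK_isCompact hp hh 0 b).image (hh 0)).bddBelow)
      exact ⟨a, haK, hval, haK.1, fun m hm => by
        interval_cases m
        exact hval⟩
  | succ n ih =>
      obtain ⟨_, _, _, haK⟩ := ih
      have hne : (lexK p h (n + 1) b).Nonempty := ⟨_, haK⟩
      obtain ⟨a, haK', hmin⟩ :=
        (lexK_isCompact hp hh (n + 1) b).exists_isMinOn hne (hh (n + 1)).continuousOn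
      have hval : h a (n + 1) = lexT p h (n + 1) b := by
        rw [lexT_eq]
        refine le_antisymm (le_csInf (hne.image _) ?_) (csInf_le ?_ ⟨a, haK', rfl⟩)
        · rintro y ⟨a', ha', rfl⟩; exact hmin ha'
        · exact (((lexK_isCompact hp hh (n + 1) b).image (hh (n + 1))).bddBelow)
      refine ⟨a, haK', hval, haK'.1, fun m hm => ?_⟩
      rcases Nat.lt_succ_iff_lt_or_eq.1 hm with hm' | rfl
      · exact haK'.2 m hm'
      · exact hval

theorem lexT_le (hp : Continuous p) (hh : ∀ n, Continuous fun a => h a n)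
    [T2Space B] {b : B} {n : ℕ} {a : A} (ha : a ∈ lexK p h n b) :
    lexT p h n b ≤ h a n := by
  rw [lexT_eq]
  exact csInf_le (((lexK_isCompact hp hh n b).image (hh n)).bddBelow) ⟨a, ha, rfl⟩

end lexfacts

section lexmeas

open Filter Topology

variable {A B : Type*} [TopologicalSpace A] [CompactSpace A] [PolishSpace A]
  [TopologicalSpace B] [PolishSpace B]
  {p : A → B} {h : A → ℕ → ℝ}

theorem lexT_measurable (hp : Continuous p) (hps : Function.Surjective p)
    (hh : ∀ n, Continuous fun a => h a n) (n : ℕ) :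
    @Measurable B ℝ (borel B) _ (lexT p h n) := by
  letI : MeasurableSpace B := borel B
  haveI : BorelSpace B := ⟨rfl⟩
  induction n using Nat.strong_induction_on with
  | _ n IH =>
    apply measurable_of_Iic
    intro r
    -- the closed sets W k
    set ε : ℕ → ℝ := fun k => ((k : ℝ) + 1)⁻¹ with hε
    have hεpos : ∀ k, 0 < ε k := fun k => by positivity
    have hεlim : Tendsto ε atTop (𝓝 0) := tendsto_one_div_add_atTop_nhds_zero_nat.congr (by
      intro k; simp [hε, one_div])
    set V : ℕ → Set (A × (Fin n → ℝ)) := fun k =>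
      {x | h x.1 n ≤ r + ε k ∧ ∀ m : Fin n, h x.1 m ≤ x.2 m + ε k} with hV
    have hVclosed : ∀ k, IsClosed (V k) := by
      intro k
      have hVk : V k = {x : A × (Fin n → ℝ) | h x.1 n ≤ r + ε k} ∩
          ⋂ m : Fin n, {x : A × (Fin n → ℝ) | h x.1 m ≤ x.2 m + ε k} := by
        ext x; simp [hV, Set.mem_iInter]
      rw [hVk]
      refine IsClosed.inter (isClosed_le ((hh n).comp continuous_fst) continuous_const) ?_
      refine isClosed_iInter fun m => isClosed_le ((hh m).comp continuous_fst) ?_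
      exact ((continuous_apply (m : Fin n)).comp continuous_snd).add continuous_const
    have hproper : IsProperMap (Prod.map p (id : (Fin n → ℝ) → Fin n → ℝ)) :=
      hp.isProperMap.prodMap isProperMap_id
    set W : ℕ → Set (B × (Fin n → ℝ)) := fun k => Prod.map p id '' V k with hW
    have hWclosed : ∀ k, IsClosed (W k) := fun k => hproper.isClosedMap _ (hVclosed k)
    set Φ : B → B × (Fin n → ℝ) := fun b => (b, fun m => lexT p h m b) with hΦ
    have hΦmeas : Measurable Φ :=
      measurable_id.prodMk (measurable_pi_lambda _ fun m => IH m m.2)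
    have key : lexT p h n ⁻¹' Iic r = ⋂ k, Φ ⁻¹' W k := by
      ext b
      simp only [Set.mem_preimage, Set.mem_Iic, Set.mem_iInter]
      constructor
      · intro hle k
        obtain ⟨a, haK, hval, _⟩ := lexK_exists_min hp hh (hps b) n
        refine ⟨(a, fun m => lexT p h m b), ⟨?_, ?_⟩, ?_⟩
        · rw [hval]; linarith [hεpos k]
        · intro m
          have := haK.2 m m.2
          simp only [this, le_add_iff_nonneg_right]
          exact (hεpos k).le
        · simp [Prod.map, haK.1, hΦ]
      · intro hk
        -- extract witnesses
        have hex : ∀ k, ∃ a, p a = b ∧ h a n ≤ r + ε k ∧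
            ∀ m : Fin n, h a m ≤ lexT p h m b + ε k := by
          intro k
          obtain ⟨⟨a, t⟩, hv, heq⟩ := hk k
          have hb : p a = b := congrArg Prod.fst heq
          have ht : t = fun m : Fin n => lexT p h m b := congrArg Prod.snd heq
          exact ⟨a, hb, hv.1, by rw [ht] at hv; exact hv.2⟩
        choose u hu1 hu2 hu3 using hex
        obtain ⟨a, -, ϕ, hϕmono, hϕlim⟩ :=
          isCompact_univ.tendsto_subseq (fun k => Set.mem_univ (u k))
        have hεlim' : Tendsto (fun j => ε (ϕ j)) atTop (𝓝 0) :=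
          hεlim.comp hϕmono.tendsto_atTop
        have hpa : p a = b := by
          have : Tendsto (fun j => p (u (ϕ j))) atTop (𝓝 (p a)) :=
            (hp.tendsto a).comp hϕlim
          have h2 : Tendsto (fun j => p (u (ϕ j))) atTop (𝓝 b) := by
            simp only [hu1]; exact tendsto_const_nhds
          exact tendsto_nhds_unique this h2
        have hlim : ∀ m : ℕ, Tendsto (fun j => h (u (ϕ j)) m) atTop (𝓝 (h a m)) :=
          fun m => ((hh m).tendsto a).comp hϕlim
        have han : h a n ≤ r := by
          have : Tendsto (fun j => r + ε (ϕ j)) atTop (𝓝 (r + 0)) :=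
            tendsto_const_nhds.add hεlim'
          rw [add_zero] at this
          exact le_of_tendsto_of_tendsto' (hlim n) this fun j => hu2 (ϕ j)
        have ham : ∀ m : ℕ, m < n → h a m ≤ lexT p h m b := by
          intro m hm
          have : Tendsto (fun j => lexT p h m b + ε (ϕ j)) atTop (𝓝 (lexT p h m b + 0)) :=
            tendsto_const_nhds.add hεlim'
          rw [add_zero] at this
          exact le_of_tendsto_of_tendsto' (hlim m) this fun j => hu3 (ϕ j) ⟨m, hm⟩
        -- a is in lexK n b
        have hmem : ∀ m, m ≤ n → a ∈ lexK p h m b := by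
          intro m hm
          induction m with
          | zero => exact ⟨hpa, by omega⟩
          | succ m ihm =>
              have hm' : m < n := hm
              have haKm : a ∈ lexK p h m b := ihm (le_of_lt hm')
              have : h a m = lexT p h m b :=
                le_antisymm (ham m hm') (lexT_le hp hh haKm)
              exact ⟨hpa, fun j hj => by
                rcases Nat.lt_succ_iff_lt_or_eq.1 hj with hj' | rfl
                · exact haKm.2 j hj'
                · exact this⟩
        exact le_trans (lexT_le hp hh (hmem n le_rfl)) han
    rw [key]
    exact MeasurableSet.iInter fun k => hΦmeas (hWclosed k).measurableSet

end lexmeas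

/-- A continuous surjection from a compact Polish space onto a Polish space admits a Borel
measurable section. -/
theorem exists_borel_section {A B : Type*} [TopologicalSpace A] [PolishSpace A] [CompactSpace A]
    [TopologicalSpace B] [PolishSpace B] (p : A → B) (hp : Continuous p)
    (hps : Function.Surjective p) :
    ∃ s : B → A, @Measurable B A (borel B) (borel A) s ∧ ∀ b, p (s b) = b := by
  cases isEmpty_or_nonempty A with
  | inl hA =>
      haveI : IsEmpty B := ⟨fun b => (hps b).elim fun a _ => IsEmpty.false a⟩
      exact ⟨fun b => (IsEmpty.false b).elim,
        @measurable_of_empty B A (borel B) (borel A) _ _,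
        fun b => (IsEmpty.false b).elim⟩
  | inr hA =>
      letI := TopologicalSpace.upgradeIsCompletelyMetrizable A
      obtain ⟨u, hu⟩ := TopologicalSpace.exists_dense_seq A
      set h : A → ℕ → ℝ := fun a n => dist a (u n) with hdef
      have hh : ∀ n, Continuous fun a => h a n := fun n => continuous_id.dist continuous_const
      have hinj : ∀ a a' : A, (∀ n, h a n = h a' n) → a = a' := by
        intro a a' hand
        apply eq_of_dist_eq_zero
        refine le_antisymm (le_of_forall_pos_le_add fun ε hε => ?_) dist_nonneg
        obtain ⟨n, hn⟩ := (Metric.denseRange_iff.1 hu) a (ε / 2) (by linarith)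
        have h1 : dist a (u n) < ε / 2 := hn
        have h2 : dist a' (u n) < ε / 2 := by
          have := hand n
          simp only [hdef] at this
          rw [← this]; exact h1
        calc dist a a' ≤ dist a (u n) + dist (u n) a' := dist_triangle _ _ _
          _ = dist a (u n) + dist a' (u n) := by rw [dist_comm (u n) a']
          _ ≤ 0 + ε := by linarith
      have hbK : ∀ b : B, (⋂ n, lexK p h n b).Nonempty := by
        intro b
        refine IsCompact.nonempty_iInter_of_sequence_nonempty_isCompact_isClosed _
          (fun n => lexK_mono (Nat.le_succ n) b) (fun n => ?_)
          (lexK_isCompact hp hh 0 b) (fun n => lexK_isClosed hp hh n b)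
        obtain ⟨a, haK, -, -⟩ := lexK_exists_min hp hh (hps b) n
        exact ⟨a, haK⟩
      choose s hs using hbK
      have hsmem : ∀ b n, s b ∈ lexK p h n b := fun b n => Set.mem_iInter.1 (hs b) n
      have hsection : ∀ b, p (s b) = b := fun b => (hsmem b 0).1
      have hval : ∀ b n, h (s b) n = lexT p h n b := fun b n =>
        (hsmem b (n + 1)).2 n (Nat.lt_succ_self n)
      refine ⟨s, ?_, hsection⟩
      letI : MeasurableSpace A := borel A
      haveI : BorelSpace A := ⟨rfl⟩
      letI : MeasurableSpace B := borel B
      haveI : BorelSpace B := ⟨rfl⟩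
      set G : Set (B × A) := {x | p x.2 = x.1 ∧ ∀ n, h x.2 n = lexT p h n x.1} with hG
      have hGmeas : MeasurableSet G := by
        have : G = {x : B × A | p x.2 = x.1} ∩
            ⋂ n, {x : B × A | h x.2 n = lexT p h n x.1} := by
          ext x; simp [hG, Set.mem_iInter]
        rw [this]
        refine ((isClosed_eq (hp.comp continuous_snd) continuous_fst).measurableSet).inter
          (MeasurableSet.iInter fun n => ?_)
        exact measurableSet_eq_fun (((hh n).comp continuous_snd).measurable)
          ((lexT_measurable hp hps hh n).comp measurable_fst)
      have hGgraph : ∀ x : B × A, x ∈ G ↔ x.2 = s x.1 := by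
        rintro ⟨b, a⟩
        constructor
        · rintro ⟨hpa, hva⟩
          exact hinj a (s b) fun n => by rw [hva n, hval b n]
        · rintro h'
          simp only at h'
          subst h'
          exact ⟨hsection b, hval b⟩
      intro U hU
      have himg : s ⁻¹' U = Prod.fst '' (G ∩ (Set.univ ×ˢ U)) := by
        ext b
        constructor
        · intro hb
          exact ⟨(b, s b), ⟨(hGgraph (b, s b)).2 rfl, Set.mem_univ _, hb⟩, rfl⟩
        · rintro ⟨⟨b', a⟩, ⟨hxG, -, haU⟩, rfl⟩
          have := (hGgraph (b', a)).1 hxG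
          simpa [← this] using haU
      rw [himg]
      refine (hGmeas.inter (MeasurableSet.univ.prod hU)).image_of_continuousOn_injOn
        continuous_fst.continuousOn ?_
      rintro ⟨b1, a1⟩ ⟨hx1, -⟩ ⟨b2, a2⟩ ⟨hx2, -⟩ hfst
      simp only at hfst
      subst hfst
      have e1 := (hGgraph (b1, a1)).1 hx1
      have e2 := (hGgraph (b1, a2)).1 hx2
      simp only at e1 e2
      rw [Prod.mk.injEq]
      exact ⟨rfl, e1.trans e2.symm⟩

open MeasureTheory in
/-- Transfer of descriptive complexity along a continuous surjection with compact Polish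
domain. -/
theorem transfer_lemma {X Y : Type*} [TopologicalSpace X] [PolishSpace X] [CompactSpace X]
    [TopologicalSpace Y] [PolishSpace Y] (u : X → Y) (hu : Continuous u)
    (hus : Function.Surjective u) (S : Set Y) :
    (IsClosed S ↔ IsClosed (u ⁻¹' S)) ∧
    (IsOpen S ↔ IsOpen (u ⁻¹' S)) ∧
    (IsFsigmaSet S ↔ IsFsigmaSet (u ⁻¹' S)) ∧
    (@MeasurableSet Y (borel Y) S ↔ @MeasurableSet X (borel X) (u ⁻¹' S)) ∧
    (AnalyticSet S ↔ AnalyticSet (u ⁻¹' S)) := by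
  have himg : ∀ T : Set Y, u '' (u ⁻¹' T) = T := fun T => Set.image_preimage_eq T hus
  have hclosed : ∀ T : Set Y, IsClosed T ↔ IsClosed (u ⁻¹' T) := by
    intro T
    refine ⟨fun hT => hT.preimage hu, fun hT => ?_⟩
    have := (hT.isCompact.image hu).isClosed
    rwa [himg] at this
  refine ⟨hclosed S, ?_, ?_, ?_, ?_⟩
  · rw [← isClosed_compl_iff, ← isClosed_compl_iff, ← Set.preimage_compl]
    exact hclosed Sᶜ
  · constructor
    · rintro ⟨F, hF, rfl⟩
      exact ⟨fun n => u ⁻¹' F n, fun n => (hF n).preimage hu, by rw [Set.preimage_iUnion]⟩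
    · rintro ⟨F, hF, hFU⟩
      refine ⟨fun n => u '' F n, fun n => ((hF n).isCompact.image hu).isClosed, ?_⟩
      rw [← himg S, hFU, Set.image_iUnion]
  · letI : MeasurableSpace X := borel X
    haveI : BorelSpace X := ⟨rfl⟩
    letI : MeasurableSpace Y := borel Y
    haveI : BorelSpace Y := ⟨rfl⟩
    constructor
    · exact fun hS => hu.measurable hS
    · intro hS
      refine AnalyticSet.measurableSet_of_compl ?_ ?_
      · have := hS.analyticSet.image_of_continuous hu
        rwa [himg] at this
      · have := hS.compl.analyticSet.image_of_continuous hu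
        rw [← Set.preimage_compl] at this
        rwa [himg] at this
  · constructor
    · exact fun hS => hS.preimage hu
    · intro hS
      have := hS.image_of_continuous hu
      rwa [himg] at this

/-- Given compact Polish spaces `A`, `B`, `C`, continuous surjections `p : A → B`, `q : A → C`,
and maps `φ : B → Q`, `ψ : C → Q` with `φ ∘ p = ψ ∘ q`, the equivalence relations induced by `φ`
on `B` and by `ψ` on `C` are simultaneously closed/clopen/Fσ/Borel/analytic, and they are
Borel bireducible. -/
theorem stmt_9 {A B C Q : Type*}
    [TopologicalSpace A] [PolishSpace A] [CompactSpace A]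
    [TopologicalSpace B] [PolishSpace B] [CompactSpace B]
    [TopologicalSpace C] [PolishSpace C] [CompactSpace C]
    (p : A → B) (hp : Continuous p) (hps : Function.Surjective p)
    (q : A → C) (hq : Continuous q) (hqs : Function.Surjective q)
    (φ : B → Q) (ψ : C → Q) (hcomm : ∀ a : A, φ (p a) = ψ (q a)) :
    (IsClosed {x : B × B | φ x.1 = φ x.2} ↔ IsClosed {x : C × C | ψ x.1 = ψ x.2}) ∧
    (IsClopen {x : B × B | φ x.1 = φ x.2} ↔ IsClopen {x : C × C | ψ x.1 = ψ x.2}) ∧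
    (IsFsigmaSet {x : B × B | φ x.1 = φ x.2} ↔ IsFsigmaSet {x : C × C | ψ x.1 = ψ x.2}) ∧
    (@MeasurableSet (B × B) (borel (B × B)) {x : B × B | φ x.1 = φ x.2} ↔
      @MeasurableSet (C × C) (borel (C × C)) {x : C × C | ψ x.1 = ψ x.2}) ∧
    (MeasureTheory.AnalyticSet {x : B × B | φ x.1 = φ x.2} ↔
      MeasureTheory.AnalyticSet {x : C × C | ψ x.1 = ψ x.2}) ∧
    (BorelReducible (fun x y : B => φ x = φ y) (fun x y : C => ψ x = ψ y) ∧
      BorelReducible (fun x y : C => ψ x = ψ y) (fun x y : B => φ x = φ y)) := by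
  classical
  -- common pulled-back relation on A × A
  set uB : A × A → B × B := Prod.map p p with huB
  set uC : A × A → C × C := Prod.map q q with huC
  have huBc : Continuous uB := hp.prodMap hp
  have huCc : Continuous uC := hq.prodMap hq
  have huBs : Function.Surjective uB := hps.prodMap hps
  have huCs : Function.Surjective uC := hqs.prodMap hqs
  obtain ⟨tBcl, tBop, tBfs, tBbo, tBan⟩ :=
    transfer_lemma uB huBc huBs {x : B × B | φ x.1 = φ x.2}
  obtain ⟨tCcl, tCop, tCfs, tCbo, tCan⟩ :=
    transfer_lemma uC huCc huCs {x : C × C | ψ x.1 = ψ x.2}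
  have hEA : uB ⁻¹' {x : B × B | φ x.1 = φ x.2} = uC ⁻¹' {x : C × C | ψ x.1 = ψ x.2} := by
    ext ⟨a1, a2⟩
    simp only [Set.mem_preimage, huB, huC, Prod.map, Set.mem_setOf_eq]
    rw [hcomm a1, hcomm a2]
  rw [hEA] at tBcl tBop tBfs tBbo tBan
  -- Borel reductions via Borel sections
  obtain ⟨sB, hsBm, hsB⟩ := exists_borel_section p hp hps
  obtain ⟨sC, hsCm, hsC⟩ := exists_borel_section q hq hqs
  have red1 : BorelReducible (fun x y : B => φ x = φ y) (fun x y : C => ψ x = ψ y) := by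
    refine ⟨q ∘ sB, ?_, ?_⟩
    · letI : MeasurableSpace A := borel A
      haveI : BorelSpace A := ⟨rfl⟩
      letI : MeasurableSpace C := borel C
      haveI : BorelSpace C := ⟨rfl⟩
      exact hq.measurable.comp hsBm
    · have key : ∀ b, ψ ((q ∘ sB) b) = φ b := fun b => by
        show ψ (q (sB b)) = φ b
        rw [← hcomm (sB b), hsB b]
      intro x y
      show φ x = φ y ↔ ψ ((q ∘ sB) x) = ψ ((q ∘ sB) y)
      rw [key x, key y]
  have red2 : BorelReducible (fun x y : C => ψ x = ψ y) (fun x y : B => φ x = φ y) := by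
    refine ⟨p ∘ sC, ?_, ?_⟩
    · letI : MeasurableSpace A := borel A
      haveI : BorelSpace A := ⟨rfl⟩
      letI : MeasurableSpace B := borel B
      haveI : BorelSpace B := ⟨rfl⟩
      exact hp.measurable.comp hsCm
    · have key : ∀ c, φ ((p ∘ sC) c) = ψ c := fun c => by
        show φ (p (sC c)) = ψ c
        rw [hcomm (sC c), hsC c]
      intro x y
      show ψ x = ψ y ↔ φ ((p ∘ sC) x) = φ ((p ∘ sC) y)
      rw [key x, key y]
  refine ⟨tBcl.trans tCcl.symm, ?_, tBfs.trans tCfs.symm, tBbo.trans tCbo.symm,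
    tBan.trans tCan.symm, red1, red2⟩
  constructor
  · rintro ⟨h1, h2⟩
    exact ⟨(tBcl.trans tCcl.symm).mp h1, (tBop.trans tCop.symm).mp h2⟩
  · rintro ⟨h1, h2⟩
    exact ⟨(tBcl.trans tCcl.symm).mpr h1, (tBop.trans tCop.symm).mpr h2⟩
end

section
/- Let X₁, X₂, Y₁, Y₂ be compact topological spaces (not necessarily Hausdorff) such that Y₁ and Y₂ are R1 spaces. If f₁ : X₁ → Y₁ and f₂ : X₂ → Y₂ are topological quotient maps, then the product map f₁ × f₂ : X₁ × X₂ → Y₁ × Y₂ is a topological quotient map. -/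
/-- A product of quotient maps between compact spaces whose targets are R₁ spaces is a
quotient map. -/
theorem stmt_10 {X₁ X₂ Y₁ Y₂ : Type*}
    [TopologicalSpace X₁] [TopologicalSpace X₂] [TopologicalSpace Y₁] [TopologicalSpace Y₂]
    [CompactSpace X₁] [CompactSpace X₂] [CompactSpace Y₁] [CompactSpace Y₂]
    [R1Space Y₁] [R1Space Y₂] {f₁ : X₁ → Y₁} {f₂ : X₂ → Y₂}
    (h₁ : Topology.IsQuotientMap f₁) (h₂ : Topology.IsQuotientMap f₂) :
    Topology.IsQuotientMap (Prod.map f₁ f₂) := by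
  have hsurj : Function.Surjective (Prod.map f₁ f₂) := h₁.surjective.prodMap h₂.surjective
  rw [Topology.isQuotientMap_iff_isClosed]
  refine ⟨hsurj, fun A ↦ ⟨fun hA ↦ hA.preimage (h₁.continuous.prodMap h₂.continuous),
    fun hB ↦ ?_⟩⟩
  -- `A` is the image of the compact set `(Prod.map f₁ f₂) ⁻¹' A`, hence compact.
  have himg : Prod.map f₁ f₂ '' ((Prod.map f₁ f₂) ⁻¹' A) = A :=
    Set.image_preimage_eq A hsurj
  have hAcomp : IsCompact A := by
    rw [← himg]
    exact (hB.isCompact).image (h₁.continuous.prodMap h₂.continuous)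
  -- key step: `A` is closed under inseparability, coordinatewise.
  -- First coordinate:
  have key₁ : ∀ y₁ z₁ : Y₁, Inseparable y₁ z₁ → ∀ y₂ : Y₂, (y₁, y₂) ∈ A → (z₁, y₂) ∈ A := by
    intro y₁ z₁ hins y₂ hy
    obtain ⟨x₂, rfl⟩ := h₂.surjective y₂
    have hslice : IsClosed {w₁ : Y₁ | (w₁, f₂ x₂) ∈ A} := by
      rw [← h₁.isClosed_preimage]
      have : f₁ ⁻¹' {w₁ : Y₁ | (w₁, f₂ x₂) ∈ A}
          = (fun u : X₁ ↦ (u, x₂)) ⁻¹' ((Prod.map f₁ f₂) ⁻¹' A) := rfl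
      rw [this]
      exact hB.preimage (Continuous.prodMk_left x₂)
    exact (hins.symm.mem_closed_iff hslice).mpr hy
  have key₂ : ∀ y₂ z₂ : Y₂, Inseparable y₂ z₂ → ∀ z₁ : Y₁, (z₁, y₂) ∈ A → (z₁, z₂) ∈ A := by
    intro y₂ z₂ hins z₁ hy
    obtain ⟨x₁, rfl⟩ := h₁.surjective z₁
    have hslice : IsClosed {w₂ : Y₂ | (f₁ x₁, w₂) ∈ A} := by
      rw [← h₂.isClosed_preimage]
      have : f₂ ⁻¹' {w₂ : Y₂ | (f₁ x₁, w₂) ∈ A}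
          = (fun u : X₂ ↦ (x₁, u)) ⁻¹' ((Prod.map f₁ f₂) ⁻¹' A) := rfl
      rw [this]
      exact hB.preimage (Continuous.prodMk_right x₁)
    exact (hins.symm.mem_closed_iff hslice).mpr hy
  -- now show `A` is closed: it is compact and closed under inseparability in an R₁ space.
  rw [← closure_eq_iff_isClosed]
  refine Set.Subset.antisymm (fun z hz ↦ ?_) subset_closure
  obtain ⟨y, hyA, hins⟩ := hAcomp.mem_closure_iff_exists_inseparable.mp hz
  obtain ⟨hins₁, hins₂⟩ := inseparable_prod.mp hins
  exact key₂ y.2 z.2 hins₂ z.1 (key₁ y.1 z.1 hins₁ y.2 (by simpa using hyA))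
end

section
/- Let X and Y be topological spaces and f : X → Y a continuous, closed surjection. If X is countably tight, then Y is countably tight. -/
/-- Countable tightness is preserved by continuous closed surjections. -/
theorem stmt_12 {X Y : Type*} [TopologicalSpace X] [TopologicalSpace Y]
    (f : X → Y) (hcont : Continuous f) (hclosed : IsClosedMap f)
    (hsurj : Function.Surjective f)
    (hX : ∀ (A : Set X), ∀ x ∈ closure A, ∃ B ⊆ A, B.Countable ∧ x ∈ closure B) :
    ∀ (A : Set Y), ∀ y ∈ closure A, ∃ B ⊆ A, B.Countable ∧ y ∈ closure B := by
  intro A y hy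
  -- y ∈ closure A = closure (f '' (f ⁻¹' A)) = f '' closure (f ⁻¹' A)
  have himg : f '' (f ⁻¹' A) = A := Set.image_preimage_eq A hsurj
  have hcl : closure A = f '' closure (f ⁻¹' A) := by
    conv_lhs => rw [← himg]
    rw [hclosed.closure_image_eq_of_continuous hcont]
  rw [hcl] at hy
  obtain ⟨x, hx, rfl⟩ := hy
  obtain ⟨B, hBsub, hBc, hxB⟩ := hX (f ⁻¹' A) x hx
  refine ⟨f '' B, ?_, hBc.image f, ?_⟩
  · rw [← himg]; exact Set.image_mono hBsub
  · exact (image_closure_subset_closure_image hcont) ⟨x, hxB, rfl⟩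
end

section
/- Let X be a compact Hausdorff space and let (Aₙ)_{n∈ℕ} be an independent sequence of clopen subsets of X. Then the sequence of characteristic functions (χ_{Aₙ}) is an ℓ¹-sequence in C(X) with constant 1/2: for every n ∈ ℕ and all real numbers c₀, …, cₙ, one has (1/2)·Σ_{i=0}^{n} |cᵢ| ≤ sup_{x∈X} |Σ_{i=0}^{n} cᵢ·χ_{Aᵢ}(x)|. -/
/-- If `(Aₙ)` is an independent sequence of clopen subsets of a compact Hausdorff space `X`, then
the characteristic functions `χ_{Aₙ}` form an ℓ¹-sequence in `C(X)` with constant `1/2`. -/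
theorem stmt_13 {X : Type*} [TopologicalSpace X] [CompactSpace X] [T2Space X]
    (A : ℕ → Set X) (hclopen : ∀ n, IsClopen (A n))
    (hind : ∀ I : Set ℕ, ((⋂ n ∈ I, A n) ∩ ⋂ n ∈ Iᶜ, (A n)ᶜ).Nonempty)
    (n : ℕ) (c : ℕ → ℝ) :
    (1 / 2) * ∑ i ∈ Finset.range (n + 1), |c i| ≤
      ⨆ x : X, |∑ i ∈ Finset.range (n + 1), c i * Set.indicator (A i) (fun _ => (1 : ℝ)) x| := by
  set S := Finset.range (n + 1) with hS
  set f : X → ℝ := fun x => ∑ i ∈ S, c i * Set.indicator (A i) (fun _ => (1 : ℝ)) x with hf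
  have hbound : ∀ x, |f x| ≤ ∑ i ∈ S, |c i| := by
    intro x
    calc |f x| ≤ ∑ i ∈ S, |c i * Set.indicator (A i) (fun _ => (1 : ℝ)) x| :=
          Finset.abs_sum_le_sum_abs _ _
      _ ≤ ∑ i ∈ S, |c i| := by
          apply Finset.sum_le_sum
          intro i _
          rw [abs_mul]
          have h1 : |Set.indicator (A i) (fun _ => (1 : ℝ)) x| ≤ 1 := by
            by_cases h : x ∈ A i <;> simp [Set.indicator, h]
          nlinarith [abs_nonneg (c i)]
  have hbdd : BddAbove (Set.range fun x => |f x|) :=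
    ⟨∑ i ∈ S, |c i|, by rintro _ ⟨x, rfl⟩; exact hbound x⟩
  obtain ⟨x, hxI, hxC⟩ := hind {i | 0 ≤ c i}
  obtain ⟨y, hyI, hyC⟩ := hind {i | 0 ≤ c i}ᶜ
  have hxmem : ∀ i, (x ∈ A i ↔ 0 ≤ c i) := by
    intro i
    constructor
    · intro h
      by_contra hc
      have := Set.mem_iInter₂.1 hxC i hc
      exact this h
    · intro h
      exact Set.mem_iInter₂.1 hxI i h
  have hymem : ∀ i, (y ∈ A i ↔ ¬ 0 ≤ c i) := by
    intro i
    constructor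
    · intro h
      by_contra hc
      have := Set.mem_iInter₂.1 hyC i (by simpa using hc)
      exact this h
    · intro h
      exact Set.mem_iInter₂.1 hyI i h
  have hfx : f x = ∑ i ∈ S, if 0 ≤ c i then c i else 0 := by
    apply Finset.sum_congr rfl
    intro i _
    by_cases h : 0 ≤ c i
    · simp [Set.indicator, (hxmem i).2 h, h]
    · have : x ∉ A i := fun hx => h ((hxmem i).1 hx)
      simp [Set.indicator, this, h]
  have hfy : f y = ∑ i ∈ S, if 0 ≤ c i then 0 else c i := by
    apply Finset.sum_congr rfl
    intro i _
    by_cases h : 0 ≤ c i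
    · have : y ∉ A i := fun hy => (hymem i).1 hy h
      simp [Set.indicator, this, h]
    · simp [Set.indicator, (hymem i).2 h, h]
  have habs : ∑ i ∈ S, |c i| = f x - f y := by
    rw [hfx, hfy, ← Finset.sum_sub_distrib]
    apply Finset.sum_congr rfl
    intro i _
    by_cases h : 0 ≤ c i
    · simp [h, abs_of_nonneg h]
    · push_neg at h
      simp [not_le.2 h, abs_of_neg h]
  have hsupx : |f x| ≤ ⨆ z : X, |f z| := le_ciSup hbdd x
  have hsupy : |f y| ≤ ⨆ z : X, |f z| := le_ciSup hbdd y
  have : ∑ i ∈ S, |c i| ≤ |f x| + |f y| := by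
    rw [habs]
    calc f x - f y ≤ |f x - f y| := le_abs_self _
      _ ≤ |f x| + |f y| := abs_sub _ _
  linarith
end

section
/- Let X be a compact metrizable space and let a group G act on X by homeomorphisms. Suppose there exist a clopen set U ⊆ X and a sequence (gₙ)_{n∈ℕ} in G such that the family (gₙ•U)_{n∈ℕ} is independent. Let EL be the Ellis semigroup of the action, i.e. the closure in the product space X^X of the set {π_g : g ∈ G}, where π_g(x) = g•x. Then there is a topological embedding (a homeomorphism onto its image) of βℕ — the Stone–Čech compactification of the discrete space ℕ, realized as the space of ultrafilters on ℕ — into EL, and the cardinality of EL is exactly 2^(2^ℵ₀). -/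
open Pointwise
open Filter Set

section Aux

open Filter Set

private abbrev DD := Finset ℕ × Finset (Finset ℕ)

private def AA (X : Set ℕ) : Set DD := {d | ∃ s ∈ d.2, (↑s : Set ℕ) = X ∩ ↑d.1}

private lemma exists_ultra (u : Set (Set ℕ)) :
    ∃ p : Ultrafilter DD, ∀ X : Set ℕ, (X ∈ u → AA X ∈ p) ∧ (X ∉ u → (AA X)ᶜ ∈ p) := by
  classical
  set B : Set ℕ → Set DD := fun X => if X ∈ u then AA X else (AA X)ᶜ with hB
  -- finite intersections are nonempty
  have key : ∀ S : Set (Set ℕ), S.Finite → (⋂ X ∈ S, B X).Nonempty := by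
    intro S hS
    set sep : Set ℕ → Set ℕ → ℕ := fun X Y =>
      if h : ∃ n, ¬ (n ∈ X ↔ n ∈ Y) then h.choose else 0 with hsep
    set F : Finset ℕ := (hS.toFinset ×ˢ hS.toFinset).image (fun q => sep q.1 q.2) with hF
    have hsepmem : ∀ X ∈ S, ∀ Y ∈ S, X ≠ Y → X ∩ (↑F : Set ℕ) ≠ Y ∩ ↑F := by
      intro X hX Y hY hXY
      have hex : ∃ n, ¬ (n ∈ X ↔ n ∈ Y) := by
        by_contra h
        push_neg at h
        exact hXY (Set.ext fun n => h n)
      have hnF : sep X Y ∈ F := by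
        refine Finset.mem_image.2 ⟨(X, Y), ?_, rfl⟩
        simp [hS.mem_toFinset.2 hX, hS.mem_toFinset.2 hY, Finset.mem_product,
          hS.mem_toFinset, hX, hY]
      have hn : ¬ (sep X Y ∈ X ↔ sep X Y ∈ Y) := by
        rw [hsep]; simp only [hex, dif_pos]; exact hex.choose_spec
      intro hEq
      apply hn
      constructor
      · intro h; have : sep X Y ∈ X ∩ (↑F : Set ℕ) := ⟨h, hnF⟩
        rw [hEq] at this; exact this.1
      · intro h; have : sep X Y ∈ Y ∩ (↑F : Set ℕ) := ⟨h, hnF⟩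
        rw [← hEq] at this; exact this.1
    set 𝒜 : Finset (Finset ℕ) :=
      (hS.toFinset.filter (· ∈ u)).image (fun X => F.filter (· ∈ X)) with h𝒜
    refine ⟨(F, 𝒜), ?_⟩
    simp only [Set.mem_iInter]
    intro X hX
    by_cases hXu : X ∈ u
    · have : (F, 𝒜) ∈ AA X := by
        refine ⟨F.filter (· ∈ X), ?_, ?_⟩
        · exact Finset.mem_image.2 ⟨X, Finset.mem_filter.2 ⟨hS.mem_toFinset.2 hX, hXu⟩, rfl⟩
        · ext n; simp [Finset.coe_filter, and_comm]
      simpa [hB, hXu] using this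
    · have : (F, 𝒜) ∉ AA X := by
        rintro ⟨s, hs, hseq⟩
        obtain ⟨Y, hY, rfl⟩ := Finset.mem_image.1 hs
        obtain ⟨hYS, hYu⟩ := Finset.mem_filter.1 hY
        have hYS' : Y ∈ S := hS.mem_toFinset.1 hYS
        have hXY : X ≠ Y := fun h => hXu (h ▸ hYu)
        apply hsepmem X hX Y hYS' hXY
        rw [← hseq]; ext n; simp [Finset.coe_filter, and_comm]
      simpa [hB, hXu] using this
  have hne : NeBot (Filter.generate (Set.range B)) := by
    rw [Filter.generate_neBot_iff]
    intro t hts htf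
    have : ∀ b ∈ t, ∃ X, B X = b := fun b hb => hts hb
    choose! f hf using this
    have hsub : ⋂ X ∈ f '' t, B X ⊆ ⋂₀ t := by
      intro d hd b hb
      have := Set.mem_iInter₂.1 hd (f b) ⟨b, hb, rfl⟩
      rwa [hf b hb] at this
    exact ((key _ (htf.image f)).mono hsub)
  refine ⟨@Ultrafilter.of _ _ hne, fun X => ⟨fun hXu => ?_, fun hXu => ?_⟩⟩
  · have : B X ∈ Filter.generate (Set.range B) :=
      Filter.mem_generate_of_mem ⟨X, rfl⟩
    have := Filter.le_def.1 (@Ultrafilter.of_le _ _ hne) _ this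
    simpa [hB, hXu] using this
  · have : B X ∈ Filter.generate (Set.range B) :=
      Filter.mem_generate_of_mem ⟨X, rfl⟩
    have := Filter.le_def.1 (@Ultrafilter.of_le _ _ hne) _ this
    simpa [hB, hXu] using this

private lemma pospisil : 2 ^ Cardinal.continuum ≤ Cardinal.mk (Ultrafilter ℕ) := by
  classical
  choose p hp using exists_ultra
  have hinj : Function.Injective p := by
    intro u v huv
    by_contra h
    obtain ⟨X, hX⟩ : ∃ X, ¬ (X ∈ u ↔ X ∈ v) := by
      by_contra h'; push_neg at h'; exact h (Set.ext fun X => h' X)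
    by_cases hXu : X ∈ u
    · have hXv : X ∉ v := fun hv => hX ⟨fun _ => hv, fun _ => hXu⟩
      have h1 : AA X ∈ p u := (hp u X).1 hXu
      have h2 : (AA X)ᶜ ∈ p v := (hp v X).2 hXv
      rw [huv] at h1
      exact Ultrafilter.compl_mem_iff_notMem.1 h2 h1
    · have hXv : X ∈ v := by
        by_contra hv; exact hX ⟨fun h => absurd h hXu, fun h => absurd h hv⟩
      have h1 : AA X ∈ p v := (hp v X).1 hXv
      have h2 : (AA X)ᶜ ∈ p u := (hp u X).2 hXu
      rw [huv] at h2
      exact Ultrafilter.compl_mem_iff_notMem.1 h2 h1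
  -- transfer from DD to ℕ
  let e : DD ≃ ℕ := Denumerable.eqv DD
  have hinj2 : Function.Injective (fun q : Ultrafilter DD => q.map e) := by
    intro q1 q2 h
    ext s
    have := congrArg (fun q : Ultrafilter ℕ => s ∈ Ultrafilter.map e.symm q) h
    simpa [Ultrafilter.mem_map, Set.preimage_preimage] using this
  calc 2 ^ Cardinal.continuum = Cardinal.mk (Set (Set ℕ)) := by
        rw [Cardinal.mk_set, Cardinal.mk_set, Cardinal.mk_nat, Cardinal.two_power_aleph0]
    _ ≤ Cardinal.mk (Ultrafilter DD) := Cardinal.mk_le_of_injective hinj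
    _ ≤ Cardinal.mk (Ultrafilter ℕ) := Cardinal.mk_le_of_injective hinj2

open Filter Set

private lemma mk_le_continuum_of_cm (X : Type*) [TopologicalSpace X] [CompactSpace X]
    [TopologicalSpace.MetrizableSpace X] : Cardinal.mk X ≤ Cardinal.continuum := by
  letI : MetricSpace X := TopologicalSpace.metrizableSpaceMetric X
  obtain ⟨s, hsc, hsd⟩ := TopologicalSpace.exists_countable_dense X
  have h : ∀ x : X, ∃ f : ℕ → X, (∀ n, f n ∈ s) ∧ Tendsto f atTop (nhds x) := fun x =>
    mem_closure_iff_seq_limit.1 (hsd x)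
  choose f hfs hft using h
  have hinj : Function.Injective (fun x : X => (fun n => (⟨f x n, hfs x n⟩ : s))) := by
    intro x y hxy
    have : f x = f y := funext fun n => congrArg Subtype.val (congrFun hxy n)
    exact tendsto_nhds_unique (hft x) (this ▸ hft y)
  calc Cardinal.mk X ≤ Cardinal.mk (ℕ → s) := Cardinal.mk_le_of_injective hinj
    _ = Cardinal.mk s ^ Cardinal.aleph0 := by
        rw [Cardinal.mk_arrow]; simp
    _ ≤ Cardinal.aleph0 ^ Cardinal.aleph0 := Cardinal.power_le_power_right hsc.le_aleph0
    _ = Cardinal.continuum := Cardinal.aleph0_power_aleph0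
end Aux

/-- If a group `G` acts by homeomorphisms on a compact metrizable space `X` and there are a
clopen `U ⊆ X` and a sequence `(gₙ)` in `G` such that the sets `gₙ • U` are independent, then the
Ellis semigroup `EL` (the closure of `{π_g : g ∈ G}` in `X^X`) contains a topological copy of
`βℕ` (the space of ultrafilters on `ℕ`), and `|EL| = 2^(2^ℵ₀)`. -/
theorem stmt_14 {G X : Type*} [Group G] [TopologicalSpace X] [CompactSpace X]
    [TopologicalSpace.MetrizableSpace X] [MulAction G X]
    (hcont : ∀ g : G, Continuous fun x : X => g • x)
    (U : Set X) (hU : IsClopen U) (g : ℕ → G)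
    (hind : ∀ I : Set ℕ, ((⋂ n ∈ I, g n • U) ∩ ⋂ n ∈ Iᶜ, (g n • U)ᶜ).Nonempty) :
    (∃ e : Ultrafilter ℕ →
        {f : X → X // f ∈ closure {f : X → X | ∃ γ : G, ∀ x : X, f x = γ • x}},
      Topology.IsEmbedding e) ∧
    Cardinal.mk {f : X → X // f ∈ closure {f : X → X | ∃ γ : G, ∀ x : X, f x = γ • x}} =
      2 ^ Cardinal.continuum := by
  classical
  letI : MetricSpace X := TopologicalSpace.metrizableSpaceMetric X
  set S : Set (X → X) := {f : X → X | ∃ γ : G, ∀ x : X, f x = γ • x} with hS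
  set F : ℕ → (X → X) := fun n x => (g n)⁻¹ • x with hF
  have hFS : ∀ n, F n ∈ S := fun n => ⟨(g n)⁻¹, fun _ => rfl⟩
  set e₀ : Ultrafilter ℕ → (X → X) := Ultrafilter.extend F with he₀
  have htend : ∀ p : Ultrafilter ℕ, Tendsto F (↑p) (nhds (e₀ p)) := by
    intro p
    have := ultrafilter_extend_eq_iff.1 (rfl : Ultrafilter.extend F p = e₀ p)
    rwa [Ultrafilter.coe_map] at this
  have hmem : ∀ p : Ultrafilter ℕ, e₀ p ∈ closure S := by
    intro p
    refine mem_closure_iff_ultrafilter.2 ⟨p.map F, ?_, ?_⟩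
    · exact Ultrafilter.mem_map.2 (Filter.mem_of_superset Filter.univ_mem fun n _ => hFS n)
    · rw [Ultrafilter.coe_map]; exact htend p
  set e : Ultrafilter ℕ → {f : X → X // f ∈ closure S} := fun p => ⟨e₀ p, hmem p⟩ with he
  have hcont_e : Continuous e := (continuous_ultrafilter_extend F).subtype_mk _
  have htendx : ∀ (p : Ultrafilter ℕ) (x : X), Tendsto (fun n => F n x) (↑p) (nhds (e₀ p x)) :=
    fun p x => ((continuous_apply x).tendsto (e₀ p)).comp (htend p)
  have hinj : Function.Injective e := by
    intro p q hpq
    by_contra hne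
    obtain ⟨A, hAp, hAq⟩ : ∃ A, A ∈ p ∧ A ∉ q := by
      by_contra h; push_neg at h
      exact hne ((Ultrafilter.coe_le_coe.1 (fun s hs => h s hs)).symm)
    have hAq' : Aᶜ ∈ q := Ultrafilter.compl_mem_iff_notMem.2 hAq
    obtain ⟨x, hx1, hx2⟩ := hind A
    have hpU : e₀ p x ∈ U := by
      refine hU.isClosed.mem_of_tendsto (htendx p x) ?_
      filter_upwards [hAp] with n hn
      have : x ∈ g n • U := Set.mem_iInter₂.1 hx1 n hn
      exact Set.mem_smul_set_iff_inv_smul_mem.1 this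
    have hqU : e₀ q x ∈ Uᶜ := by
      refine (hU.isOpen.isClosed_compl).mem_of_tendsto (htendx q x) ?_
      filter_upwards [hAq'] with n hn
      have : x ∉ g n • U := Set.mem_iInter₂.1 hx2 n hn
      exact fun hc => this (Set.mem_smul_set_iff_inv_smul_mem.2 hc)
    have : e₀ p x = e₀ q x := congrFun (congrArg Subtype.val hpq) x
    exact hqU (this ▸ hpU)
  constructor
  · exact ⟨e, (hcont_e.isClosedEmbedding hinj).isEmbedding⟩
  · have hXne : Nonempty X := ⟨(hind ∅).choose⟩
    have hXc : Cardinal.mk X ≤ Cardinal.continuum := mk_le_continuum_of_cm X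
    apply le_antisymm
    · calc Cardinal.mk {f : X → X // f ∈ closure S}
          ≤ Cardinal.mk (X → X) := Cardinal.mk_subtype_le _
        _ = Cardinal.mk X ^ Cardinal.mk X := (Cardinal.power_def X X).symm
        _ ≤ Cardinal.continuum ^ Cardinal.mk X := Cardinal.power_le_power_right hXc
        _ ≤ Cardinal.continuum ^ Cardinal.continuum :=
            Cardinal.power_le_power_left Cardinal.continuum_ne_zero hXc
        _ = 2 ^ Cardinal.continuum := Cardinal.power_self_eq Cardinal.aleph0_le_continuum
    · calc (2 : Cardinal) ^ Cardinal.continuum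
          = Cardinal.lift.{u_2} ((2 : Cardinal.{0}) ^ Cardinal.continuum) := by
            rw [Cardinal.lift_two_power, Cardinal.lift_continuum]
        _ ≤ Cardinal.lift.{u_2} (Cardinal.mk (Ultrafilter ℕ)) := Cardinal.lift_le.2 pospisil
        _ ≤ Cardinal.lift.{0} (Cardinal.mk {f : X → X // f ∈ closure S}) :=
            Cardinal.lift_mk_le'.2 ⟨⟨e, hinj⟩⟩
        _ = Cardinal.mk {f : X → X // f ∈ closure S} := by simp
end

section
/- Let G be a compact Hausdorff topological group acting continuously on a Hausdorff space X, and let E be a G-invariant equivalence relation on X which is orbital, i.e. E is the orbit equivalence relation E_H of some subgroup H ≤ G. Then the following are equivalent: (1) E is closed in X × X; (2) every E-class is closed in X; (3) the subgroup H_E = {g ∈ G : ∀ x ∈ X, x E (g•x)} is closed in G; (4) E = E_K for some closed subgroup K ≤ G; (5) the quotient space X/E with the quotient topology is Hausdorff. -/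
/-- For an orbital `G`-invariant equivalence relation `E` on a Hausdorff space `X` acted on
continuously by a compact Hausdorff group `G`, the following are equivalent: (1) `E` is closed;
(2) every `E`-class is closed; (3) the group `H_E` of elements fixing every class setwise is
closed; (4) `E` is the orbit equivalence relation of some closed subgroup; (5) `X/E` is
Hausdorff. -/
theorem stmt_15 {G X : Type*} [Group G] [TopologicalSpace G] [IsTopologicalGroup G]
    [CompactSpace G] [T2Space G] [TopologicalSpace X] [T2Space X]
    [MulAction G X] [ContinuousSMul G X]
    (E : X → X → Prop) (hE : Equivalence E)
    (hinv : ∀ (g : G) (x y : X), E x y → E (g • x) (g • y))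
    (H : Subgroup G) (horb : ∀ x y : X, E x y ↔ ∃ h ∈ H, h • x = y) :
    List.TFAE [
      IsClosed {p : X × X | E p.1 p.2},
      ∀ x : X, IsClosed {y : X | E x y},
      IsClosed {g : G | ∀ x : X, E x (g • x)},
      ∃ K : Subgroup G, IsClosed (K : Set G) ∧ ∀ x y : X, E x y ↔ ∃ k ∈ K, k • x = y,
      T2Space (Quot E)] := by
  have mk_eq : ∀ x y : X, Quot.mk E x = Quot.mk E y ↔ E x y := fun x y => by
    rw [Quot.eq, hE.eqvGen_iff]
  tfae_have 1 → 2 := by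
    intro h1 x
    have : {y : X | E x y} = (fun y => ((x, y) : X × X)) ⁻¹' {p : X × X | E p.1 p.2} := rfl
    rw [this]
    exact h1.preimage (by continuity)
  tfae_have 2 → 3 := by
    intro h2
    have : {g : G | ∀ x : X, E x (g • x)} = ⋂ x : X, (fun g : G => g • x) ⁻¹' {y | E x y} := by
      ext g; simp [Set.mem_iInter]
    rw [this]
    exact isClosed_iInter fun x => (h2 x).preimage (continuous_id.smul continuous_const)
  tfae_have 3 → 4 := by
    intro h3
    refine ⟨{ carrier := {g : G | ∀ x : X, E x (g • x)},
              one_mem' := by intro x; simpa using hE.refl x,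
              mul_mem' := by
                intro a b ha hb x
                have h1 := hb x
                have h2 := ha (b • x)
                simpa [mul_smul] using hE.trans h1 h2,
              inv_mem' := by
                intro a ha x
                have := ha (a⁻¹ • x)
                rw [smul_inv_smul] at this
                exact hE.symm this }, h3, fun x y => ?_⟩
    constructor
    · intro hxy
      obtain ⟨h, hH, rfl⟩ := (horb x y).mp hxy
      exact ⟨h, fun z => (horb z (h • z)).mpr ⟨h, hH, rfl⟩, rfl⟩
    · rintro ⟨k, hk, rfl⟩
      exact hk x
  tfae_have 4 → 1 := by
    rintro ⟨K, hKc, hKE⟩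
    haveI : CompactSpace K :=
      isCompact_iff_compactSpace.mp hKc.isCompact
    have hC : IsClosed {q : K × (X × X) | (q.1 : G) • q.2.1 = q.2.2} :=
      isClosed_eq
        ((continuous_subtype_val.comp continuous_fst).smul
          (continuous_fst.comp continuous_snd))
        (continuous_snd.comp continuous_snd)
    have himg := isClosedMap_snd_of_compactSpace _ hC
    have : {p : X × X | E p.1 p.2} =
        Prod.snd '' {q : K × (X × X) | (q.1 : G) • q.2.1 = q.2.2} := by
      ext ⟨x, y⟩
      simp only [Set.mem_setOf_eq, Set.mem_image, Prod.exists]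
      constructor
      · intro hxy
        obtain ⟨k, hk, hkxy⟩ := (hKE x y).mp hxy
        exact ⟨⟨k, hk⟩, x, y, hkxy, rfl⟩
      · rintro ⟨⟨k, hk⟩, a, b, hab, h⟩
        cases h
        exact (hKE x y).mpr ⟨k, hk, hab⟩
    rw [this]
    exact himg
  tfae_have 1 → 5 := by
    intro h1
    -- the quotient map is open: the saturation of an open set is a union of translates
    have sat_open : ∀ U : Set X, IsOpen U → IsOpen (Quot.mk E ⁻¹' (Quot.mk E '' U)) := by
      intro U hU
      have : Quot.mk E ⁻¹' (Quot.mk E '' U) = ⋃ h ∈ H, (fun x : X => h • x) '' U := by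
        ext y
        simp only [Set.mem_preimage, Set.mem_image, Set.mem_iUnion]
        constructor
        · rintro ⟨u, hu, hq⟩
          obtain ⟨h, hH, rfl⟩ := (horb u y).mp ((mk_eq u y).mp hq)
          exact ⟨h, hH, u, hu, rfl⟩
        · rintro ⟨h, hH, u, hu, rfl⟩
          exact ⟨u, hu, (mk_eq u (h • u)).mpr ((horb u (h • u)).mpr ⟨h, hH, rfl⟩)⟩
      rw [this]
      exact isOpen_biUnion fun h _ => (Homeomorph.smul h).isOpenMap U hU
    constructor
    intro a b hab
    induction a using Quot.ind with | _ x => ?_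
    induction b using Quot.ind with | _ y => ?_
    have hxy : ¬ E x y := fun h => hab (Quot.sound h)
    have hmem : ((x, y) : X × X) ∈ {p : X × X | E p.1 p.2}ᶜ := hxy
    obtain ⟨U, V, hU, hV, hxU, hyV, hUV⟩ :=
      isOpen_prod_iff.mp h1.isOpen_compl x y hmem
    refine ⟨Quot.mk E '' U, Quot.mk E '' V, ?_, ?_, ⟨x, hxU, rfl⟩, ⟨y, hyV, rfl⟩, ?_⟩
    · exact isOpen_coinduced.mpr (sat_open U hU)
    · exact isOpen_coinduced.mpr (sat_open V hV)
    · rw [Set.disjoint_left]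
      rintro q ⟨u, hu, rfl⟩ ⟨v, hv, hvq⟩
      exact hUV (Set.mk_mem_prod hu hv) ((mk_eq u v).mp hvq.symm)
  tfae_have 5 → 1 := by
    intro h5
    have : {p : X × X | E p.1 p.2} =
        {p : X × X | Quot.mk E p.1 = Quot.mk E p.2} := by
      ext ⟨x, y⟩; exact (mk_eq x y).symm
    rw [this]
    exact isClosed_eq ((continuous_quot_mk).comp continuous_fst)
      ((continuous_quot_mk).comp continuous_snd)
  tfae_finish
end

section
/- Let G be a compact Hausdorff topological group acting continuously on a Hausdorff space X, and let E be a G-invariant equivalence relation on X which is weakly orbital, i.e. E = R_{H,X̃} for some subgroup H ≤ G and some subset X̃ ⊆ X. Then the following are equivalent: (1) E is closed in X × X; (2) every E-class is closed in X and E = R_{H',X̃'} for some subgroup H' ≤ G and some closed set X̃' ⊆ X; (3) E = R_{H'',X̃''} for some closed subgroup H'' ≤ G and some closed set X̃'' ⊆ X. -/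
/-- For a weakly orbital `G`-invariant equivalence relation `E` on a Hausdorff space `X` acted on
continuously by a compact Hausdorff group `G`, the following are equivalent: (1) `E` is closed;
(2) every `E`-class is closed and `E` is weakly orbital by closed; (3) `E = R_{H'',X̃''}` for
some closed subgroup `H''` and closed set `X̃''`. -/
theorem stmt_16 {G X : Type*} [Group G] [TopologicalSpace G] [IsTopologicalGroup G]
    [CompactSpace G] [T2Space G] [TopologicalSpace X] [T2Space X]
    [MulAction G X] [ContinuousSMul G X]
    (E : X → X → Prop) (hE : Equivalence E)
    (hinv : ∀ (g : G) (x y : X), E x y → E (g • x) (g • y))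
    (H : Subgroup G) (Xt : Set X)
    (hwo : ∀ x₁ x₂ : X, E x₁ x₂ ↔ ∃ g : G, ∃ h ∈ H, g • x₁ ∈ Xt ∧ g • x₁ = h • (g • x₂)) :
    List.TFAE [
      IsClosed {p : X × X | E p.1 p.2},
      (∀ x : X, IsClosed {y : X | E x y}) ∧
        ∃ (H' : Subgroup G) (Xt' : Set X), IsClosed Xt' ∧
          ∀ x₁ x₂ : X, E x₁ x₂ ↔ ∃ g : G, ∃ h ∈ H', g • x₁ ∈ Xt' ∧ g • x₁ = h • (g • x₂),
      ∃ (H'' : Subgroup G) (Xt'' : Set X), IsClosed (H'' : Set G) ∧ IsClosed Xt'' ∧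
        ∀ x₁ x₂ : X, E x₁ x₂ ↔ ∃ g : G, ∃ h ∈ H'', g • x₁ ∈ Xt'' ∧ g • x₁ = h • (g • x₂)] := by
  -- (3) → (1), as a standalone claim used twice
  have key31 : ∀ (H'' : Subgroup G) (Xt'' : Set X), IsClosed (H'' : Set G) → IsClosed Xt'' →
      (∀ x₁ x₂ : X, E x₁ x₂ ↔ ∃ g : G, ∃ h ∈ H'', g • x₁ ∈ Xt'' ∧ g • x₁ = h • (g • x₂)) →
      IsClosed {p : X × X | E p.1 p.2} := by
    intro H'' Xt'' hHc hXc hw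
    -- C = {(a,b) | ∃ h ∈ H'', a = h • b} is closed (image along compact G)
    have hC : IsClosed {p : X × X | ∃ h ∈ H'', p.1 = h • p.2} := by
      have hD : IsClosed {q : G × (X × X) | q.1 ∈ H'' ∧ q.2.1 = q.1 • q.2.2} := by
        apply IsClosed.inter
        · exact hHc.preimage continuous_fst
        · exact isClosed_eq (continuous_fst.comp continuous_snd)
            (continuous_fst.smul (continuous_snd.comp continuous_snd))
      have := isClosedMap_snd_of_compactSpace _ hD
      convert this using 1
      ext p
      constructor
      · rintro ⟨h, hh, he⟩; exact ⟨(h, p), ⟨hh, he⟩, rfl⟩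
      · rintro ⟨⟨h, p'⟩, ⟨hh, he⟩, rfl⟩; exact ⟨h, hh, he⟩
    have hD2 : IsClosed {q : G × (X × X) |
        q.1 • q.2.1 ∈ Xt'' ∧ ∃ h ∈ H'', q.1 • q.2.1 = h • (q.1 • q.2.2)} := by
      apply IsClosed.inter
      · exact hXc.preimage (continuous_fst.smul (continuous_fst.comp continuous_snd))
      · exact hC.preimage ((continuous_fst.smul (continuous_fst.comp continuous_snd)).prodMk
          (continuous_fst.smul (continuous_snd.comp continuous_snd)))
    have := isClosedMap_snd_of_compactSpace _ hD2
    convert this using 1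
    ext p
    simp only [Set.mem_setOf_eq, Set.mem_image]
    constructor
    · intro hEp
      obtain ⟨g, h, hh, hg, he⟩ := (hw p.1 p.2).1 hEp
      exact ⟨(g, p), ⟨hg, h, hh, he⟩, rfl⟩
    · rintro ⟨⟨g, p'⟩, ⟨hg, h, hh, he⟩, rfl⟩
      exact (hw p'.1 p'.2).2 ⟨g, h, hh, hg, he⟩
  tfae_have 1 → 3
  | h1 => by
    refine ⟨H.topologicalClosure, closure Xt, H.isClosed_topologicalClosure,
      isClosed_closure, fun x₁ x₂ => ?_⟩
    constructor
    · intro hx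
      obtain ⟨g, h, hh, hg, he⟩ := (hwo x₁ x₂).1 hx
      exact ⟨g, h, Subgroup.le_topologicalClosure H hh, subset_closure hg, he⟩
    · rintro ⟨g, h, hh, hg, he⟩
      -- F (k, y) = (g⁻¹ • y, g⁻¹ • k⁻¹ • y) maps H ×ˢ Xt into graph E
      set F : G × X → X × X := fun q => (g⁻¹ • q.2, g⁻¹ • q.1⁻¹ • q.2) with hF
      have hFc : Continuous F := by
        apply Continuous.prodMk
        · exact continuous_const.smul continuous_snd
        · exact continuous_const.smul ((continuous_fst.inv).smul continuous_snd)
      have hmaps : F '' ((H : Set G) ×ˢ Xt) ⊆ {p : X × X | E p.1 p.2} := by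
        rintro _ ⟨⟨k, y⟩, ⟨hk, hy⟩, rfl⟩
        refine (hwo _ _).2 ⟨g, k, hk, ?_, ?_⟩
        · simpa [hF, smul_smul] using hy
        · simp [hF, smul_smul]
      have hcl : (h, g • x₁) ∈ closure ((H : Set G) ×ˢ Xt) := by
        rw [closure_prod_eq]
        exact ⟨hh, hg⟩
      have : F (h, g • x₁) ∈ {p : X × X | E p.1 p.2} := by
        have h1' : F (h, g • x₁) ∈ closure (F '' ((H : Set G) ×ˢ Xt)) :=
          image_closure_subset_closure_image hFc ⟨_, hcl, rfl⟩
        have := closure_mono hmaps h1'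
        rwa [h1.closure_eq] at this
      have hx1 : g⁻¹ • g • x₁ = x₁ := by simp [smul_smul]
      have hx2 : g⁻¹ • h⁻¹ • g • x₁ = x₂ := by
        rw [he]; simp [smul_smul]
      simpa [hF, hx1, hx2] using this
  tfae_have 3 → 1
  | ⟨H'', Xt'', hHc, hXc, hw⟩ => key31 H'' Xt'' hHc hXc hw
  tfae_have 3 → 2
  | ⟨H'', Xt'', hHc, hXc, hw⟩ => by
    have h1 := key31 H'' Xt'' hHc hXc hw
    refine ⟨fun x => ?_, H'', Xt'', hXc, hw⟩
    have : {y : X | E x y} = (fun y => ((x, y) : X × X)) ⁻¹' {p : X × X | E p.1 p.2} := rfl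
    rw [this]
    exact h1.preimage (Continuous.prodMk continuous_const continuous_id)
  tfae_have 2 → 3
  | ⟨hcl, H', Xt', hXc, hw⟩ => by
    refine ⟨H'.topologicalClosure, Xt', H'.isClosed_topologicalClosure, hXc,
      fun x₁ x₂ => ?_⟩
    constructor
    · intro hx
      obtain ⟨g, h, hh, hg, he⟩ := (hw x₁ x₂).1 hx
      exact ⟨g, h, Subgroup.le_topologicalClosure H' hh, hg, he⟩
    · rintro ⟨g, h, hh, hg, he⟩
      -- it suffices to show E (g • x₁) (g • x₂)
      have hred : E (g • x₁) (g • x₂) → E x₁ x₂ := by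
        intro hgg
        have := hinv g⁻¹ _ _ hgg
        simpa [smul_smul] using this
      apply hred
      -- g • x₂ = h⁻¹ • (g • x₁); show it lies in the (closed) class of g • x₁
      set a := g • x₁ with ha
      have hmaps : (fun k : G => k⁻¹ • a) '' (H' : Set G) ⊆ {y : X | E a y} := by
        rintro _ ⟨k, hk, rfl⟩
        refine (hw a (k⁻¹ • a)).2 ⟨1, k, hk, ?_, ?_⟩ <;> simp [hg, smul_smul]
      have hcont : Continuous (fun k : G => k⁻¹ • a) := (continuous_inv).smul continuous_const
      have hmem : h⁻¹ • a ∈ {y : X | E a y} := by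
        have h1' : (fun k : G => k⁻¹ • a) h ∈ closure ((fun k : G => k⁻¹ • a) '' (H' : Set G)) :=
          image_closure_subset_closure_image hcont ⟨h, hh, rfl⟩
        have := closure_mono hmaps h1'
        rwa [(hcl a).closure_eq] at this
      have : g • x₂ = h⁻¹ • a := by rw [he]; simp [smul_smul]
      rw [this]
      exact hmem
  tfae_finish
end

section
/- Let G be a compact Hausdorff topological group acting continuously on a Polish space X, and let E be a G-invariant equivalence relation on X which is weakly orbital by closed, i.e. E = R_{H,X̃} for some subgroup H ≤ G and some closed set X̃ ⊆ X (this covers in particular every orbital E, i.e. every orbit equivalence relation of a subgroup of G). Then the following are equivalent: (1) E is closed in X × X; (2) every E-class is closed in X; (3) E is smooth; (4) for every x ∈ X, the restriction of E to the orbit G•x is closed in (G•x) × (G•x). -/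
open Topology Filter Set

section Auxiliary

lemma aux_countable_list {M : Type*} {t : Set M} (ht : t.Countable) :
    {l : List M | ∀ x ∈ l, x ∈ t}.Countable := by
  have := ht.to_subtype
  refine (Set.countable_range (fun l : List t => l.map Subtype.val)).mono ?_
  intro l hl
  refine ⟨l.pmap (fun a h => (⟨a, h⟩ : t)) hl, ?_⟩
  simp [List.map_pmap]

lemma aux_countable_closure {G : Type*} [Group G] {s : Set G} (hs : s.Countable) :
    (Subgroup.closure s : Set G).Countable := by
  have h1 : (s ∪ s⁻¹).Countable := hs.union (hs.preimage inv_injective)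
  have h2 : ((Submonoid.closure (s ∪ s⁻¹) : Submonoid G) : Set G).Countable := by
    rw [Submonoid.closure_eq_image_prod]
    exact (aux_countable_list h1).image _
  refine h2.mono ?_
  intro x hx
  have : x ∈ (Subgroup.closure s).toSubmonoid := hx
  rwa [Subgroup.closure_toSubmonoid] at this

/-- Topological zero-one law: a Baire measurable set invariant under right translations by a
countable dense set of elements is meager or comeager. -/
lemma aux_zero_one {α : Type*} [TopologicalSpace α] [Group α] [IsTopologicalGroup α]
    {K : Set α} (hKc : K.Countable) (hKd : Dense K)
    {B : Set α} (hB : BaireMeasurableSet B)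
    (hBinv : ∀ k ∈ K, (fun l => l * k) ⁻¹' B = B) :
    IsMeagre B ∨ B ∈ residual α := by
  obtain ⟨U, hUo, hBU⟩ := hB.residualEq_isOpen
  rw [Filter.eventuallyEq_set] at hBU
  have hMmeag : IsMeagre {l : α | ¬(l ∈ B ↔ l ∈ U)} := by
    have h0 : {l : α | l ∈ B ↔ l ∈ U} ∈ residual α := hBU
    rw [IsMeagre]
    convert h0 using 1
    ext l
    simp
  set M : Set α := {l | ¬(l ∈ B ↔ l ∈ U)} with hMdef
  by_cases hUe : U.Nonempty
  · right
    set W : Set α := ⋃ k ∈ K, (fun l => l * k) '' U with hWdef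
    have hWo : IsOpen W := isOpen_biUnion fun k _ => (isOpenMap_mul_right k) U hUo
    have hWd : Dense W := by
      obtain ⟨u₀, hu₀⟩ := hUe
      rw [dense_iff_inter_open]
      intro V hVo hVne
      obtain ⟨v, hv⟩ := hVne
      have h2 : IsOpen ((fun k => u₀ * k) ⁻¹' V) := hVo.preimage (continuous_mul_left u₀)
      obtain ⟨k, hkV, hkK⟩ := hKd.inter_open_nonempty _ h2 ⟨u₀⁻¹ * v, by simpa using hv⟩
      exact ⟨u₀ * k, hkV, mem_biUnion hkK ⟨u₀, hu₀, rfl⟩⟩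
    have himg : ∀ k : α, (fun l => l * k) '' M = (fun l => l * k⁻¹) ⁻¹' M := by
      intro k
      ext l
      constructor
      · rintro ⟨u, hu, rfl⟩
        simpa using hu
      · intro h
        exact ⟨l * k⁻¹, h, by simp⟩
    have hMk : IsMeagre (⋃ k ∈ K, (fun l => l * k) '' M) := by
      rw [IsMeagre, Set.compl_iUnion₂]
      refine (countable_bInter_mem hKc).mpr fun k hk => ?_
      have : IsMeagre ((fun l => l * k⁻¹) ⁻¹' M) :=
        hMmeag.preimage_of_isOpenMap (continuous_mul_right k⁻¹) (isOpenMap_mul_right k⁻¹)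
      rw [himg k]
      exact this
    refine mem_of_superset (inter_mem (residual_of_dense_open hWo hWd) hMk) ?_
    rintro l ⟨hlW, hlM⟩
    simp only [hWdef, mem_iUnion] at hlW
    obtain ⟨k, hk, u, huU, rfl⟩ := hlW
    have huM : u ∉ M := by
      intro huM
      exact hlM (mem_biUnion hk ⟨u, huM, rfl⟩)
    have huB : u ∈ B := by
      by_contra h
      exact huM (by simp [hMdef, h, huU])
    have := hBinv k hk
    rw [← this] at huB
    exact huB
  · left
    refine hMmeag.mono fun l hl => ?_
    simp only [hMdef, mem_setOf_eq]
    rw [Set.not_nonempty_iff_eq_empty] at hUe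
    simp [hUe, hl]

end Auxiliary

/-- For a `G`-invariant equivalence relation `E` on a Polish space `X` acted on continuously by a
compact Hausdorff group `G`, which is weakly orbital by closed (i.e. `E = R_{H,X̃}` for a subgroup
`H ≤ G` and a closed `X̃ ⊆ X`), the following are equivalent: (1) `E` is closed; (2) every
`E`-class is closed; (3) `E` is smooth; (4) the restriction of `E` to each orbit `G•x` is
closed. -/
theorem stmt_17 {G X : Type*} [Group G] [TopologicalSpace G] [IsTopologicalGroup G]
    [CompactSpace G] [T2Space G] [TopologicalSpace X] [PolishSpace X]
    [MulAction G X] [ContinuousSMul G X]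
    (E : X → X → Prop) (hE : Equivalence E)
    (hinv : ∀ (g : G) (x y : X), E x y → E (g • x) (g • y))
    (H : Subgroup G) (Xt : Set X) (hXt : IsClosed Xt)
    (hwo : ∀ x₁ x₂ : X, E x₁ x₂ ↔ ∃ g : G, ∃ h ∈ H, g • x₁ ∈ Xt ∧ g • x₁ = h • (g • x₂)) :
    List.TFAE [
      IsClosed {p : X × X | E p.1 p.2},
      ∀ x : X, IsClosed {y : X | E x y},
      IsSmoothRel E,
      ∀ x : X, IsClosed {p : (MulAction.orbit G x) × (MulAction.orbit G x) |
        E (p.1 : X) (p.2 : X)}] := by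
  classical
  -- E is a subrelation of the orbit equivalence relation
  have hEorb : ∀ x y : X, E x y → ∃ g : G, y = g • x := by
    intro x y hxy
    obtain ⟨g, h, hh, hXtm, heq⟩ := (hwo x y).mp hxy
    refine ⟨(g⁻¹ * h * g)⁻¹, ?_⟩
    have : (g⁻¹ * h * g) • y = x := by
      rw [mul_smul, mul_smul, ← heq, inv_smul_smul]
    rw [← this, inv_smul_smul]
  -- points in Xt are related to all their H-translates
  have hXtE : ∀ a ∈ Xt, ∀ h' ∈ H, E a (h' • a) := by
    intro a ha h' hh'
    refine (hwo a (h' • a)).mpr ⟨1, h'⁻¹, H.inv_mem hh', ?_, ?_⟩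
    · simpa using ha
    · simp [one_smul, inv_smul_smul]
  tfae_have 2 → 1 := by
    intro h2
    haveI : CompactSpace ↥H.topologicalClosure :=
      isCompact_iff_compactSpace.mp H.isClosed_topologicalClosure.isCompact
    have hc1 : Continuous fun q : (G × ↥H.topologicalClosure) × X × X => q.1.1 • q.2.1 :=
      (continuous_fst.fst).smul (continuous_snd.fst)
    have hc2 : Continuous fun q : (G × ↥H.topologicalClosure) × X × X =>
        (q.1.2 : G) • (q.1.1 • q.2.2) :=
      (continuous_subtype_val.comp continuous_fst.snd).smul
        ((continuous_fst.fst).smul (continuous_snd.snd))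
    have hSc : IsClosed {q : (G × ↥H.topologicalClosure) × X × X |
        q.1.1 • q.2.1 ∈ Xt ∧ q.1.1 • q.2.1 = (q.1.2 : G) • (q.1.1 • q.2.2)} :=
      (hXt.preimage hc1).inter (isClosed_eq hc1 hc2)
    have hset : {p : X × X | E p.1 p.2} = Prod.snd '' {q : (G × ↥H.topologicalClosure) × X × X |
        q.1.1 • q.2.1 ∈ Xt ∧ q.1.1 • q.2.1 = (q.1.2 : G) • (q.1.1 • q.2.2)} := by
      ext p
      constructor
      · intro hp
        obtain ⟨g, h, hh, hXtm, heq⟩ := (hwo p.1 p.2).mp hp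
        exact ⟨((g, ⟨h, H.le_topologicalClosure hh⟩), p), ⟨hXtm, heq⟩, rfl⟩
      · rintro ⟨⟨⟨g, h⟩, p'⟩, ⟨hXtm, heq⟩, rfl⟩
        -- a := g • p'.1 ∈ Xt, and g • p'.2 = h⁻¹ • a with h⁻¹ in the closure of H
        have hmem : (h : G)⁻¹ ∈ closure (H : Set G) := by
          have := H.topologicalClosure.inv_mem h.2
          rwa [← Subgroup.topologicalClosure_coe]
        have hb : g • p'.2 = (h : G)⁻¹ • (g • p'.1) := by
          rw [heq, inv_smul_smul]
        have hbcl : g • p'.2 ∈ closure ((fun g' : G => g' • (g • p'.1)) '' (H : Set G)) := by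
          rw [hb]
          exact (image_closure_subset_closure_image
            (continuous_id.smul continuous_const)) ⟨(h : G)⁻¹, hmem, rfl⟩
        have hsub : (fun g' : G => g' • (g • p'.1)) '' (H : Set G) ⊆ {y | E (g • p'.1) y} := by
          rintro _ ⟨h', hh', rfl⟩
          exact hXtE _ hXtm h' hh'
        have hEab : E (g • p'.1) (g • p'.2) :=
          (closure_minimal hsub (h2 (g • p'.1))) hbcl
        have := hinv g⁻¹ _ _ hEab
        simpa [inv_smul_smul] using this
    rw [hset]
    exact isClosedMap_snd_of_compactSpace _ hSc
  tfae_have 1 → 4 := by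
    intro h1 x
    exact h1.preimage ((continuous_subtype_val.comp continuous_fst).prodMk
      (continuous_subtype_val.comp continuous_snd))
  tfae_have 4 → 2 := by
    intro h4 x
    have horbc : IsCompact (MulAction.orbit G x) :=
      isCompact_range (continuous_id.smul continuous_const)
    haveI : CompactSpace ↥(MulAction.orbit G x) := isCompact_iff_compactSpace.mp horbc
    have hsub : IsClosed {y : ↥(MulAction.orbit G x) | E x ↑y} := by
      have := (h4 x).preimage
        (f := fun y : ↥(MulAction.orbit G x) => ((⟨x, MulAction.mem_orbit_self x⟩ :
          ↥(MulAction.orbit G x)), y)) (continuous_const.prodMk continuous_id)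
      exact this
    have hset : {y : X | E x y} = Subtype.val '' {y : ↥(MulAction.orbit G x) | E x ↑y} := by
      ext y
      constructor
      · intro hy
        obtain ⟨g, rfl⟩ := hEorb x y hy
        exact ⟨⟨g • x, MulAction.mem_orbit x g⟩, hy, rfl⟩
      · rintro ⟨y', hy', rfl⟩
        exact hy'
    rw [hset]
    exact ((hsub.isCompact).image continuous_subtype_val).isClosed
  tfae_have 1 → 3 := by
    intro h1
    have h2 : ∀ x : X, IsClosed {y : X | E x y} := fun x =>
      h1.preimage (continuous_const.prodMk continuous_id)
    by_cases hne : Nonempty X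
    · letI := TopologicalSpace.upgradeIsCompletelyMetrizable X
      obtain ⟨u, hu⟩ := TopologicalSpace.exists_dense_seq X
      -- "the class of x meets C" is closed, for closed C
      have hP : ∀ C : Set X, IsClosed C → IsClosed {x | ∃ z, E x z ∧ z ∈ C} := by
        intro C hC
        have hset : {x | ∃ z, E x z ∧ z ∈ C} =
            Prod.snd '' {q : G × X | E q.2 (q.1 • q.2) ∧ q.1 • q.2 ∈ C} := by
          ext x
          constructor
          · rintro ⟨z, hz, hzC⟩
            obtain ⟨g, rfl⟩ := hEorb x z hz
            exact ⟨(g, x), ⟨hz, hzC⟩, rfl⟩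
          · rintro ⟨⟨g, x'⟩, ⟨hE', hC'⟩, rfl⟩
            exact ⟨g • x', hE', hC'⟩
        rw [hset]
        apply isClosedMap_snd_of_compactSpace
        have hc : Continuous fun q : G × X => (q.2, q.1 • q.2) :=
          continuous_snd.prodMk (continuous_fst.smul continuous_snd)
        exact (h1.preimage hc).inter (hC.preimage (continuous_fst.smul continuous_snd))
      refine ⟨fun x n => if ∃ z, E x z ∧
          z ∈ Metric.closedBall (u (Nat.unpair n).1) (1 / ((Nat.unpair n).2 + 1)) then true
          else false, ?_, ?_⟩
      · letI : MeasurableSpace X := borel X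
        haveI : BorelSpace X := ⟨rfl⟩
        rw [← BorelSpace.measurable_eq (α := ℕ → Bool)]
        refine measurable_pi_iff.mpr fun n => ?_
        exact Measurable.ite ((hP _ Metric.isClosed_closedBall).measurableSet)
          measurable_const measurable_const
      · intro x y
        constructor
        · intro hxy
          funext n
          have hiff : (∃ z, E x z ∧
              z ∈ Metric.closedBall (u (Nat.unpair n).1) (1 / ((Nat.unpair n).2 + 1))) ↔
              (∃ z, E y z ∧
              z ∈ Metric.closedBall (u (Nat.unpair n).1) (1 / ((Nat.unpair n).2 + 1))) :=
            exists_congr fun z => and_congr_left fun _ =>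
              ⟨fun h => hE.trans (hE.symm hxy) h, fun h => hE.trans hxy h⟩
          exact if_congr hiff rfl rfl
        · intro hf
          by_contra hxy
          have hne' : {z | E y z}.Nonempty := ⟨y, hE.refl y⟩
          have hx : x ∉ {z | E y z} := fun h => hxy (hE.symm h)
          have hpos : 0 < Metric.infDist x {z | E y z} :=
            ((h2 y).notMem_iff_infDist_pos hne').mp hx
          obtain ⟨m, hm⟩ := exists_nat_one_div_lt (half_pos hpos)
          obtain ⟨n₁, hn₁⟩ := hu.exists_dist_lt x (show (0:ℝ) < 1 / (m + 1) by positivity)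
          have hfx : (if ∃ z, E x z ∧
              z ∈ Metric.closedBall (u (Nat.unpair (Nat.pair n₁ m)).1)
                (1 / ((Nat.unpair (Nat.pair n₁ m)).2 + 1)) then true else false) = true := by
            rw [if_pos]
            refine ⟨x, hE.refl x, Metric.mem_closedBall.mpr ?_⟩
            simp only [Nat.unpair_pair]
            exact le_of_lt hn₁
          have hfy : (if ∃ z, E y z ∧
              z ∈ Metric.closedBall (u (Nat.unpair (Nat.pair n₁ m)).1)
                (1 / ((Nat.unpair (Nat.pair n₁ m)).2 + 1)) then true else false) = false := by
            rw [if_neg]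
            rintro ⟨z, hz, hzball⟩
            rw [Metric.mem_closedBall] at hzball
            simp only [Nat.unpair_pair] at hzball
            have h3 : Metric.infDist x {z | E y z} ≤ dist x z :=
              Metric.infDist_le_dist_of_mem hz
            have h4 : dist x z ≤ dist x (u n₁) + dist (u n₁) z := dist_triangle _ _ _
            have h5 : dist (u n₁) z ≤ 1 / (m + 1) := by
              rw [dist_comm]
              exact hzball
            linarith [hm, hn₁]
          have h6 : (if ∃ z, E x z ∧
              z ∈ Metric.closedBall (u (Nat.unpair (Nat.pair n₁ m)).1)
                (1 / ((Nat.unpair (Nat.pair n₁ m)).2 + 1)) then true else false) =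
              (if ∃ z, E y z ∧
              z ∈ Metric.closedBall (u (Nat.unpair (Nat.pair n₁ m)).1)
                (1 / ((Nat.unpair (Nat.pair n₁ m)).2 + 1)) then true else false) :=
            congrFun hf (Nat.pair n₁ m)
          rw [hfx, hfy] at h6
          exact absurd h6 (by simp)
    · haveI := not_nonempty_iff.mp hne
      refine ⟨fun x => isEmptyElim x, fun t _ => ?_, fun x => isEmptyElim x⟩
      have he : (fun x : X => (isEmptyElim x : ℕ → Bool)) ⁻¹' t = ∅ :=
        Set.eq_empty_of_isEmpty _
      rw [he]
      exact @MeasurableSet.empty X (borel X)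
  tfae_have 3 → 2 := by
    intro h3 x
    obtain ⟨f, hf, hred⟩ := h3
    letI := TopologicalSpace.upgradeIsCompletelyMetrizable X
    refine isClosed_of_closure_subset ?_
    intro y hy
    rw [mem_closure_iff_seq_limit] at hy
    obtain ⟨z, hzE, hzlim⟩ := hy
    have hk : ∀ i, ∃ g : G, z i = g • x := fun i => hEorb x (z i) (hzE i)
    choose k hkz using hk
    have hK₀E : ∀ g ∈ Subgroup.closure (Set.range k), E x (g • x) := by
      intro g hg
      refine Subgroup.closure_induction ?_ ?_ ?_ ?_ hg
      · rintro g' ⟨i, rfl⟩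
        rw [← hkz i]
        exact hzE i
      · simpa using hE.refl x
      · intro a b _ _ hEa hEb
        have h' : E (a • x) ((a * b) • x) := by
          rw [mul_smul]
          exact hinv a _ _ hEb
        exact hE.trans hEa h'
      · intro a _ hEa
        have h' : E (a⁻¹ • x) x := by
          have := hinv a⁻¹ _ _ hEa
          simpa using this
        exact hE.symm h'
    set K₀ := Subgroup.closure (Set.range k) with hK₀def
    have hK₀c : (K₀ : Set G).Countable := aux_countable_closure (Set.countable_range k)
    set L₀ := K₀.topologicalClosure with hL₀def
    haveI : CompactSpace ↥L₀ :=
      isCompact_iff_compactSpace.mp K₀.isClosed_topologicalClosure.isCompact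
    haveI : Nonempty ↥L₀ := ⟨1⟩
    have hrangeC : IsClosed (Set.range fun l : ↥L₀ => (l : G) • x) :=
      (isCompact_range (continuous_subtype_val.smul continuous_const)).isClosed
    have hym : y ∈ Set.range fun l : ↥L₀ => (l : G) • x := by
      refine hrangeC.mem_of_tendsto hzlim (Filter.Eventually.of_forall fun i => ?_)
      exact ⟨⟨k i, K₀.le_topologicalClosure (Subgroup.subset_closure ⟨i, rfl⟩)⟩, (hkz i).symm⟩
    obtain ⟨mm, hmm⟩ := hym
    set ψ : ↥L₀ → ℕ → Bool := fun l => f ((l : G) • x) with hψdef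
    have hψmul : ∀ (kk : ↥L₀), (kk : G) ∈ K₀ → ∀ l : ↥L₀, ψ (l * kk) = ψ l := by
      intro kk hkk l
      have h2' : E ((l : G) • x) ((l : G) • ((kk : G) • x)) := hinv _ _ _ (hK₀E _ hkk)
      have h3' := (hred _ _).mp h2'
      simp only [hψdef, Subgroup.coe_mul, mul_smul]
      exact h3'.symm
    have hBn : ∀ (n : ℕ) (b : Bool), BaireMeasurableSet {l : ↥L₀ | ψ l n = b} := by
      intro n b
      letI : MeasurableSpace X := borel X
      haveI : BorelSpace X := ⟨rfl⟩
      letI : MeasurableSpace ↥L₀ := borel ↥L₀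
      haveI : BorelSpace ↥L₀ := ⟨rfl⟩
      have hcylo : IsOpen {w : ℕ → Bool | w n = b} := by
        have h0 : IsOpen ((fun w : ℕ → Bool => w n) ⁻¹' {b}) :=
          (isOpen_discrete _).preimage (continuous_apply n)
        exact h0
      have hcyl : @MeasurableSet _ (borel (ℕ → Bool)) {w : ℕ → Bool | w n = b} :=
        MeasurableSpace.measurableSet_generateFrom hcylo
      have h1' : MeasurableSet (f ⁻¹' {w : ℕ → Bool | w n = b}) := hf hcyl
      have horbm : Measurable fun l : ↥L₀ => (l : G) • x :=
        (continuous_subtype_val.smul continuous_const).measurable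
      exact (horbm h1').baireMeasurableSet
    have hKd : Dense {l : ↥L₀ | (l : G) ∈ K₀} := by
      have himg : Subtype.val '' {l : ↥L₀ | (l : G) ∈ K₀} = (K₀ : Set G) := by
        ext g
        constructor
        · rintro ⟨l, hl, rfl⟩
          exact hl
        · intro hg
          exact ⟨⟨g, K₀.le_topologicalClosure hg⟩, hg, rfl⟩
      rw [dense_iff_closure_eq, Set.eq_univ_iff_forall]
      intro l
      rw [closure_subtype, himg]
      exact l.2
    have hKSc : {l : ↥L₀ | (l : G) ∈ K₀}.Countable := hK₀c.preimage Subtype.val_injective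
    have hbit : ∀ n : ℕ, ∃ b : Bool, {l : ↥L₀ | ψ l n = b} ∈ residual ↥L₀ := by
      intro n
      have hinvb : ∀ b : Bool, ∀ kk ∈ {l : ↥L₀ | (l : G) ∈ K₀},
          (fun l => l * kk) ⁻¹' {l : ↥L₀ | ψ l n = b} = {l : ↥L₀ | ψ l n = b} := by
        intro b kk hkk
        ext l
        simp only [Set.mem_preimage, Set.mem_setOf_eq]
        rw [hψmul kk hkk l]
      rcases aux_zero_one hKSc hKd (hBn n true) (hinvb true) with h | h
      · refine ⟨false, ?_⟩
        have hcompl : {l : ↥L₀ | ψ l n = false} = {l : ↥L₀ | ψ l n = true}ᶜ := by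
          ext l
          simp
        rw [hcompl]
        exact h
      · exact ⟨true, h⟩
    choose v hv using hbit
    have hF : (⋂ n, {l : ↥L₀ | ψ l n = v n}) ∈ residual ↥L₀ :=
      countable_iInter_mem.mpr hv
    have hFm : ((fun l : ↥L₀ => l * mm) ⁻¹' ⋂ n, {l : ↥L₀ | ψ l n = v n}) ∈ residual ↥L₀ :=
      tendsto_residual_of_isOpenMap (continuous_mul_right mm) (isOpenMap_mul_right mm) hF
    obtain ⟨l, hl1, hl2⟩ := (dense_of_mem_residual (inter_mem hFm hF)).nonempty
    have hψl : ψ l = v := funext fun n => mem_iInter.mp hl2 n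
    have hψlm : ψ (l * mm) = v := funext fun n => mem_iInter.mp hl1 n
    have hEq : E ((l : G) • x) (((l * mm : ↥L₀) : G) • x) :=
      (hred _ _).mpr (hψl.trans hψlm.symm)
    have hfinal := hinv ((l : G))⁻¹ _ _ hEq
    show E x y
    simpa [Subgroup.coe_mul, mul_smul, inv_smul_smul, hmm] using hfinal
  tfae_finish
end
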